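/- arXiv:1605.02730 — 5 statements merged into one kernel-verified Lean document; each statement's English description precedes it below -/
import Mathlib

section
/- Suppose Z is a subset of the dyadic tree T satisfying the tree capacity condition with constant C₁. Then there is a constant C, depending only on C₁, and for each z ∈ Z a function K_z ∈ B₂(T) such that: K_z(z) = 1 and K_z(w) = 0 for w ∈ Z∖{z}; ‖K_z‖²_{B₂(T)} ≤ C·γ(z,Z); K_z is harmonic at every interior point of supp(ΔK_z) not belonging to Z; and the supports of K_z and K_w (and hence of ΔK_z and ΔK_w) are disjoint for distinct z, w ∈ Z. -/
/- Proposition: under the tree capacity condition, each z ∈ Z admits a near-extremal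
function K_z with pairwise disjoint supports, controlled norm, and harmonicity on the
interior of the support of its increment away from Z. -/

noncomputable section

open scoped ENNReal

/-- The dyadic tree: vertices are finite binary strings; the root is `[]`,
the predecessor of `α ≠ []` is `α.dropLast`, and the children of `α` are
`α ++ [false]` and `α ++ [true]`; `α ≤ β` is the prefix order `α <+: β`. -/
abbrev Vtx := List Bool

/-- `d(α)` = (length of α) + 1. -/
def tdepth (α : Vtx) : ℕ := α.length + 1

/-- The longest common prefix `α ∧ β`. -/
def treeMeet : Vtx → Vtx → Vtx
  | [], _ => []
  | _, [] => []
  | a :: as, b :: bs => if a = b then a :: treeMeet as bs else []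

/-- The tree distance `d(α,β) = d(α) + d(β) - 2d(α∧β)`. -/
def tdist (α β : Vtx) : ℕ :=
  (α.length - (treeMeet α β).length) + (β.length - (treeMeet α β).length)

/-- The tree separation condition with constant `c`: `d(z,w) ≥ c·d(z)` for all
distinct `z, w ∈ Z`. -/
def treeSep (Z : Set Vtx) (c : ℝ) : Prop :=
  ∀ z ∈ Z, ∀ w ∈ Z, z ≠ w → c * (tdepth z : ℝ) ≤ (tdist z w : ℝ)

/-- The Dirichlet energy `∑_{β≠o} |Δf(β)|²` of `f : T → ℝ`
(the term at the root vanishes since `[].dropLast = []`). -/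
def treeEnergy (f : Vtx → ℝ) : ℝ≥0∞ :=
  ∑' β : Vtx, ENNReal.ofReal ((f β - f β.dropLast) ^ 2)

/-- The tree capacity condition with constant `C`: for every `α ∈ Z`,
`inf {∑_{β≠o} |Δf(β)|² : f(α) = 1, f = 0 on Z∖{α}} ≤ C/d(α)`. -/
def treeCapCond (Z : Set Vtx) (C : ℝ) : Prop :=
  ∀ α ∈ Z,
    (⨅ f : {f : Vtx → ℝ // f α = 1 ∧ ∀ γ ∈ Z, γ ≠ α → f γ = 0}, treeEnergy f.1) ≤
      ENNReal.ofReal (C / (tdepth α : ℝ))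

/-- Membership in the discrete Dirichlet space `B₂(T)`. -/
def memB2T (f : Vtx → ℂ) : Prop :=
  Summable (fun β : Vtx => ‖f β - f β.dropLast‖ ^ 2)

/-- `Z` is an onto interpolating sequence for `B₂(T)`: every `ξ` on `Z` with
`∑_{z∈Z} |ξ(z)|²/d(z) < ∞` extends to some `f ∈ B₂(T)`. -/
def ontoInterpTree (Z : Set Vtx) : Prop :=
  ∀ ξ : Vtx → ℂ, Summable (fun z : Z => ‖ξ z.1‖ ^ 2 / (tdepth z.1 : ℝ)) →
    ∃ f : Vtx → ℂ, memB2T f ∧ ∀ z ∈ Z, f z = ξ z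

/-- `Ih(α) = ∑_{β ≤ α} h(β)`, the sum over the prefixes of `α`. -/
def Isum (h : Vtx → ℝ) (α : Vtx) : ℝ :=
  ∑ k ∈ Finset.range (α.length + 1), h (α.take k)

/-- The condenser capacity `Cap(E,F) = inf {∑_x |h(x)|² : Ih = 1 on E, Ih = 0 on F}`. -/
def treeCap (E F : Set Vtx) : ℝ≥0∞ :=
  ⨅ h : {h : Vtx → ℝ // (∀ x ∈ E, Isum h x = 1) ∧ ∀ x ∈ F, Isum h x = 0},
    ∑' x : Vtx, ENNReal.ofReal ((h.1 x) ^ 2)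

/-- `γ(z,Z) = Cap({z}, Z∖{z})`. -/
def treeGamma (z : Vtx) (Z : Set Vtx) : ℝ≥0∞ := treeCap {z} (Z \ {z})

/-- The points of `Z` above `α` with an unobstructed view of `α`. -/
def weakSet (Z : Set Vtx) (α : Vtx) : Set Vtx :=
  {β | β ∈ Z ∧ α <+: β ∧ ¬∃ γ ∈ Z, (α <+: γ ∧ α ≠ γ) ∧ (γ <+: β ∧ γ ≠ β)}

/-- The tree weak simple condition with constant `C`. -/
def treeWeakSimple (Z : Set Vtx) (C : ℝ) : Prop :=
  ∀ α : Vtx,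
    (∑' β : weakSet Z α, ((tdepth β.1 : ℝ≥0∞))⁻¹) ≤ ENNReal.ofReal (C / (tdepth α : ℝ))

/-- `x` is an interior point of `Ω ⊆ T`: `x`, `x⁻`, `x₊`, `x₋ ∈ Ω`. -/
def interiorPt (Ω : Set Vtx) (x : Vtx) : Prop :=
  x ∈ Ω ∧ x.dropLast ∈ Ω ∧ x ++ [false] ∈ Ω ∧ x ++ [true] ∈ Ω

/-- The `B₂(T)`-norm squared of a real function: `|f(o)|² + ∑_{β≠o}|Δf(β)|²`. -/
def b2tNormSq (f : Vtx → ℝ) : ℝ≥0∞ :=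
  ENNReal.ofReal ((f []) ^ 2) + treeEnergy f

/-! ### Auxiliary development -/

namespace NearExtremalAux

open Relation

/-- The increment operator, inverse to `Isum`. -/
def del (f : Vtx → ℝ) (x : Vtx) : ℝ := if x = [] then f [] else f x - f x.dropLast

lemma Isum_nil (h : Vtx → ℝ) : Isum h [] = h [] := by simp [Isum]

lemma take_dropLast (x : Vtx) {k : ℕ} (hk : k < x.length) :
    x.dropLast.take k = x.take k := by
  rw [List.dropLast_eq_take, List.take_take]
  congr 1
  omega

lemma Isum_step (h : Vtx → ℝ) {x : Vtx} (hx : x ≠ []) :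
    Isum h x = Isum h x.dropLast + h x := by
  have hpos : 0 < x.length := List.length_pos_iff.mpr hx
  have hlen : x.dropLast.length + 1 = x.length := by
    rw [List.length_dropLast]; omega
  unfold Isum
  rw [Finset.sum_range_succ, List.take_length, hlen]
  congr 1
  exact Finset.sum_congr rfl fun k hk => by
    rw [take_dropLast x (Finset.mem_range.mp hk)]

lemma Isum_del (f : Vtx → ℝ) : ∀ x, Isum (del f) x = f x := by
  intro x
  induction x using List.reverseRecOn with
  | nil => simp [Isum, del]
  | append_singleton xs b ih =>
      rw [Isum_step _ (by simp), List.dropLast_concat, ih]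
      have : del f (xs ++ [b]) = f (xs ++ [b]) - f xs := by
        simp [del, List.dropLast_concat]
      rw [this]; ring

lemma del_Isum (h : Vtx → ℝ) (x : Vtx) : del (Isum h) x = h x := by
  unfold del
  split_ifs with hx
  · subst hx; simp [Isum]
  · rw [Isum_step h hx]; ring

lemma Isum_linear (f g : Vtx → ℝ) (a b : ℝ) (x : Vtx) :
    Isum (fun y => a * f y + b * g y) x = a * Isum f x + b * Isum g x := by
  simp [Isum, Finset.sum_add_distrib, Finset.mul_sum]

/-! ### The Hilbert space `ℓ²(T)` -/

abbrev Hsp := lp (fun _ : Vtx => ℝ) 2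

lemma two_toReal : (2 : ℝ≥0∞).toReal = 2 := by norm_num

lemma normSq_eq (h : Hsp) : ‖h‖ ^ 2 = ∑' x : Vtx, (h x) ^ 2 := by
  have h1 := lp.norm_rpow_eq_tsum (p := 2) (by norm_num) h
  rw [two_toReal] at h1
  have h2 : ‖h‖ ^ (2 : ℝ) = ‖h‖ ^ (2 : ℕ) := by
    rw [← Real.rpow_natCast ‖h‖ 2]; norm_num
  rw [h2] at h1
  rw [h1]
  congr 1; funext x
  rw [show ‖h x‖ ^ (2:ℝ) = ‖h x‖ ^ (2:ℕ) by exact_mod_cast Real.rpow_natCast ‖h x‖ 2]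
  rw [Real.norm_eq_abs, sq_abs]

lemma summable_sq (h : Hsp) : Summable fun x : Vtx => (h x) ^ 2 := by
  have := lp.memℓp h
  rw [memℓp_gen_iff (by rw [two_toReal]; norm_num)] at this
  rw [two_toReal] at this
  have heq : (fun x : Vtx => ‖h x‖ ^ (2:ℝ)) = fun x : Vtx => (h x) ^ 2 := by
    funext x
    rw [show ‖h x‖ ^ (2:ℝ) = ‖h x‖ ^ (2:ℕ) by exact_mod_cast Real.rpow_natCast ‖h x‖ 2]
    rw [Real.norm_eq_abs, sq_abs]
  rwa [heq] at this

lemma memHsp_of_sq_summable {f : Vtx → ℝ} (hf : Summable fun x => (f x) ^ 2) :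
    Memℓp f 2 := by
  apply memℓp_gen
  rw [two_toReal]
  have heq : (fun x : Vtx => ‖f x‖ ^ (2:ℝ)) = fun x : Vtx => (f x) ^ 2 := by
    funext x
    rw [show ‖f x‖ ^ (2:ℝ) = ‖f x‖ ^ (2:ℕ) by exact_mod_cast Real.rpow_natCast ‖f x‖ 2]
    rw [Real.norm_eq_abs, sq_abs]
  rwa [heq]

lemma memHsp_of_le {g : Vtx → ℝ} (h : Hsp) (hle : ∀ x, (g x) ^ 2 ≤ (h x) ^ 2) :
    Memℓp g 2 :=
  memHsp_of_sq_summable <|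
    Summable.of_nonneg_of_le (fun x => sq_nonneg _) hle (summable_sq h)

/-- Continuity of `h ↦ Isum ⇑h x` on `ℓ²(T)`. -/
lemma continuous_IsumEval (x : Vtx) : Continuous fun h : Hsp => Isum (⇑h) x := by
  unfold Isum
  apply continuous_finset_sum
  intro k _
  have : LipschitzWith 1 fun h : Hsp => (h : Vtx → ℝ) (x.take k) := by
    apply LipschitzWith.of_dist_le_mul
    intro f g
    simp only [NNReal.coe_one, one_mul]
    rw [dist_eq_norm, dist_eq_norm]
    have : ‖f - g‖ = ‖(f - g : Hsp)‖ := rfl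
    calc ‖f (x.take k) - g (x.take k)‖ = ‖(f - g : Hsp) (x.take k)‖ := by
          simp [lp.coeFn_sub]
      _ ≤ ‖(f - g : Hsp)‖ := lp.norm_apply_le_norm (by norm_num) _ _
  exact this.continuous

/-! ### Constrained minimization -/

/-- The constraint set: `Ih(z) = 1` and `Ih = 0` on `S`. -/
def Constr (z : Vtx) (S : Set Vtx) : Set Hsp :=
  {h | Isum (⇑h) z = 1 ∧ ∀ x ∈ S, Isum (⇑h) x = 0}

/-- The increments of the indicator of a single vertex, as an `ℓ²` element. -/
def eVec (x : Vtx) : Hsp :=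
  ⟨del (fun y => if y = x then 1 else 0), by
    apply memℓp_gen
    apply summable_of_ne_finset_zero (s := {x, x ++ [false], x ++ [true]})
    intro y hy
    simp only [Finset.mem_insert, Finset.mem_singleton] at hy
    push_neg at hy
    obtain ⟨hy1, hy2, hy3⟩ := hy
    have hzero : del (fun y => if y = x then 1 else 0) y = 0 := by
      unfold del
      split_ifs with hnil
      · subst hnil
        show (if ([] : Vtx) = x then (1:ℝ) else 0) = 0
        exact if_neg hy1
      · have h1 : (if y = x then (1:ℝ) else 0) = 0 := if_neg hy1
        have h2 : (if y.dropLast = x then (1:ℝ) else 0) = 0 := by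
          apply if_neg
          intro hdx
          rcases List.dropLast_append_getLast hnil with hcat
          have : y = x ++ [y.getLast hnil] := by rw [← hdx, hcat]
          cases hb : y.getLast hnil
          · exact hy2 (by rw [this, hb])
          · exact hy3 (by rw [this, hb])
        show (if y = x then (1:ℝ) else 0) - (if y.dropLast = x then (1:ℝ) else 0) = 0
        rw [h1, h2, sub_zero]
    rw [hzero]
    simp⟩

lemma eVec_coe (x : Vtx) : ⇑(eVec x) = del (fun y => if y = x then 1 else 0) := rfl

lemma Isum_eVec (x y : Vtx) : Isum (⇑(eVec x)) y = if y = x then 1 else 0 := by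
  rw [eVec_coe, Isum_del]

lemma constr_nonempty (z : Vtx) (S : Set Vtx) (hz : z ∉ S) :
    (Constr z S).Nonempty := by
  refine ⟨eVec z, ?_, ?_⟩
  · rw [Isum_eVec]; simp
  · intro x hx
    rw [Isum_eVec]
    apply if_neg
    intro h
    subst h
    exact hz hx

lemma constr_smul_add_mem {z : Vtx} {S : Set Vtx} {u s : Hsp}
    (hu : u ∈ Constr z S) (hs1 : Isum (⇑s) z = 0) (hs2 : ∀ x ∈ S, Isum (⇑s) x = 0)
    (t : ℝ) : u + t • s ∈ Constr z S := by
  have key : ∀ y : Vtx, Isum (⇑(u + t • s)) y = Isum (⇑u) y + t * Isum (⇑s) y := by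
    intro y
    have hcoe : ⇑(u + t • s) = fun v => 1 * u v + t * s v := by
      funext v
      simp [lp.coeFn_add, lp.coeFn_smul]
      rfl
    rw [hcoe, Isum_linear, one_mul]
  constructor
  · rw [key, hu.1, hs1]; ring
  · intro x hx
    rw [key, hu.2 x hx, hs2 x hx]; ring

lemma constr_isClosed (z : Vtx) (S : Set Vtx) : IsClosed (Constr z S) := by
  have h1 : IsClosed {h : Hsp | Isum (⇑h) z = 1} :=
    isClosed_singleton.preimage (continuous_IsumEval z)
  have h2 : IsClosed {h : Hsp | ∀ x ∈ S, Isum (⇑h) x = 0} := by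
    have : {h : Hsp | ∀ x ∈ S, Isum (⇑h) x = 0} =
        ⋂ x ∈ S, {h : Hsp | Isum (⇑h) x = 0} := by
      ext h; simp
    rw [this]
    exact isClosed_biInter fun x _ =>
      isClosed_singleton.preimage (continuous_IsumEval x)
  exact h1.inter h2

lemma constr_convex (z : Vtx) (S : Set Vtx) : Convex ℝ (Constr z S) := by
  intro h1 hh1 h2 hh2 a b ha hb hab
  have key : ∀ y : Vtx, Isum (⇑(a • h1 + b • h2)) y
      = a * Isum (⇑h1) y + b * Isum (⇑h2) y := by
    intro y
    have hcoe : ⇑(a • h1 + b • h2) = fun v => a * h1 v + b * h2 v := by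
      funext v
      simp [lp.coeFn_add, lp.coeFn_smul]
      rfl
    rw [hcoe, Isum_linear]
  constructor
  · rw [key, hh1.1, hh2.1]; simpa using hab
  · intro x hx
    rw [key, hh1.2 x hx, hh2.2 x hx]; ring

lemma exists_min (z : Vtx) (S : Set Vtx) (hz : z ∉ S) :
    ∃ u : Hsp, u ∈ Constr z S ∧ ∀ w ∈ Constr z S, ‖u‖ ≤ ‖w‖ := by
  obtain ⟨v, hv, hveq⟩ := exists_norm_eq_iInf_of_complete_convex
    (constr_nonempty z S hz) ((constr_isClosed z S).isComplete)
    (constr_convex z S) 0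
  refine ⟨v, hv, fun w hw => ?_⟩
  have h1 : ‖(0:Hsp) - v‖ = ‖v‖ := by rw [zero_sub, norm_neg]
  have h2 : ‖(0:Hsp) - w‖ = ‖w‖ := by rw [zero_sub, norm_neg]
  rw [← h1, hveq, ← h2]
  exact ciInf_le ⟨0, by rintro r ⟨w', rfl⟩; exact norm_nonneg _⟩ (⟨w, hw⟩ : Constr z S)

lemma norm_le_of_sq_le {a b : ℝ} (ha : 0 ≤ a) (hb : 0 ≤ b) (h : a ^ 2 ≤ b ^ 2) :
    a ≤ b := by nlinarith

lemma min_unique {z : Vtx} {S : Set Vtx} {u u' : Hsp}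
    (hu : u ∈ Constr z S) (hu' : u' ∈ Constr z S)
    (hmin : ∀ w ∈ Constr z S, ‖u‖ ≤ ‖w‖) (hmin' : ∀ w ∈ Constr z S, ‖u'‖ ≤ ‖w‖) :
    u = u' := by
  have hnm : ‖u‖ = ‖u'‖ := le_antisymm (hmin _ hu') (hmin' _ hu)
  have hm : (2⁻¹ : ℝ) • u + (2⁻¹ : ℝ) • u' ∈ Constr z S :=
    constr_convex z S hu hu' (by norm_num) (by norm_num) (by norm_num)
  have hle : ‖u‖ ≤ ‖(2⁻¹ : ℝ) • u + (2⁻¹ : ℝ) • u'‖ := hmin _ hm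
  have heq : (2⁻¹ : ℝ) • u + (2⁻¹ : ℝ) • u' = (2⁻¹ : ℝ) • (u + u') := by
    rw [smul_add]
  rw [heq, norm_smul] at hle
  have hnn : ‖(2⁻¹ : ℝ)‖ = 2⁻¹ := by rw [Real.norm_eq_abs]; norm_num
  rw [hnn] at hle
  have hpar : ‖u + u'‖ ^ 2 + ‖u - u'‖ ^ 2 = 2 * ‖u‖ ^ 2 + 2 * ‖u'‖ ^ 2 := by
    rw [norm_add_sq_real, norm_sub_sq_real]; ring
  have h2 : ‖u‖ ^ 2 ≤ (2⁻¹ * ‖u + u'‖) ^ 2 := by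
    apply pow_le_pow_left₀ (norm_nonneg u) hle
  rw [← hnm] at hpar
  have hz2 : ‖u - u'‖ ^ 2 ≤ 0 := by nlinarith [hpar, h2]
  have hsq : ‖u - u'‖ ^ 2 = 0 := le_antisymm hz2 (sq_nonneg _)
  have hnz : ‖u - u'‖ = 0 := by
    have := pow_eq_zero_iff (two_ne_zero) |>.mp hsq
    exact this
  exact sub_eq_zero.mp (norm_eq_zero.mp hnz)

open scoped RealInnerProductSpace in
lemma min_orth {z : Vtx} {S : Set Vtx} {u : Hsp}
    (hu : u ∈ Constr z S) (hmin : ∀ w ∈ Constr z S, ‖u‖ ≤ ‖w‖) (s : Hsp)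
    (hs1 : Isum (⇑s) z = 0) (hs2 : ∀ x ∈ S, Isum (⇑s) x = 0) :
    ⟪u, s⟫ = 0 := by
  set c : ℝ := ⟪u, s⟫ with hc
  have key : ∀ t : ℝ, 0 ≤ 2 * t * c + t ^ 2 * ‖s‖ ^ 2 := by
    intro t
    have hmem := constr_smul_add_mem hu hs1 hs2 t
    have h1 : ‖u‖ ≤ ‖u + t • s‖ := hmin _ hmem
    have h2 : ‖u‖ ^ 2 ≤ ‖u + t • s‖ ^ 2 := pow_le_pow_left₀ (norm_nonneg u) h1 2
    have h3 : ‖u + t • s‖ ^ 2 = ‖u‖ ^ 2 + 2 * (t * c) + ‖t • s‖ ^ 2 := by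
      rw [norm_add_sq_real, real_inner_smul_right]
    have h4 : ‖t • s‖ ^ 2 = t ^ 2 * ‖s‖ ^ 2 := by
      rw [norm_smul, mul_pow, Real.norm_eq_abs, sq_abs]
    nlinarith [h2, h3, h4]
  by_contra hne
  have hN : (0:ℝ) ≤ ‖s‖ ^ 2 := sq_nonneg _
  have h := key (-c / (‖s‖ ^ 2 + 1))
  have hpos : (0:ℝ) < ‖s‖ ^ 2 + 1 := by linarith
  have hne' : (‖s‖ ^ 2 + 1) ≠ 0 := ne_of_gt hpos
  have h2 := mul_le_mul_of_nonneg_left h (le_of_lt (mul_pos hpos hpos))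
  rw [mul_zero] at h2
  have hexp : (‖s‖ ^ 2 + 1) * (‖s‖ ^ 2 + 1) *
      (2 * (-c / (‖s‖ ^ 2 + 1)) * c + (-c / (‖s‖ ^ 2 + 1)) ^ 2 * ‖s‖ ^ 2)
      = -(c ^ 2) * (‖s‖ ^ 2 + 2) := by
    field_simp
    ring
  rw [hexp] at h2
  have hc2 : c ^ 2 ≤ 0 := by nlinarith [hN]
  have hc0 : c = 0 := pow_eq_zero_iff two_ne_zero |>.mp
    (le_antisymm hc2 (sq_nonneg c))
  exact hne hc0

/-! ### Connectivity in the tree -/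

/-- Tree adjacency: one vertex is the parent of the other. -/
def adjV (a b : Vtx) : Prop := a = b.dropLast ∨ b = a.dropLast

/-- One step within a set `S`. -/
def stepRel (S : Set Vtx) (a b : Vtx) : Prop := adjV a b ∧ a ∈ S ∧ b ∈ S

/-- The set of vertices connected to `z` within `S`. -/
def comp (S : Set Vtx) (z : Vtx) : Set Vtx :=
  {y | Relation.ReflTransGen (stepRel S) z y}

lemma comp_self (S : Set Vtx) (z : Vtx) : z ∈ comp S z := Relation.ReflTransGen.refl

lemma comp_subset {S : Set Vtx} {z y : Vtx} (hz : z ∈ S) (hy : y ∈ comp S z) :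
    y ∈ S := by
  induction hy with
  | refl => exact hz
  | tail _ hstep _ => exact hstep.2.2

lemma comp_extend {S : Set Vtx} {z y y' : Vtx} (hz : z ∈ S)
    (hy : y ∈ comp S z) (hadj : adjV y y') (hy' : y' ∈ S) : y' ∈ comp S z :=
  Relation.ReflTransGen.tail hy ⟨hadj, comp_subset hz hy, hy'⟩

lemma prefix_dropLast_of_proper {x b : Vtx} (hxb : x <+: b) (hne : x ≠ b) :
    x <+: b.dropLast := by
  obtain ⟨t, rfl⟩ := hxb
  have ht : t ≠ [] := by rintro rfl; simp at hne
  rw [List.dropLast_append_of_ne_nil ht]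
  exact List.prefix_append _ _

lemma cross1 {S : Set Vtx} {x : Vtx} : ∀ {p q : Vtx},
    Relation.ReflTransGen (stepRel S) p q → x <+: p → ¬ x <+: q →
    Relation.ReflTransGen (stepRel S) p x := by
  intro p q h
  induction h with
  | refl => intro h1 h2; exact absurd h1 h2
  | @tail b q hpb hstep ih =>
      intro hxp hxq
      by_cases hxb : x <+: b
      · rcases hstep.1 with hadj | hadj
        · -- b = q.dropLast
          rw [hadj] at hxb
          exact absurd (hxb.trans (List.dropLast_prefix q)) hxq
        · -- q = b.dropLast
          have hxeq : x = b := by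
            by_contra hne
            have hpre := prefix_dropLast_of_proper hxb hne
            rw [← hadj] at hpre
            exact hxq hpre
          exact hxeq ▸ hpb
      · exact ih hxp hxb

lemma cross2 {S : Set Vtx} {x : Vtx} : ∀ {p q : Vtx},
    Relation.ReflTransGen (stepRel S) p q → ¬ x <+: p → x <+: q →
    Relation.ReflTransGen (stepRel S) p x := by
  intro p q h
  induction h with
  | refl => intro h1 h2; exact absurd h2 h1
  | @tail b q hpb hstep ih =>
      intro hxp hxq
      by_cases hxb : x <+: b
      · exact ih hxp hxb
      · rcases hstep.1 with hadj | hadj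
        · -- b = q.dropLast : q is the parent side is b's child; x ≤ q, ¬ x ≤ b
          have hxeq : x = q := by
            by_contra hne
            have hpre := prefix_dropLast_of_proper hxq hne
            rw [← hadj] at hpre
            exact hxb hpre
          exact hxeq ▸ (hpb.tail hstep)
        · -- q = b.dropLast
          rw [hadj] at hxq
          exact absurd (hxq.trans (List.dropLast_prefix b)) hxb

lemma child_cases {x y : Vtx} (hy : y ≠ []) (h : y.dropLast = x) :
    y = x ++ [false] ∨ y = x ++ [true] := by
  have hcat := List.dropLast_append_getLast hy
  cases hb : y.getLast hy
  · left; rw [← h, ← hb, hcat]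
  · right; rw [← h, ← hb, hcat]

/-! ### Elementary real inequalities -/

lemma minmax_sq (u1 u2 v1 v2 : ℝ) :
    (min u1 v1 - min u2 v2) ^ 2 + (max u1 v1 - max u2 v2) ^ 2
      ≤ (u1 - u2) ^ 2 + (v1 - v2) ^ 2 := by
  rcases le_total u1 v1 with h1 | h1 <;> rcases le_total u2 v2 with h2 | h2 <;>
    simp [min_eq_left, min_eq_right, max_eq_left, max_eq_right, h1, h2,
      min_eq_left h1, max_eq_right h1] <;> nlinarith

lemma trunc_lip (p q : ℝ) : |min 1 (max 0 p) - min 1 (max 0 q)| ≤ |p - q| := by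
  have h1 := abs_min_sub_min_le_max (1:ℝ) (max 0 p) 1 (max 0 q)
  have h2 := abs_max_sub_max_le_abs p q 0
  rw [max_comm p 0, max_comm q 0] at h2
  calc |min 1 (max 0 p) - min 1 (max 0 q)|
      ≤ max |(1:ℝ) - 1| |max 0 p - max 0 q| := h1
    _ = |max 0 p - max 0 q| := by simp
    _ ≤ |p - q| := h2

/-! ### Energy bridge to `ℝ≥0∞` -/

lemma sq_le_of_abs_le {a b : ℝ} (h : |a| ≤ |b|) : a ^ 2 ≤ b ^ 2 := by
  calc a ^ 2 = |a| ^ 2 := (sq_abs a).symm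
    _ ≤ |b| ^ 2 := pow_le_pow_left₀ (abs_nonneg a) h 2
    _ = b ^ 2 := sq_abs b

lemma dropLast_ne {x : Vtx} (hx : x ≠ []) : x.dropLast ≠ x := by
  intro h
  have h1 := congrArg List.length h
  rw [List.length_dropLast] at h1
  have h2 := List.length_pos_iff.mpr hx
  omega

lemma not_prefix_dropLast {x : Vtx} (hx : x ≠ []) : ¬ x <+: x.dropLast := by
  intro h
  have h1 := h.length_le
  rw [List.length_dropLast] at h1
  have h2 := List.length_pos_iff.mpr hx
  omega

lemma b2t_Isum (h : Vtx → ℝ) :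
    b2tNormSq (Isum h) = ∑' x : Vtx, ENNReal.ofReal ((h x) ^ 2) := by
  classical
  unfold b2tNormSq treeEnergy
  rw [ENNReal.tsum_eq_add_tsum_ite
      (f := fun β : Vtx => ENNReal.ofReal ((Isum h β - Isum h β.dropLast) ^ 2))
      ([] : Vtx)]
  rw [ENNReal.tsum_eq_add_tsum_ite
      (f := fun x : Vtx => ENNReal.ofReal ((h x) ^ 2)) ([] : Vtx)]
  have h0 : ENNReal.ofReal ((Isum h [] - Isum h (([] : Vtx)).dropLast) ^ 2) = 0 := by
    simp
  rw [h0, zero_add, Isum_nil]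
  congr 1
  apply tsum_congr
  intro x
  by_cases hx : x = []
  · simp [hx]
  · simp only [if_neg hx]
    rw [Isum_step h hx]
    congr 1
    ring

lemma tsum_ofReal_sq (u : Hsp) :
    ∑' x : Vtx, ENNReal.ofReal ((u x) ^ 2) = ENNReal.ofReal (‖u‖ ^ 2) := by
  rw [normSq_eq,
    ENNReal.ofReal_tsum_of_nonneg (fun x => sq_nonneg _) (summable_sq u)]

lemma gamma_ge (Z : Set Vtx) (z : Vtx) {u : Hsp}
    (hmin : ∀ w ∈ Constr z (Z \ {z}), ‖u‖ ≤ ‖w‖) :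
    ENNReal.ofReal (‖u‖ ^ 2) ≤ treeGamma z Z := by
  unfold treeGamma treeCap
  refine le_iInf fun f => ?_
  obtain ⟨h, hh1, hh2⟩ := f
  by_cases hs : Summable fun x => (h x) ^ 2
  · have hmem : Memℓp h 2 := memHsp_of_sq_summable hs
    have hcoe : ⇑(⟨h, hmem⟩ : Hsp) = h := rfl
    have hin : (⟨h, hmem⟩ : Hsp) ∈ Constr z (Z \ {z}) := by
      constructor
      · rw [hcoe]; exact hh1 z rfl
      · intro x hx; rw [hcoe]; exact hh2 x hx
    have hle := hmin _ hin
    have hsq : ‖u‖ ^ 2 ≤ ‖(⟨h, hmem⟩ : Hsp)‖ ^ 2 :=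
      pow_le_pow_left₀ (norm_nonneg u) hle 2
    calc ENNReal.ofReal (‖u‖ ^ 2)
        ≤ ENNReal.ofReal (‖(⟨h, hmem⟩ : Hsp)‖ ^ 2) := ENNReal.ofReal_le_ofReal hsq
      _ = ∑' x : Vtx, ENNReal.ofReal ((h x) ^ 2) := by
          rw [← tsum_ofReal_sq (⟨h, hmem⟩ : Hsp)]
  · have htop : ∑' x : Vtx, ENNReal.ofReal ((h x) ^ 2) = ⊤ := by
      by_contra hne
      apply hs
      have hsum := ENNReal.summable_toReal hne
      have : (fun x : Vtx => (ENNReal.ofReal ((h x) ^ 2)).toReal)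
          = fun x : Vtx => (h x) ^ 2 := by
        funext x; rw [ENNReal.toReal_ofReal (sq_nonneg _)]
      rwa [this] at hsum
    rw [htop]
    exact le_top

lemma eVec_self (x : Vtx) : (eVec x) x = (1:ℝ) := by
  show del (fun y => if y = x then 1 else 0) x = 1
  unfold del
  split_ifs with h
  · show (if ([] : Vtx) = x then (1:ℝ) else 0) = 1
    rw [if_pos h.symm]
  · show (if x = x then (1:ℝ) else 0) - (if x.dropLast = x then (1:ℝ) else 0) = 1
    rw [if_pos rfl, if_neg (dropLast_ne h)]; ring

lemma eVec_child (x : Vtx) (b : Bool) : (eVec x) (x ++ [b]) = (-1:ℝ) := by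
  show del (fun y => if y = x then 1 else 0) (x ++ [b]) = -1
  unfold del
  rw [if_neg (by simp)]
  show (if x ++ [b] = x then (1:ℝ) else 0)
      - (if (x ++ [b]).dropLast = x then (1:ℝ) else 0) = -1
  rw [List.dropLast_concat, if_neg (by simp), if_pos rfl]
  ring

lemma eVec_zero {x y : Vtx} (h1 : y ≠ x) (h2 : y ≠ x ++ [false])
    (h3 : y ≠ x ++ [true]) : (eVec x) y = 0 := by
  show del (fun v => if v = x then 1 else 0) y = 0
  unfold del
  split_ifs with hnil
  · subst hnil
    show (if ([] : Vtx) = x then (1:ℝ) else 0) = 0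
    exact if_neg h1
  · show (if y = x then (1:ℝ) else 0) - (if y.dropLast = x then (1:ℝ) else 0) = 0
    rw [if_neg h1, if_neg ?hh, sub_zero]
    case hh =>
      intro hdx
      rcases child_cases hnil hdx with hc | hc
      · exact h2 hc
      · exact h3 hc

open scoped RealInnerProductSpace in
lemma inner_eVec (u : Hsp) (x : Vtx) :
    ⟪u, eVec x⟫ = u x - u (x ++ [false]) - u (x ++ [true]) := by
  rw [lp.inner_eq_tsum]
  have hval : ∀ y : Vtx, (⟪u y, (eVec x) y⟫ : ℝ) = u y * (eVec x) y := fun y => by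
    simp [RCLike.inner_apply]
    ring
  have hx0 : x ≠ x ++ [false] := by simp
  have hx1 : x ≠ x ++ [true] := by simp
  have hx01 : x ++ [false] ≠ x ++ [true] := by simp
  rw [tsum_congr hval]
  rw [tsum_eq_sum (s := ({x, x ++ [false], x ++ [true]} : Finset Vtx)) ?hvan]
  case hvan =>
    intro y hy
    simp only [Finset.mem_insert, Finset.mem_singleton] at hy
    push_neg at hy
    rw [eVec_zero hy.1 hy.2.1 hy.2.2, mul_zero]
  rw [Finset.sum_insert (by simp [hx0, hx1]),
      Finset.sum_insert (by simp [hx01]), Finset.sum_singleton]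
  rw [eVec_self, eVec_child, eVec_child]
  ring

/-- The minimizer of the constrained problem takes values in `[0,1]`. -/
lemma min_bounds {z : Vtx} {S : Set Vtx} {u : Hsp}
    (hu : u ∈ Constr z S) (hmin : ∀ w ∈ Constr z S, ‖u‖ ≤ ‖w‖) (x : Vtx) :
    0 ≤ Isum (⇑u) x ∧ Isum (⇑u) x ≤ 1 := by
  have hdel : ∀ y, del (Isum (⇑u)) y = u y := fun y => del_Isum _ y
  have hptw : ∀ y, (del (fun v => min 1 (max 0 (Isum (⇑u) v))) y) ^ 2 ≤ (u y) ^ 2 := by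
    intro y
    apply sq_le_of_abs_le
    rw [← hdel y]
    unfold del
    split_ifs with hy
    · simpa using trunc_lip (Isum (⇑u) []) 0
    · have h := trunc_lip (Isum (⇑u) y) (Isum (⇑u) y.dropLast)
      calc |min 1 (max 0 (Isum (⇑u) y)) - min 1 (max 0 (Isum (⇑u) y.dropLast))|
          ≤ |Isum (⇑u) y - Isum (⇑u) y.dropLast| := h
        _ = |Isum (⇑u) y - Isum (⇑u) y.dropLast| := rfl
  have hmem : Memℓp (del (fun v => min 1 (max 0 (Isum (⇑u) v)))) 2 :=
    memHsp_of_le u hptw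
  have hcoe : ⇑(⟨del (fun v => min 1 (max 0 (Isum (⇑u) v))), hmem⟩ : Hsp)
      = del (fun v => min 1 (max 0 (Isum (⇑u) v))) := rfl
  have htmem : (⟨del (fun v => min 1 (max 0 (Isum (⇑u) v))), hmem⟩ : Hsp) ∈ Constr z S := by
    constructor
    · rw [hcoe, Isum_del]
      show min 1 (max 0 (Isum (⇑u) z)) = 1
      rw [hu.1]; norm_num
    · intro v hv
      rw [hcoe, Isum_del]
      show min 1 (max 0 (Isum (⇑u) v)) = 0
      rw [hu.2 v hv]; norm_num
  have hle : ‖(⟨del (fun v => min 1 (max 0 (Isum (⇑u) v))), hmem⟩ : Hsp)‖ ≤ ‖u‖ := by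
    apply norm_le_of_sq_le (norm_nonneg _) (norm_nonneg _)
    rw [normSq_eq, normSq_eq]
    exact Summable.tsum_le_tsum (fun y => hptw y) (summable_sq _) (summable_sq u)
  have htmin : ∀ w ∈ Constr z S,
      ‖(⟨del (fun v => min 1 (max 0 (Isum (⇑u) v))), hmem⟩ : Hsp)‖ ≤ ‖w‖ :=
    fun w hw => le_trans hle (hmin w hw)
  have hEq : u = (⟨del (fun v => min 1 (max 0 (Isum (⇑u) v))), hmem⟩ : Hsp) :=
    min_unique hu htmem hmin htmin
  have hIs : Isum (⇑u) x = min 1 (max 0 (Isum (⇑u) x)) := by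
    conv_lhs => rw [hEq]
    rw [hcoe, Isum_del]
  constructor
  · rw [hIs]; exact le_min (by norm_num) (le_max_left 0 _)
  · rw [hIs]; exact min_le_left _ _

lemma min_identity (A B : ℝ) : min B (1 - A) = 1 - max A (1 - B) := by
  simp only [min_def, max_def]
  split_ifs <;> linarith

/-- Key disjointness inequality: the equilibrium potentials of distinct points
sum to at most `1`. -/
lemma potential_disjoint {Z : Set Vtx} {z w : Vtx} (hz : z ∈ Z) (hw : w ∈ Z)
    (hzw : z ≠ w) {uz uw : Hsp} (huz : uz ∈ Constr z (Z \ {z}))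
    (hminz : ∀ v ∈ Constr z (Z \ {z}), ‖uz‖ ≤ ‖v‖)
    (huw : uw ∈ Constr w (Z \ {w}))
    (hminw : ∀ v ∈ Constr w (Z \ {w}), ‖uw‖ ≤ ‖v‖) (x : Vtx) :
    Isum (⇑uz) x ≤ 1 - Isum (⇑uw) x := by
  have hbz := fun y => min_bounds huz hminz y
  have hbw := fun y => min_bounds huw hminw y
  have hdz : ∀ y, del (Isum (⇑uz)) y = uz y := fun y => del_Isum _ y
  have hdw : ∀ y, del (Isum (⇑uw)) y = uw y := fun y => del_Isum _ y
  have hptw : ∀ y,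
      (del (fun v => min (Isum (⇑uz) v) (1 - Isum (⇑uw) v)) y) ^ 2
        + (del (fun v => min (Isum (⇑uw) v) (1 - Isum (⇑uz) v)) y) ^ 2
      ≤ (uz y) ^ 2 + (uw y) ^ 2 := by
    intro y
    rw [← hdz y, ← hdw y]
    unfold del
    split_ifs with hy
    · show (min (Isum (⇑uz) []) (1 - Isum (⇑uw) [])) ^ 2
          + (min (Isum (⇑uw) []) (1 - Isum (⇑uz) [])) ^ 2
        ≤ (Isum (⇑uz) []) ^ 2 + (Isum (⇑uw) []) ^ 2
      obtain ⟨hz0, hz1⟩ := hbz ([] : Vtx)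
      obtain ⟨hw0, hw1⟩ := hbw ([] : Vtx)
      rcases le_total (Isum (⇑uz) []) (1 - Isum (⇑uw) []) with h | h
      · rw [min_eq_left h, min_eq_left (by linarith)]
      · rw [min_eq_right h, min_eq_right (by linarith)]
        nlinarith
    · show (min (Isum (⇑uz) y) (1 - Isum (⇑uw) y)
            - min (Isum (⇑uz) y.dropLast) (1 - Isum (⇑uw) y.dropLast)) ^ 2
          + (min (Isum (⇑uw) y) (1 - Isum (⇑uz) y)
            - min (Isum (⇑uw) y.dropLast) (1 - Isum (⇑uz) y.dropLast)) ^ 2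
        ≤ (Isum (⇑uz) y - Isum (⇑uz) y.dropLast) ^ 2
          + (Isum (⇑uw) y - Isum (⇑uw) y.dropLast) ^ 2
      have hmm := minmax_sq (Isum (⇑uz) y) (Isum (⇑uz) y.dropLast)
        (1 - Isum (⇑uw) y) (1 - Isum (⇑uw) y.dropLast)
      rw [min_identity (Isum (⇑uz) y) (Isum (⇑uw) y),
          min_identity (Isum (⇑uz) y.dropLast) (Isum (⇑uw) y.dropLast)]
      nlinarith [hmm]
  have hsq : ∀ y : Vtx,
      (del (fun v => min (Isum (⇑uz) v) (1 - Isum (⇑uw) v)) y) ^ 2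
        ≤ (uz y) ^ 2 + (uw y) ^ 2 := fun y => by
    nlinarith [hptw y, sq_nonneg (del (fun v => min (Isum (⇑uw) v) (1 - Isum (⇑uz) v)) y)]
  have hsq' : ∀ y : Vtx,
      (del (fun v => min (Isum (⇑uw) v) (1 - Isum (⇑uz) v)) y) ^ 2
        ≤ (uz y) ^ 2 + (uw y) ^ 2 := fun y => by
    nlinarith [hptw y, sq_nonneg (del (fun v => min (Isum (⇑uz) v) (1 - Isum (⇑uw) v)) y)]
  have hsummZW : Summable fun y : Vtx => (uz y) ^ 2 + (uw y) ^ 2 :=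
    (summable_sq uz).add (summable_sq uw)
  have hmemP : Memℓp (del (fun v => min (Isum (⇑uz) v) (1 - Isum (⇑uw) v))) 2 :=
    memHsp_of_sq_summable
      (Summable.of_nonneg_of_le (fun y => sq_nonneg _) hsq hsummZW)
  have hmemQ : Memℓp (del (fun v => min (Isum (⇑uw) v) (1 - Isum (⇑uz) v))) 2 :=
    memHsp_of_sq_summable
      (Summable.of_nonneg_of_le (fun y => sq_nonneg _) hsq' hsummZW)
  set pH : Hsp := ⟨del (fun v => min (Isum (⇑uz) v) (1 - Isum (⇑uw) v)), hmemP⟩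
    with hpH
  set qH : Hsp := ⟨del (fun v => min (Isum (⇑uw) v) (1 - Isum (⇑uz) v)), hmemQ⟩
    with hqH
  have hcoeP : ⇑pH = del (fun v => min (Isum (⇑uz) v) (1 - Isum (⇑uw) v)) := rfl
  have hcoeQ : ⇑qH = del (fun v => min (Isum (⇑uw) v) (1 - Isum (⇑uz) v)) := rfl
  have hPmem : pH ∈ Constr z (Z \ {z}) := by
    constructor
    · rw [hcoeP, Isum_del]
      show min (Isum (⇑uz) z) (1 - Isum (⇑uw) z) = 1
      rw [huz.1, huw.2 z ⟨hz, by simp [hzw]⟩]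
      norm_num
    · intro v hv
      rw [hcoeP, Isum_del]
      show min (Isum (⇑uz) v) (1 - Isum (⇑uw) v) = 0
      rw [huz.2 v hv]
      exact min_eq_left (by linarith [(hbw v).2])
  have hQmem : qH ∈ Constr w (Z \ {w}) := by
    constructor
    · rw [hcoeQ, Isum_del]
      show min (Isum (⇑uw) w) (1 - Isum (⇑uz) w) = 1
      rw [huw.1, huz.2 w ⟨hw, by simp [Ne.symm hzw]⟩]
      norm_num
    · intro v hv
      rw [hcoeQ, Isum_del]
      show min (Isum (⇑uw) v) (1 - Isum (⇑uz) v) = 0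
      rw [huw.2 v hv]
      exact min_eq_left (by linarith [(hbz v).2])
  have hP1 : ‖uz‖ ≤ ‖pH‖ := hminz pH hPmem
  have hQ1 : ‖uw‖ ≤ ‖qH‖ := hminw qH hQmem
  have hsumPQ : ‖pH‖ ^ 2 + ‖qH‖ ^ 2 ≤ ‖uz‖ ^ 2 + ‖uw‖ ^ 2 := by
    rw [normSq_eq, normSq_eq, normSq_eq, normSq_eq]
    rw [← Summable.tsum_add (summable_sq pH) (summable_sq qH),
        ← Summable.tsum_add (summable_sq uz) (summable_sq uw)]
    exact Summable.tsum_le_tsum (fun y => hptw y)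
      ((summable_sq pH).add (summable_sq qH)) hsummZW
  have hP2 : ‖uz‖ ^ 2 ≤ ‖pH‖ ^ 2 := pow_le_pow_left₀ (norm_nonneg uz) hP1 2
  have hQ2 : ‖uw‖ ^ 2 ≤ ‖qH‖ ^ 2 := pow_le_pow_left₀ (norm_nonneg uw) hQ1 2
  have hPeq2 : ‖pH‖ ^ 2 = ‖uz‖ ^ 2 := by linarith
  have hPle : ‖pH‖ ≤ ‖uz‖ :=
    norm_le_of_sq_le (norm_nonneg _) (norm_nonneg _) (le_of_eq hPeq2)
  have hPmin : ∀ v ∈ Constr z (Z \ {z}), ‖pH‖ ≤ ‖v‖ :=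
    fun v hv => le_trans hPle (hminz v hv)
  have hEq : uz = pH := min_unique huz hPmem hminz hPmin
  have hval : Isum (⇑uz) x = min (Isum (⇑uz) x) (1 - Isum (⇑uw) x) := by
    conv_lhs => rw [hEq]
    rw [hcoeP, Isum_del]
  rw [hval]
  exact min_le_right _ _

end NearExtremalAux

open NearExtremalAux in
theorem near_extremal_from_capacity :
    ∀ C₁ : ℝ, 0 < C₁ → ∃ C : ℝ, 0 < C ∧ ∀ Z : Set Vtx, treeCapCond Z C₁ →
      ∃ K : Vtx → Vtx → ℝ,
        (∀ z ∈ Z, K z z = 1) ∧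
        (∀ z ∈ Z, ∀ w ∈ Z, w ≠ z → K z w = 0) ∧
        (∀ z ∈ Z, b2tNormSq (K z) ≤ ENNReal.ofReal C * treeGamma z Z) ∧
        (∀ z ∈ Z, ∀ x : Vtx, x ∉ Z →
          interiorPt {β : Vtx | K z β - K z β.dropLast ≠ 0} x →
          K z x = (K z x.dropLast + K z (x ++ [false]) + K z (x ++ [true])) / 3) ∧
        (∀ z ∈ Z, ∀ w ∈ Z, z ≠ w → ∀ x : Vtx, K z x = 0 ∨ K w x = 0) := by
  intro C₁ hC₁
  refine ⟨4, by norm_num, ?_⟩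
  intro Z _hcap
  classical
  have hAne : ∀ z : Vtx, z ∉ Z \ {z} := fun z hz => hz.2 rfl
  have hmins : ∀ z : Vtx, ∃ u : Hsp, u ∈ Constr z (Z \ {z}) ∧
      ∀ w ∈ Constr z (Z \ {z}), ‖u‖ ≤ ‖w‖ :=
    fun z => exists_min z (Z \ {z}) (hAne z)
  choose uA uA_mem uA_min using hmins
  have hb : ∀ z x, 0 ≤ Isum (⇑(uA z)) x ∧ Isum (⇑(uA z)) x ≤ 1 :=
    fun z x => min_bounds (uA_mem z) (uA_min z) x
  set CC : Vtx → Set Vtx :=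
    fun z => comp {y : Vtx | 1/2 < Isum (⇑(uA z)) y} z with hCC
  have hzS : ∀ z : Vtx, z ∈ {y : Vtx | 1/2 < Isum (⇑(uA z)) y} := fun z => by
    show (1:ℝ)/2 < Isum (⇑(uA z)) z
    rw [(uA_mem z).1]; norm_num
  have hzCC : ∀ z : Vtx, z ∈ CC z := fun z => comp_self _ z
  have hCS : ∀ z y, y ∈ CC z → 1/2 < Isum (⇑(uA z)) y :=
    fun z y hy => comp_subset (hzS z) hy
  have hnotin : ∀ z : Vtx, z ∉ (CC z)ᶜ := fun z hc => hc (hzCC z)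
  have hkks : ∀ z : Vtx, ∃ u : Hsp, u ∈ Constr z (CC z)ᶜ ∧
      ∀ w ∈ Constr z (CC z)ᶜ, ‖u‖ ≤ ‖w‖ :=
    fun z => exists_min z (CC z)ᶜ (hnotin z)
  choose kk kk_mem kk_min using hkks
  have hK0 : ∀ z y, y ∉ CC z → Isum (⇑(kk z)) y = 0 :=
    fun z y hy => (kk_mem z).2 y hy
  refine ⟨fun z => Isum (⇑(kk z)), ?_, ?_, ?_, ?_, ?_⟩
  -- (1) K z z = 1
  · intro z _
    exact (kk_mem z).1
  -- (2) K z w = 0 on Z \ {z}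
  · intro z _ w hw hwz
    apply hK0
    intro hwC
    have h1 := hCS z w hwC
    have h0 : Isum (⇑(uA z)) w = 0 := (uA_mem z).2 w ⟨hw, fun h => hwz h⟩
    rw [h0] at h1
    norm_num at h1
  -- (3) norm bound
  · intro z _
    have hdelz : ∀ y, del (Isum (⇑(uA z))) y = (uA z) y := fun y => del_Isum _ y
    set g : Vtx → ℝ :=
      fun y => if y ∈ CC z then 2 * Isum (⇑(uA z)) y - 1 else 0 with hg
    have hadj1 : ∀ y : Vtx, adjV y y.dropLast := fun y => Or.inr rfl
    have hadj2 : ∀ y : Vtx, adjV y.dropLast y := fun y => Or.inl rfl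
    have hptw : ∀ y, (del g y) ^ 2 ≤ 4 * ((uA z) y) ^ 2 := by
      intro y
      rw [← hdelz y]
      unfold del
      split_ifs with hy
      · show (g []) ^ 2 ≤ 4 * (Isum (⇑(uA z)) []) ^ 2
        simp only [hg]
        by_cases hin : ([] : Vtx) ∈ CC z
        · rw [if_pos hin]
          have h1 := hCS z [] hin
          have h2 := (hb z []).2
          nlinarith
        · rw [if_neg hin]
          nlinarith [sq_nonneg (Isum (⇑(uA z)) [])]
      · show (g y - g y.dropLast) ^ 2
            ≤ 4 * (Isum (⇑(uA z)) y - Isum (⇑(uA z)) y.dropLast) ^ 2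
        simp only [hg]
        by_cases hin : y ∈ CC z <;> by_cases hin' : y.dropLast ∈ CC z
        · rw [if_pos hin, if_pos hin']
          nlinarith [sq_nonneg (Isum (⇑(uA z)) y - Isum (⇑(uA z)) y.dropLast)]
        · rw [if_pos hin, if_neg hin']
          have h1 := hCS z y hin
          have h2 : ¬ (1/2 < Isum (⇑(uA z)) y.dropLast) := by
            intro hgt
            exact hin' (comp_extend (hzS z) hin (hadj1 y) hgt)
          push_neg at h2
          have h3 := (hb z y.dropLast).1
          nlinarith
        · rw [if_neg hin, if_pos hin']
          have h1 := hCS z y.dropLast hin'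
          have h2 : ¬ (1/2 < Isum (⇑(uA z)) y) := by
            intro hgt
            exact hin (comp_extend (hzS z) hin' (hadj2 y) hgt)
          push_neg at h2
          have h3 := (hb z y).1
          nlinarith
        · rw [if_neg hin, if_neg hin']
          nlinarith [sq_nonneg (Isum (⇑(uA z)) y - Isum (⇑(uA z)) y.dropLast)]
    have hmemg : Memℓp (del g) 2 := by
      apply memHsp_of_le ((2:ℝ) • uA z)
      intro y
      have hco : ((2:ℝ) • uA z) y = 2 * (uA z) y := by
        rw [lp.coeFn_smul]; simp
      rw [hco]
      calc (del g y) ^ 2 ≤ 4 * ((uA z) y) ^ 2 := hptw y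
        _ = (2 * (uA z) y) ^ 2 := by ring
    have hgcon : (⟨del g, hmemg⟩ : Hsp) ∈ Constr z (CC z)ᶜ := by
      constructor
      · show Isum (del g) z = 1
        rw [Isum_del]
        show g z = 1
        simp only [hg]
        rw [if_pos (hzCC z), (uA_mem z).1]
        norm_num
      · intro v hv
        show Isum (del g) v = 0
        rw [Isum_del]
        show g v = 0
        simp only [hg]
        rw [if_neg hv]
    set gH : Hsp := ⟨del g, hmemg⟩ with hgH
    have hcoeg : ⇑gH = del g := rfl
    have h1 : ‖kk z‖ ≤ ‖gH‖ := kk_min z _ hgcon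
    have h2 : ‖gH‖ ^ 2 ≤ 4 * ‖uA z‖ ^ 2 := by
      rw [normSq_eq, normSq_eq]
      calc (∑' y : Vtx, (gH y) ^ 2)
          ≤ ∑' y : Vtx, 4 * ((uA z) y) ^ 2 := by
            refine Summable.tsum_le_tsum ?_ (summable_sq gH) ((summable_sq (uA z)).mul_left 4)
            intro y
            have : (gH y) = del g y := by rw [hcoeg]
            rw [this]
            exact hptw y
        _ = 4 * ∑' y : Vtx, ((uA z) y) ^ 2 := tsum_mul_left
    have hnorm : ‖kk z‖ ^ 2 ≤ 4 * ‖uA z‖ ^ 2 := by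
      have := pow_le_pow_left₀ (norm_nonneg (kk z)) h1 2
      linarith
    calc b2tNormSq (Isum (⇑(kk z)))
        = ∑' x : Vtx, ENNReal.ofReal (((kk z) x) ^ 2) := b2t_Isum _
      _ = ENNReal.ofReal (‖kk z‖ ^ 2) := tsum_ofReal_sq (kk z)
      _ ≤ ENNReal.ofReal (4 * ‖uA z‖ ^ 2) := ENNReal.ofReal_le_ofReal hnorm
      _ = ENNReal.ofReal 4 * ENNReal.ofReal (‖uA z‖ ^ 2) :=
          ENNReal.ofReal_mul (by norm_num)
      _ ≤ ENNReal.ofReal 4 * treeGamma z Z :=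
          mul_le_mul_right (gamma_ge Z z (uA_min z)) _
  -- (4) harmonicity
  · intro z hz x hxZ hint
    by_cases hxnil : x = []
    · subst hxnil
      exact absurd (show Isum (⇑(kk z)) [] - Isum (⇑(kk z)) (([]:Vtx)).dropLast = 0
        by simp) hint.1
    by_cases hxC : x ∈ CC z
    · have hxz : x ≠ z := fun h => hxZ (h ▸ hz)
      have horth : (inner ℝ (kk z) (eVec x) : ℝ) = 0 := by
        apply min_orth (kk_mem z) (kk_min z) (eVec x)
        · rw [Isum_eVec]
          exact if_neg (Ne.symm hxz)
        · intro y hy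
          rw [Isum_eVec]
          apply if_neg
          intro h
          subst h
          exact hy hxC
      rw [inner_eVec] at horth
      have hstep : ∀ y : Vtx, y ≠ [] →
          (kk z) y = Isum (⇑(kk z)) y - Isum (⇑(kk z)) y.dropLast := by
        intro y hy
        rw [Isum_step _ hy]; ring
      have e0 : (kk z) x = Isum (⇑(kk z)) x - Isum (⇑(kk z)) x.dropLast :=
        hstep x hxnil
      have e1 : (kk z) (x ++ [false])
          = Isum (⇑(kk z)) (x ++ [false]) - Isum (⇑(kk z)) x := by
        rw [hstep _ (by simp), List.dropLast_concat]
      have e2 : (kk z) (x ++ [true])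
          = Isum (⇑(kk z)) (x ++ [true]) - Isum (⇑(kk z)) x := by
        rw [hstep _ (by simp), List.dropLast_concat]
      rw [e0, e1, e2] at horth
      linarith [horth]
    · exfalso
      by_cases hpC : x.dropLast ∈ CC z
      · by_cases hxz2 : x <+: z
        · exact hxC (cross1 hpC hxz2 (not_prefix_dropLast hxnil))
        · have hx0 : x ++ [false] ∈ CC z := by
            by_contra h0
            apply hint.2.2.1
            show Isum (⇑(kk z)) (x ++ [false])
                - Isum (⇑(kk z)) (x ++ [false]).dropLast = 0
            rw [List.dropLast_concat, hK0 z _ h0, hK0 z x hxC, sub_self]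
          exact hxC (cross2 hx0 hxz2 ⟨[false], rfl⟩)
      · apply hint.1
        show Isum (⇑(kk z)) x - Isum (⇑(kk z)) x.dropLast = 0
        rw [hK0 z x hxC, hK0 z _ hpC, sub_self]
  -- (5) disjoint supports
  · intro z hz w hw hzw x
    by_cases hxC : x ∈ CC z
    · right
      apply hK0
      intro hxCw
      have h1 := hCS z x hxC
      have h2 := hCS w x hxCw
      have h3 := potential_disjoint hz hw hzw (uA_mem z) (uA_min z)
        (uA_mem w) (uA_min w) x
      linarith
    · left
      exact hK0 z x hxC

end
end

section
/- If a subset Z of the dyadic tree T satisfies the tree separation condition with some constant c > 0 and the tree weak simple condition with some constant C > 0, then Z satisfies the tree capacity condition with a constant depending only on c and C. -/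
/- Tree separation plus the tree weak simple condition imply the tree capacity
condition, with a constant depending only on the given constants. -/

noncomputable section

open scoped ENNReal

namespace CapAux

lemma treeMeet_prefix_left : ∀ α β : Vtx, treeMeet α β <+: α
  | [], _ => by simp [treeMeet]
  | (a :: as), [] => by simp [treeMeet]
  | (a :: as), (b :: bs) => by
      by_cases h : a = b
      · simpa [treeMeet, h] using treeMeet_prefix_left as bs
      · simp [treeMeet, h]

lemma treeMeet_prefix_right : ∀ α β : Vtx, treeMeet α β <+: β
  | [], _ => by simp [treeMeet]
  | (a :: as), [] => by simp [treeMeet]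
  | (a :: as), (b :: bs) => by
      by_cases h : a = b
      · subst h; simpa [treeMeet] using treeMeet_prefix_right as bs
      · simp [treeMeet, h]

lemma prefix_treeMeet : ∀ (δ α β : Vtx), δ <+: α → δ <+: β → δ <+: treeMeet α β
  | [], _, _, _, _ => by simp
  | (d :: ds), (a :: as), (b :: bs), h1, h2 => by
      obtain ⟨t1, ht1⟩ := h1
      obtain ⟨t2, ht2⟩ := h2
      injection ht1 with e1 e1'
      injection ht2 with e2 e2'
      subst e1; subst e2
      have : ds <+: treeMeet as bs :=
        prefix_treeMeet ds as bs ⟨t1, e1'⟩ ⟨t2, e2'⟩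
      simp only [treeMeet, if_pos rfl]
      exact (List.prefix_cons_inj d).mpr this
  | (d :: ds), [], _, h1, _ => by simp at h1
  | (d :: ds), (a :: as), [], _, h2 => by simp at h2

lemma treeMeet_of_prefix {α β : Vtx} (h : β <+: α) : treeMeet α β = β :=
  (treeMeet_prefix_right α β).eq_of_length_le
    (prefix_treeMeet β α β h List.prefix_rfl).length_le

lemma treeMeet_of_prefix_left {α β : Vtx} (h : α <+: β) : treeMeet α β = α :=
  (treeMeet_prefix_left α β).eq_of_length_le
    (prefix_treeMeet α α β List.prefix_rfl h).length_le

lemma prefix_dropLast_of_ne {p β : Vtx} (h : p <+: β) (hne : p ≠ β) : p <+: β.dropLast := by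
  have hl : p.length < β.length :=
    lt_of_le_of_ne h.length_le (fun e => hne (h.eq_of_length_le e.ge))
  have hp : p = β.take p.length := List.prefix_iff_eq_take.mp h
  have : p = (β.dropLast).take p.length := by
    rw [List.dropLast_eq_take, List.take_take, min_eq_left (by omega)]
    exact hp
  rw [this]; exact List.take_prefix _ _

/-- length of the meet. -/
abbrev L (α β : Vtx) : ℕ := (treeMeet α β).length

lemma L_le_left (α β : Vtx) : L α β ≤ α.length := (treeMeet_prefix_left α β).length_le
lemma L_le_right (α β : Vtx) : L α β ≤ β.length := (treeMeet_prefix_right α β).length_le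

lemma meet_eq_take (α β : Vtx) : treeMeet α β = α.take (L α β) :=
  List.prefix_iff_eq_take.mp (treeMeet_prefix_left α β)

lemma meet_eq_take' (α β : Vtx) : treeMeet α β = β.take (L α β) :=
  List.prefix_iff_eq_take.mp (treeMeet_prefix_right α β)

lemma le_L_of_take_prefix {α β : Vtx} {k : ℕ} (hk : k ≤ α.length) (h : α.take k <+: β) :
    k ≤ L α β := by
  have h2 : α.take k <+: treeMeet α β := prefix_treeMeet _ _ _ (List.take_prefix _ _) h
  have := h2.length_le
  rwa [List.length_take, min_eq_left hk] at this

lemma take_prefix_of_le_L {α β : Vtx} {k : ℕ} (h : k ≤ L α β) : α.take k <+: β := by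
  have h1 : α.take k <+: treeMeet α β := by
    rw [meet_eq_take α β]
    have : α.take k = (α.take (L α β)).take k := by
      rw [List.take_take, min_eq_left h]
    rw [this]; exact List.take_prefix _ _
  exact h1.trans (treeMeet_prefix_right α β)

lemma meet_eq_meet {α β γ : Vtx} (hβγ : β <+: γ) (hβα : ¬ β <+: α) :
    treeMeet α γ = treeMeet α β := by
  apply (prefix_treeMeet _ _ _ (treeMeet_prefix_left α γ) ?_).eq_of_length_le ?_
  · rcases List.prefix_or_prefix_of_prefix (treeMeet_prefix_right α γ) hβγ with h | h
    · exact h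
    · exact absurd (h.trans (treeMeet_prefix_left α γ)) hβα
  · exact (prefix_treeMeet _ _ _ (treeMeet_prefix_left α β)
      ((treeMeet_prefix_right α β).trans hβγ)).length_le

open Classical in
/-- the minimal points of `Z` visible from `α` at deep levels (≥ t0). -/
def W2 (Z : Set Vtx) (α : Vtx) (t0 : ℕ) : Set Vtx :=
  {γ | γ ∈ Z ∧ γ ≠ α ∧ t0 ≤ L α γ ∧
    ∀ γ' ∈ Z, γ.take (L α γ + 1) <+: γ' → γ' <+: γ → γ' = γ}

def SS (Z : Set Vtx) (α : Vtx) (t0 : ℕ) (β : Vtx) : Set ℕ :=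
  {m | ∃ γ ∈ W2 Z α t0, β <+: γ ∧ γ.length = m}

open Classical in
def dside (Z : Set Vtx) (α : Vtx) (t0 : ℕ) (β : Vtx) : ℝ :=
  if (SS Z α t0 β).Nonempty then ((sInf (SS Z α t0 β) - L α β : ℕ) : ℝ)⁻¹ else 0

open Classical in
def del (Z : Set Vtx) (α : Vtx) (t0 B : ℕ) (β : Vtx) : ℝ :=
  if β = [] then 0 else if β <+: α then (B : ℝ)⁻¹ else dside Z α t0 β

open Classical in
def DD (Z : Set Vtx) (α : Vtx) (t0 B : ℕ) (β : Vtx) : ℝ :=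
  (∑ k ∈ Finset.range (α.length + 1),
    if ¬ (α.take k <+: β) then del Z α t0 B (α.take k) else 0)
  + (∑ k ∈ Finset.range (β.length + 1),
    if ¬ (β.take k <+: α) then del Z α t0 B (β.take k) else 0)

def ff (Z : Set Vtx) (α : Vtx) (t0 B : ℕ) (β : Vtx) : ℝ := max (1 - DD Z α t0 B β) 0

lemma dside_nonneg (Z α t0 β) : 0 ≤ dside Z α t0 β := by
  unfold dside; split <;> positivity

lemma del_nonneg (Z α t0 B β) : 0 ≤ del Z α t0 B β := by
  unfold del; split
  · exact le_refl _
  · split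
    · positivity
    · exact dside_nonneg Z α t0 β

lemma DD_step (Z : Set Vtx) (α : Vtx) (t0 B : ℕ) {β : Vtx} (hβ : β ≠ []) :
    DD Z α t0 B β = DD Z α t0 B β.dropLast +
      (if β <+: α then -(del Z α t0 B β) else del Z α t0 B β) := by
  classical
  have hβpos : 0 < β.length := List.length_pos_iff.mpr hβ
  have hdrop : β.dropLast.length = β.length - 1 := List.length_dropLast
  by_cases hba : β <+: α
  · have hz1 : (∑ k ∈ Finset.range (β.length + 1),
        if ¬ (β.take k <+: α) then del Z α t0 B (β.take k) else 0) = 0 := by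
      apply Finset.sum_eq_zero; intro k _
      rw [if_neg (not_not_intro ((List.take_prefix k β).trans hba))]
    have hz2 : (∑ k ∈ Finset.range (β.dropLast.length + 1),
        if ¬ (β.dropLast.take k <+: α) then del Z α t0 B (β.dropLast.take k) else 0) = 0 := by
      apply Finset.sum_eq_zero; intro k _
      rw [if_neg (not_not_intro ((List.take_prefix k _).trans
        ((List.dropLast_prefix β).trans hba)))]
    have hkey : ∀ k ∈ Finset.range (α.length + 1),
        (if ¬ (α.take k <+: β.dropLast) then del Z α t0 B (α.take k) else 0)
        = (if ¬ (α.take k <+: β) then del Z α t0 B (α.take k) else 0)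
          + (if k = β.length then del Z α t0 B β else 0) := by
      intro k hk
      rw [Finset.mem_range] at hk
      have hk' : k ≤ α.length := by omega
      by_cases hkb : k = β.length
      · subst hkb
        have htake : α.take β.length = β := (List.prefix_iff_eq_take.mp hba).symm
        have h1 : ¬ (β <+: β.dropLast) := fun h => by
          have := h.length_le; omega
        rw [htake, if_pos h1, if_neg (not_not_intro (List.prefix_rfl)), if_pos rfl, zero_add]
      · have hiff : α.take k <+: β ↔ α.take k <+: β.dropLast := by
          constructor
          · intro h
            refine prefix_dropLast_of_ne h (fun he => hkb ?_)
            rw [← he, List.length_take, min_eq_left hk']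
          · exact fun h => h.trans (List.dropLast_prefix β)
        rw [if_neg hkb, add_zero]
        exact if_congr (not_congr hiff.symm) rfl rfl
    have hsum := Finset.sum_congr rfl hkey
    rw [Finset.sum_add_distrib] at hsum
    have hlast : (∑ k ∈ Finset.range (α.length + 1),
        if k = β.length then del Z α t0 B β else 0) = del Z α t0 B β := by
      rw [Finset.sum_ite_eq' (Finset.range (α.length + 1)) β.length
        (fun _ => del Z α t0 B β)]
      rw [if_pos (Finset.mem_range.mpr (by have := hba.length_le; omega))]
    rw [if_pos hba]
    unfold DD
    rw [hz1, hz2, hsum, hlast]; ring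
  · have hFeq : ∀ k ∈ Finset.range (α.length + 1),
        (if ¬ (α.take k <+: β) then del Z α t0 B (α.take k) else 0)
        = (if ¬ (α.take k <+: β.dropLast) then del Z α t0 B (α.take k) else 0) := by
      intro k hk
      have hiff : α.take k <+: β ↔ α.take k <+: β.dropLast := by
        constructor
        · intro h
          refine prefix_dropLast_of_ne h (fun he => hba ?_)
          rw [← he]; exact List.take_prefix k α
        · exact fun h => h.trans (List.dropLast_prefix β)
      exact if_congr (not_congr hiff) rfl rfl
    have hS : (∑ k ∈ Finset.range (β.length + 1),
        if ¬ (β.take k <+: α) then del Z α t0 B (β.take k) else 0)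
        = (∑ k ∈ Finset.range (β.dropLast.length + 1),
        if ¬ (β.dropLast.take k <+: α) then del Z α t0 B (β.dropLast.take k) else 0)
          + del Z α t0 B β := by
      have hr : β.dropLast.length + 1 = β.length := by omega
      rw [hr, Finset.sum_range_succ, List.take_length, if_pos hba]
      congr 1
      apply Finset.sum_congr rfl
      intro k hk
      rw [Finset.mem_range] at hk
      have : β.dropLast.take k = β.take k := by
        rw [List.dropLast_eq_take, List.take_take, min_eq_left (by omega)]
      rw [this]
    rw [if_neg hba]
    unfold DD
    rw [Finset.sum_congr rfl hFeq, hS]; ring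

lemma DD_self (Z : Set Vtx) (α : Vtx) (t0 B : ℕ) : DD Z α t0 B α = 0 := by
  unfold DD
  have h1 : ∀ k ∈ Finset.range (α.length + 1),
      (if ¬ (α.take k <+: α) then del Z α t0 B (α.take k) else 0) = 0 :=
    fun k _ => if_neg (not_not_intro (List.take_prefix k α))
  rw [Finset.sum_eq_zero h1]; norm_num

lemma ff_self (Z : Set Vtx) (α : Vtx) (t0 B : ℕ) : ff Z α t0 B α = 1 := by
  unfold ff; rw [DD_self]; norm_num

lemma abs_ff_sub (Z : Set Vtx) (α : Vtx) (t0 B : ℕ) {β : Vtx} (hβ : β ≠ []) :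
    |ff Z α t0 B β - ff Z α t0 B β.dropLast| ≤ del Z α t0 B β := by
  have hstep := DD_step Z α t0 B hβ
  have h := abs_max_sub_max_le_abs (1 - DD Z α t0 B β) (1 - DD Z α t0 B β.dropLast) 0
  refine h.trans ?_
  have h2 : (1 - DD Z α t0 B β) - (1 - DD Z α t0 B β.dropLast)
      = -(if β <+: α then -(del Z α t0 B β) else del Z α t0 B β) := by
    rw [hstep]; ring
  rw [h2, abs_neg]
  by_cases hba : β <+: α
  · rw [if_pos hba, abs_neg, abs_of_nonneg (del_nonneg _ _ _ _ _)]
  · rw [if_neg hba, abs_of_nonneg (del_nonneg _ _ _ _ _)]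

lemma exists_W2 (Z : Set Vtx) (α : Vtx) (t0 : ℕ)
    (hanc : ∀ γ' ∈ Z, γ' <+: α → γ' ≠ α → γ'.length < t0)
    {z : Vtx} (hz : z ∈ Z) (hzα : z ≠ α) (hLz : t0 ≤ L α z) :
    ∃ γ₀ ∈ W2 Z α t0, γ₀ <+: z ∧ L α γ₀ = L α z ∧ L α z < γ₀.length := by
  classical
  have hMz : treeMeet α z ≠ z := by
    intro h
    have hpre : z <+: α := h ▸ treeMeet_prefix_left α z
    have h2 := hanc z hz hpre hzα
    have hL : L α z = z.length := by unfold L; rw [h]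
    omega
  have hLlt : L α z < z.length :=
    lt_of_le_of_ne (L_le_right α z)
      (fun e => hMz ((treeMeet_prefix_right α z).eq_of_length_le e.ge))
  set v := z.take (L α z + 1) with hv
  have hvlen : v.length = L α z + 1 := by rw [hv, List.length_take]; omega
  have hvz : v <+: z := List.take_prefix _ _
  have hvα : ¬ v <+: α := by
    intro h
    have h2 : v <+: treeMeet α z := prefix_treeMeet _ _ _ h hvz
    have h3 := h2.length_le; rw [hvlen] at h3
    have hrfl : (treeMeet α z).length = L α z := rfl
    omega
  have hNsne : {m | ∃ γ ∈ Z, v <+: γ ∧ γ <+: z ∧ γ.length = m}.Nonempty :=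
    ⟨z.length, z, hz, hvz, List.prefix_rfl, rfl⟩
  obtain ⟨γ₀, hγ₀Z, hvγ₀, hγ₀z, hγ₀len⟩ := Nat.sInf_mem hNsne
  have hlenv : L α z + 1 ≤ γ₀.length := by rw [← hvlen]; exact hvγ₀.length_le
  have hMle : treeMeet α z <+: γ₀ := by
    have h1 : treeMeet α z <+: v := by
      rw [meet_eq_take' α z, hv]
      exact List.prefix_of_prefix_length_le (List.take_prefix _ _) (List.take_prefix _ _)
        (by rw [List.length_take, List.length_take]; omega)
    exact h1.trans hvγ₀
  have hMeq : treeMeet α γ₀ = treeMeet α z := by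
    apply (prefix_treeMeet _ _ _ (treeMeet_prefix_left α γ₀)
      ((treeMeet_prefix_right α γ₀).trans hγ₀z)).eq_of_length_le
    exact (prefix_treeMeet _ _ _ (treeMeet_prefix_left α z) hMle).length_le
  have hLγ₀ : L α γ₀ = L α z := by unfold L; rw [hMeq]
  have hγ₀α : γ₀ ≠ α := by
    intro h; apply hvα; rw [← h]; exact hvγ₀
  have htk : γ₀.take (L α z + 1) = v := by
    have h0 : γ₀ = z.take γ₀.length := List.prefix_iff_eq_take.mp hγ₀z
    rw [hv]; conv_lhs => rw [h0]
    rw [List.take_take, min_eq_left hlenv]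
  refine ⟨γ₀, ⟨hγ₀Z, hγ₀α, by rw [hLγ₀]; exact hLz, ?_⟩, hγ₀z, hLγ₀, by omega⟩
  intro γ' hγ' hpre1 hpre2
  rw [hLγ₀, htk] at hpre1
  have hmem : γ'.length ∈ {m | ∃ γ ∈ Z, v <+: γ ∧ γ <+: z ∧ γ.length = m} :=
    ⟨γ', hγ', hpre1, hpre2.trans hγ₀z, rfl⟩
  have hge := Nat.sInf_le hmem
  exact hpre2.eq_of_length_le (by omega)

lemma DD_ge_one (Z : Set Vtx) (α : Vtx) (t0 B : ℕ)
    (hB1 : 1 ≤ B) (hBn : B ≤ α.length) (ht0 : t0 = α.length + 1 - B)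
    (hanc : ∀ γ' ∈ Z, γ' <+: α → γ' ≠ α → γ'.length < t0)
    {z : Vtx} (hz : z ∈ Z) (hzα : z ≠ α) :
    1 ≤ DD Z α t0 B z := by
  classical
  have hSnonneg : 0 ≤ ∑ k ∈ Finset.range (z.length + 1),
      (if ¬ (z.take k <+: α) then del Z α t0 B (z.take k) else 0) := by
    apply Finset.sum_nonneg; intro k _
    split
    · exact del_nonneg _ _ _ _ _
    · exact le_refl 0
  have hFnonneg : 0 ≤ ∑ k ∈ Finset.range (α.length + 1),
      (if ¬ (α.take k <+: z) then del Z α t0 B (α.take k) else 0) := by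
    apply Finset.sum_nonneg; intro k _
    split
    · exact del_nonneg _ _ _ _ _
    · exact le_refl 0
  by_cases hcase : L α z ≤ α.length - B
  · -- ancestor-side drop
    have hsub : Finset.Icc (L α z + 1) α.length ⊆ Finset.range (α.length + 1) := by
      intro k hk; rw [Finset.mem_Icc] at hk; exact Finset.mem_range.mpr (by omega)
    have hterm : ∀ k ∈ Finset.Icc (L α z + 1) α.length,
        (if ¬ (α.take k <+: z) then del Z α t0 B (α.take k) else 0) = (B:ℝ)⁻¹ := by
      intro k hk; rw [Finset.mem_Icc] at hk
      have hknil : α.take k ≠ [] := by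
        intro h
        have h2 : (α.take k).length = k := by rw [List.length_take]; omega
        rw [h] at h2; simp at h2; omega
      have hnpre : ¬ (α.take k <+: z) := fun h => by
        have := le_L_of_take_prefix (by omega : k ≤ α.length) h; omega
      rw [if_pos hnpre]; unfold del
      rw [if_neg hknil, if_pos (List.take_prefix k α)]
    have h1 : (∑ k ∈ Finset.Icc (L α z + 1) α.length,
        if ¬ (α.take k <+: z) then del Z α t0 B (α.take k) else 0)
        = ((α.length - L α z : ℕ):ℝ) * (B:ℝ)⁻¹ := by
      have he : α.length + 1 - (L α z + 1) = α.length - L α z := by omega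
      rw [Finset.sum_congr rfl hterm, Finset.sum_const, Nat.card_Icc, he, nsmul_eq_mul]
    have hBpos : (0:ℝ) < B := by exact_mod_cast hB1
    have h2 : 1 ≤ ((α.length - L α z:ℕ):ℝ) * (B:ℝ)⁻¹ := by
      have hBle : B ≤ α.length - L α z := by omega
      calc (1:ℝ) = B * (B:ℝ)⁻¹ := (mul_inv_cancel₀ hBpos.ne').symm
        _ ≤ _ := by gcongr <;> exact_mod_cast hBle
    have h3 : (∑ k ∈ Finset.Icc (L α z + 1) α.length,
          if ¬ (α.take k <+: z) then del Z α t0 B (α.take k) else 0)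
        ≤ ∑ k ∈ Finset.range (α.length + 1),
          if ¬ (α.take k <+: z) then del Z α t0 B (α.take k) else 0 := by
      apply Finset.sum_le_sum_of_subset_of_nonneg hsub
      intro k _ _
      split
      · exact del_nonneg _ _ _ _ _
      · exact le_refl 0
    unfold DD
    rw [h1] at h3
    linarith
  · push_neg at hcase
    have hLz : t0 ≤ L α z := by omega
    obtain ⟨γ₀, hγ₀W, hγ₀z, hLeq, hLlt⟩ := exists_W2 Z α t0 hanc hz hzα hLz
    have hlenle : γ₀.length ≤ z.length := hγ₀z.length_le
    have hsub : Finset.Icc (L α z + 1) γ₀.length ⊆ Finset.range (z.length + 1) := by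
      intro k hk; rw [Finset.mem_Icc] at hk; exact Finset.mem_range.mpr (by omega)
    have hterm : ∀ k ∈ Finset.Icc (L α z + 1) γ₀.length,
        ((γ₀.length - L α z:ℕ):ℝ)⁻¹
          ≤ (if ¬ (z.take k <+: α) then del Z α t0 B (z.take k) else 0) := by
      intro k hk; rw [Finset.mem_Icc] at hk
      have hklen : k ≤ z.length := le_trans hk.2 hlenle
      have hlen : (z.take k).length = k := by rw [List.length_take]; omega
      have hnpre : ¬ (z.take k <+: α) := by
        intro h
        have h2 : z.take k <+: treeMeet α z := prefix_treeMeet _ _ _ h (List.take_prefix _ _)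
        have h3 := h2.length_le; rw [hlen] at h3
        have hrfl : (treeMeet α z).length = L α z := rfl
        omega
      have hknil : z.take k ≠ [] := by
        intro h; rw [h] at hlen; simp at hlen; omega
      rw [if_pos hnpre]; unfold del
      rw [if_neg hknil, if_neg hnpre]
      have hβγ₀ : z.take k <+: γ₀ :=
        List.prefix_of_prefix_length_le (List.take_prefix _ _) hγ₀z (by rw [hlen]; exact hk.2)
      have hmem : γ₀.length ∈ SS Z α t0 (z.take k) := ⟨γ₀, hγ₀W, hβγ₀, rfl⟩
      have hne : (SS Z α t0 (z.take k)).Nonempty := ⟨_, hmem⟩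
      unfold dside; rw [if_pos hne]
      have hLtk : L α (z.take k) = L α z := by
        unfold L
        rw [show treeMeet α (z.take k) = treeMeet α γ₀ from (meet_eq_meet hβγ₀ hnpre).symm]
        rw [show (treeMeet α γ₀).length = L α γ₀ from rfl, hLeq]
      have hsinf_le : sInf (SS Z α t0 (z.take k)) ≤ γ₀.length := Nat.sInf_le hmem
      have hsinf_ge : k ≤ sInf (SS Z α t0 (z.take k)) := by
        obtain ⟨γ, hγW, hpre, hlen'⟩ := Nat.sInf_mem hne
        rw [← hlen']
        have := hpre.length_le; rw [hlen] at this; exact this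
      rw [hLtk]
      have h1 : (0:ℝ) < ((sInf (SS Z α t0 (z.take k)) - L α z : ℕ):ℝ) := by
        have : 0 < sInf (SS Z α t0 (z.take k)) - L α z := by omega
        exact_mod_cast this
      apply inv_anti₀ h1
      exact_mod_cast (by omega : sInf (SS Z α t0 (z.take k)) - L α z ≤ γ₀.length - L α z)
    have hQpos : 0 < γ₀.length - L α z := by omega
    have hQr : (0:ℝ) < ((γ₀.length - L α z : ℕ):ℝ) := by exact_mod_cast hQpos
    have h1 : (1:ℝ) = ((Finset.Icc (L α z + 1) γ₀.length).card : ℝ)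
        * ((γ₀.length - L α z:ℕ):ℝ)⁻¹ := by
      rw [Nat.card_Icc, show γ₀.length + 1 - (L α z + 1) = γ₀.length - L α z from by omega]
      rw [mul_inv_cancel₀ hQr.ne']
    have h2 : ((Finset.Icc (L α z + 1) γ₀.length).card : ℝ)
        * ((γ₀.length - L α z:ℕ):ℝ)⁻¹
        ≤ ∑ k ∈ Finset.Icc (L α z + 1) γ₀.length,
          (if ¬ (z.take k <+: α) then del Z α t0 B (z.take k) else 0) := by
      rw [← nsmul_eq_mul, ← Finset.sum_const]
      exact Finset.sum_le_sum hterm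
    have h3 : (∑ k ∈ Finset.Icc (L α z + 1) γ₀.length,
          if ¬ (z.take k <+: α) then del Z α t0 B (z.take k) else 0)
        ≤ ∑ k ∈ Finset.range (z.length + 1),
          if ¬ (z.take k <+: α) then del Z α t0 B (z.take k) else 0 := by
      apply Finset.sum_le_sum_of_subset_of_nonneg hsub
      intro k _ _
      split
      · exact del_nonneg _ _ _ _ _
      · exact le_refl 0
    unfold DD
    linarith

lemma W2_subset (Z : Set Vtx) (α : Vtx) (t0 : ℕ) (ht0n : t0 ≤ α.length)
    (hanc : ∀ γ' ∈ Z, γ' <+: α → γ' ≠ α → γ'.length < t0) :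
    W2 Z α t0 ⊆ weakSet Z α ∪ weakSet Z (α.take t0) := by
  intro γ hγ
  obtain ⟨hγZ, hγα, hLγ, hmin⟩ := hγ
  by_cases hαγ : α <+: γ
  · left
    refine ⟨hγZ, hαγ, ?_⟩
    rintro ⟨γ', hγ'Z, ⟨h1, h2⟩, h3, h4⟩
    have hL : L α γ = α.length := by unfold L; rw [treeMeet_of_prefix_left hαγ]
    have hne : α.length ≠ γ'.length := fun e => h2 (h1.eq_of_length_le e.ge)
    have hlen' : α.length + 1 ≤ γ'.length := by
      have := h1.length_le; omega
    have hpre : γ.take (L α γ + 1) <+: γ' := by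
      rw [hL]
      exact List.prefix_of_prefix_length_le (List.take_prefix _ _) h3
        (by rw [List.length_take]; exact le_trans (min_le_left _ _) hlen')
    exact h4 (hmin γ' hγ'Z hpre h3)
  · right
    have hm₀γ : α.take t0 <+: γ := take_prefix_of_le_L hLγ
    refine ⟨hγZ, hm₀γ, ?_⟩
    rintro ⟨γ', hγ'Z, ⟨h1, h2⟩, h3, h4⟩
    by_cases hcase : γ'.length ≤ L α γ
    · have hγ'M : γ' <+: treeMeet α γ :=
        List.prefix_of_prefix_length_le h3 (treeMeet_prefix_right α γ) hcase
      have hγ'α : γ' <+: α := hγ'M.trans (treeMeet_prefix_left α γ)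
      have hγ'ne : γ' ≠ α := by
        intro h; rw [h] at hγ'M
        exact hαγ (hγ'M.trans (treeMeet_prefix_right α γ))
      have hsmall := hanc γ' hγ'Z hγ'α hγ'ne
      have hle := h1.length_le
      rw [List.length_take, min_eq_left ht0n] at hle
      have hne2 : (α.take t0).length ≠ γ'.length :=
        fun e => h2 (h1.eq_of_length_le e.ge)
      rw [List.length_take, min_eq_left ht0n] at hne2
      omega
    · push_neg at hcase
      have hpre : γ.take (L α γ + 1) <+: γ' :=
        List.prefix_of_prefix_length_le (List.take_prefix _ _) h3
          (by rw [List.length_take]; exact le_trans (min_le_left _ _) hcase)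
      exact h4 (hmin γ' hγ'Z hpre h3)

open Classical in
def wfun (Z : Set Vtx) (α : Vtx) (t0 : ℕ) (γ β : Vtx) : ℝ≥0∞ :=
  if (¬ β <+: α) ∧ β <+: γ ∧ γ.length = sInf (SS Z α t0 β)
  then ENNReal.ofReal (((γ.length - L α γ : ℕ) : ℝ)⁻¹ ^ 2) else 0

lemma side_energy_bound (Z : Set Vtx) (α : Vtx) (t0 : ℕ)
    (hQpos : ∀ γ ∈ W2 Z α t0, 0 < γ.length - L α γ) :
    (∑' β : Vtx, if ¬ (β <+: α) then ENNReal.ofReal ((dside Z α t0 β) ^ 2) else 0)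
      ≤ ∑' γ : (W2 Z α t0), ENNReal.ofReal (((γ.1.length - L α γ.1 : ℕ) : ℝ)⁻¹) := by
  classical
  have step1 : ∀ β : Vtx,
      (if ¬ (β <+: α) then ENNReal.ofReal ((dside Z α t0 β) ^ 2) else 0)
        ≤ ∑' γ : (W2 Z α t0), wfun Z α t0 γ.1 β := by
    intro β
    by_cases hba : β <+: α
    · rw [if_neg (not_not_intro hba)]; exact zero_le
    · rw [if_pos hba]
      by_cases hne : (SS Z α t0 β).Nonempty
      · obtain ⟨γ₀, hγ₀W, hβγ₀, hlen₀⟩ := Nat.sInf_mem hne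
        have hLL : L α γ₀ = L α β := by
          unfold L; rw [meet_eq_meet hβγ₀ hba]
        have hvw : ENNReal.ofReal ((dside Z α t0 β) ^ 2)
            = wfun Z α t0 γ₀ β := by
          unfold wfun
          rw [if_pos ⟨hba, hβγ₀, hlen₀⟩]
          unfold dside
          rw [if_pos hne]
          have he : γ₀.length - L α γ₀ = sInf (SS Z α t0 β) - L α β := by
            rw [hLL, hlen₀]
          rw [he]
        rw [hvw]
        exact ENNReal.le_tsum (⟨γ₀, hγ₀W⟩ : (W2 Z α t0))
      · unfold dside
        rw [if_neg hne]
        simp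
  calc (∑' β : Vtx, if ¬ (β <+: α) then ENNReal.ofReal ((dside Z α t0 β) ^ 2) else 0)
      ≤ ∑' β : Vtx, ∑' γ : (W2 Z α t0), wfun Z α t0 γ.1 β := ENNReal.tsum_le_tsum step1
    _ = ∑' γ : (W2 Z α t0), ∑' β : Vtx, wfun Z α t0 γ.1 β := ENNReal.tsum_comm
    _ ≤ ∑' γ : (W2 Z α t0), ENNReal.ofReal (((γ.1.length - L α γ.1 : ℕ) : ℝ)⁻¹) := by
        apply ENNReal.tsum_le_tsum
        intro γ
        set Pg : Finset Vtx :=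
          (Finset.Icc (L α γ.1 + 1) γ.1.length).image (fun k => γ.1.take k) with hPg
        have hsupp : ∀ β ∉ Pg, wfun Z α t0 γ.1 β = 0 := by
          intro β hβ
          unfold wfun
          rw [if_neg]
          rintro ⟨h1, h2, h3⟩
          apply hβ
          have hlb : L α γ.1 + 1 ≤ β.length := by
            by_contra hlt
            push_neg at hlt
            have hβM : β <+: treeMeet α γ.1 :=
              List.prefix_of_prefix_length_le h2 (treeMeet_prefix_right α γ.1)
                (by rw [show (treeMeet α γ.1).length = L α γ.1 from rfl]; omega)
            exact h1 (hβM.trans (treeMeet_prefix_left α γ.1))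
          exact Finset.mem_image.mpr ⟨β.length,
            Finset.mem_Icc.mpr ⟨hlb, h2.length_le⟩,
            (List.prefix_iff_eq_take.mp h2).symm⟩
        rw [tsum_eq_sum hsupp]
        have hq : (0:ℝ) < ((γ.1.length - L α γ.1 : ℕ) : ℝ) := by
          exact_mod_cast hQpos γ.1 γ.2
        have hcard : Pg.card ≤ γ.1.length - L α γ.1 := by
          refine le_trans Finset.card_image_le ?_
          rw [Nat.card_Icc]; omega
        calc (∑ β ∈ Pg, wfun Z α t0 γ.1 β)
            ≤ ∑ _β ∈ Pg, ENNReal.ofReal (((γ.1.length - L α γ.1 : ℕ) : ℝ)⁻¹ ^ 2) := by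
              apply Finset.sum_le_sum
              intro β _
              unfold wfun
              split
              · exact le_rfl
              · exact zero_le
          _ = Pg.card • ENNReal.ofReal (((γ.1.length - L α γ.1 : ℕ) : ℝ)⁻¹ ^ 2) :=
              Finset.sum_const _
          _ ≤ (γ.1.length - L α γ.1) • ENNReal.ofReal (((γ.1.length - L α γ.1 : ℕ) : ℝ)⁻¹ ^ 2) := by
              rw [nsmul_eq_mul, nsmul_eq_mul]
              exact mul_le_mul_left (by exact_mod_cast hcard) _
          _ = ENNReal.ofReal (((γ.1.length - L α γ.1 : ℕ) : ℝ)
                * (((γ.1.length - L α γ.1 : ℕ) : ℝ)⁻¹ ^ 2)) := by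
              rw [nsmul_eq_mul, ← ENNReal.ofReal_natCast (γ.1.length - L α γ.1),
                ← ENNReal.ofReal_mul (by positivity)]
          _ = ENNReal.ofReal (((γ.1.length - L α γ.1 : ℕ) : ℝ)⁻¹) := by
              congr 1
              rw [pow_two, ← mul_assoc, mul_inv_cancel₀ hq.ne', one_mul]

end CapAux

set_option maxHeartbeats 2000000 in
theorem capCond_of_sep_and_weakSimple :
    ∀ c C : ℝ, 0 < c → 0 < C → ∃ C₂ : ℝ, 0 < C₂ ∧
      ∀ Z : Set Vtx, treeSep Z c → treeWeakSimple Z C → treeCapCond Z C₂ := by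
  classical
  intro c C hc hC
  set c' : ℝ := min c 1 with hc'def
  have hc'pos : 0 < c' := lt_min hc one_pos
  have hc'le1 : c' ≤ 1 := min_le_right _ _
  have hc'lec : c' ≤ c := min_le_left _ _
  refine ⟨(20 * C + 10) / c' ^ 2, by positivity, ?_⟩
  intro Z hsep hws α hαZ
  have hA1 : (1:ℝ) ≤ (tdepth α : ℝ) := by
    have h : 1 ≤ tdepth α := Nat.le_add_left 1 α.length
    exact_mod_cast h
  have hApos : (0:ℝ) < (tdepth α : ℝ) := lt_of_lt_of_le one_pos hA1
  by_cases hsmall : c' * (tdepth α : ℝ) ≤ 2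
  · -- trivial case: indicator function of {α}
    set f : Vtx → ℝ := fun β => if β = α then 1 else 0 with hfdef
    have hf : f α = 1 ∧ ∀ γ ∈ Z, γ ≠ α → f γ = 0 :=
      ⟨if_pos rfl, fun γ _ hγ => if_neg hγ⟩
    refine le_trans (iInf_le _ ⟨f, hf⟩) ?_
    have hsupp : ∀ β ∉ ({α, α ++ [false], α ++ [true]} : Finset Vtx),
        ENNReal.ofReal ((f β - f β.dropLast) ^ 2) = 0 := by
      intro β hβ
      simp only [Finset.mem_insert, Finset.mem_singleton] at hβ
      push_neg at hβ
      obtain ⟨h1, h2, h3⟩ := hβ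
      have hfβ : f β = 0 := if_neg h1
      have hfβ' : f β.dropLast = 0 := by
        apply if_neg
        intro h
        by_cases hβnil : β = []
        · subst hβnil
          rw [List.dropLast_nil] at h
          exact h1 h
        · have hrec := List.dropLast_append_getLast hβnil
          cases hb : β.getLast hβnil
          · exact h2 (by rw [← hrec, h, hb])
          · exact h3 (by rw [← hrec, h, hb])
      rw [hfβ, hfβ']; simp
    have hterm : ∀ β : Vtx,
        ENNReal.ofReal ((f β - f β.dropLast) ^ 2) ≤ ENNReal.ofReal 1 := by
      intro β
      apply ENNReal.ofReal_le_ofReal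
      have hval : ∀ x : Vtx, f x = 0 ∨ f x = 1 := by
        intro x
        rw [hfdef]
        by_cases hx : x = α
        · right; exact if_pos hx
        · left; exact if_neg hx
      rcases hval β with h | h <;> rcases hval β.dropLast with h' | h' <;>
        rw [h, h'] <;> norm_num
    have hcard : ({α, α ++ [false], α ++ [true]} : Finset Vtx).card ≤ 3 := by
      refine le_trans (Finset.card_insert_le _ _) ?_
      have h := Finset.card_insert_le (α ++ [false]) ({α ++ [true]} : Finset Vtx)
      simp only [Finset.card_singleton] at h
      omega
    calc treeEnergy f
        = ∑ β ∈ ({α, α ++ [false], α ++ [true]} : Finset Vtx),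
            ENNReal.ofReal ((f β - f β.dropLast) ^ 2) := tsum_eq_sum hsupp
      _ ≤ ∑ _β ∈ ({α, α ++ [false], α ++ [true]} : Finset Vtx), ENNReal.ofReal 1 :=
          Finset.sum_le_sum (fun β _ => hterm β)
      _ = ({α, α ++ [false], α ++ [true]} : Finset Vtx).card • ENNReal.ofReal 1 :=
          Finset.sum_const _
      _ ≤ 3 • ENNReal.ofReal 1 := by
          rw [nsmul_eq_mul, nsmul_eq_mul]
          exact mul_le_mul_left (by exact_mod_cast hcard) _
      _ = ENNReal.ofReal 3 := by
          rw [nsmul_eq_mul, ← ENNReal.ofReal_natCast 3,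
            ← ENNReal.ofReal_mul (by norm_num)]
          norm_num
      _ ≤ ENNReal.ofReal ((20 * C + 10) / c' ^ 2 / (tdepth α : ℝ)) := by
          apply ENNReal.ofReal_le_ofReal
          rw [div_div, le_div_iff₀ (by positivity)]
          have h1 : c' ^ 2 * (tdepth α : ℝ) ≤ 2 := by
            have he : c' ^ 2 * (tdepth α : ℝ) = c' * (c' * (tdepth α : ℝ)) := by ring
            rw [he]
            calc c' * (c' * (tdepth α : ℝ))
                ≤ 1 * (c' * (tdepth α : ℝ)) :=
                  mul_le_mul_of_nonneg_right hc'le1 (by positivity)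
              _ ≤ 1 * 2 := by
                  apply mul_le_mul_of_nonneg_left hsmall
                  norm_num
              _ = 2 := by norm_num
          nlinarith [hC.le]
  · -- main case
    push_neg at hsmall
    set n := α.length with hn
    have hAn : (tdepth α : ℝ) = (n : ℝ) + 1 := by
      rw [show tdepth α = n + 1 from rfl]; push_cast; ring
    have hA3 : (3:ℝ) ≤ (tdepth α : ℝ) := by
      have h2 : (2:ℝ) < (tdepth α : ℝ) := by nlinarith
      have h3 : 2 < tdepth α := by exact_mod_cast h2
      exact_mod_cast h3
    set B : ℕ := ⌈c' * (tdepth α : ℝ) / 2⌉₊ with hB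
    have hBr1 : c' * (tdepth α : ℝ) / 2 ≤ (B : ℝ) := Nat.le_ceil _
    have hBr2 : (B : ℝ) < c' * (tdepth α : ℝ) / 2 + 1 :=
      Nat.ceil_lt_add_one (by positivity)
    have hB1 : 1 ≤ B := by
      rw [hB]
      exact Nat.ceil_pos.mpr (by nlinarith)
    have hBpos : (0:ℝ) < (B : ℝ) := by exact_mod_cast hB1
    have hBn : B ≤ n := by
      have h2 : (B : ℝ) < ((n + 1 : ℕ) : ℝ) := by
        push_cast
        nlinarith
      have h3 : B < n + 1 := by exact_mod_cast h2
      omega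
    set t0 : ℕ := n + 1 - B with ht0
    have ht0r : (t0 : ℝ) = (n : ℝ) + 1 - (B : ℝ) := by
      rw [ht0]
      have : B ≤ n + 1 := by omega
      push_cast [this]
      ring
    have ht0n : t0 ≤ n := by omega
    have hanc : ∀ γ' ∈ Z, γ' <+: α → γ' ≠ α → γ'.length < t0 := by
      intro γ' hγ'Z hpre hne
      have hcA := hsep α hαZ γ' hγ'Z (fun e => hne e.symm)
      have hmeet : treeMeet α γ' = γ' := CapAux.treeMeet_of_prefix hpre
      have hlen : γ'.length ≤ n := hpre.length_le
      have hdist : (tdist α γ' : ℝ) = (n : ℝ) - (γ'.length : ℝ) := by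
        rw [tdist, hmeet, Nat.sub_self, Nat.add_zero, Nat.cast_sub hlen]
      have hle : c' * (tdepth α : ℝ) ≤ (n : ℝ) - (γ'.length : ℝ) := by
        calc c' * (tdepth α : ℝ) ≤ c * (tdepth α : ℝ) :=
              mul_le_mul_of_nonneg_right hc'lec hApos.le
          _ ≤ (tdist α γ' : ℝ) := hcA
          _ = _ := hdist
      have hγr : (γ'.length : ℝ) < (t0 : ℝ) := by
        rw [ht0r]
        nlinarith
      exact_mod_cast hγr
    -- the separation-based lower bounds on W2 gaps
    have hQr : ∀ γ ∈ CapAux.W2 Z α t0,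
        c' * (tdepth α : ℝ) / 2 ≤ ((γ.length - CapAux.L α γ : ℕ) : ℝ) := by
      intro γ hγ
      obtain ⟨hγZ, hγα, hLγ, -⟩ := hγ
      have hcA := hsep α hαZ γ hγZ (fun e => hγα e.symm)
      have hL1 : CapAux.L α γ ≤ n := CapAux.L_le_left α γ
      have hL2 : CapAux.L α γ ≤ γ.length := CapAux.L_le_right α γ
      have hLrfl : (treeMeet α γ).length = CapAux.L α γ := rfl
      have hdist : (tdist α γ : ℝ)
          = ((n : ℝ) - (CapAux.L α γ : ℝ)) + ((γ.length : ℝ) - (CapAux.L α γ : ℝ)) := by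
        rw [tdist, hLrfl, Nat.cast_add, Nat.cast_sub hL1, Nat.cast_sub hL2]
      have hcc : c' * (tdepth α : ℝ) ≤ (tdist α γ : ℝ) :=
        le_trans (mul_le_mul_of_nonneg_right hc'lec hApos.le) hcA
      rw [hdist] at hcc
      have hnL : (n : ℝ) - (CapAux.L α γ : ℝ) ≤ (B : ℝ) - 1 := by
        have hcast : (t0 : ℝ) ≤ (CapAux.L α γ : ℝ) := by exact_mod_cast hLγ
        rw [ht0r] at hcast
        linarith
      have hQeq : ((γ.length - CapAux.L α γ : ℕ) : ℝ)
          = (γ.length : ℝ) - (CapAux.L α γ : ℝ) := Nat.cast_sub hL2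
      rw [hQeq]
      linarith
    have hQpos : ∀ γ ∈ CapAux.W2 Z α t0, 0 < γ.length - CapAux.L α γ := by
      intro γ hγ
      have h0 := hQr γ hγ
      have h1 : (0:ℝ) < ((γ.length - CapAux.L α γ : ℕ) : ℝ) := by nlinarith
      exact_mod_cast h1
    have hQd : ∀ γ ∈ CapAux.W2 Z α t0,
        c' / 4 * (tdepth γ : ℝ) ≤ ((γ.length - CapAux.L α γ : ℕ) : ℝ) := by
      intro γ hγ
      have h0 := hQr γ hγ
      have hL1 : CapAux.L α γ ≤ n := CapAux.L_le_left α γ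
      have hL2 : CapAux.L α γ ≤ γ.length := CapAux.L_le_right α γ
      have hQQ : ((γ.length - CapAux.L α γ : ℕ) : ℝ)
          = (γ.length : ℝ) - (CapAux.L α γ : ℝ) := Nat.cast_sub hL2
      have hdγ : (tdepth γ : ℝ) = (γ.length : ℝ) + 1 := by
        rw [show tdepth γ = γ.length + 1 from rfl]; push_cast; ring
      by_cases hdeep : (tdepth γ : ℝ) ≤ 2 * (tdepth α : ℝ)
      · nlinarith [mul_le_mul_of_nonneg_left hdeep (by positivity : (0:ℝ) ≤ c' / 4)]
      · push_neg at hdeep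
        rw [hQQ]
        have h1 : (CapAux.L α γ : ℝ) ≤ (n : ℝ) := by exact_mod_cast hL1
        nlinarith [mul_nonneg (by linarith : (0:ℝ) ≤ 2 - c')
          (by positivity : (0:ℝ) ≤ (tdepth γ : ℝ))]
    -- the test function
    have hf : CapAux.ff Z α t0 B α = 1 ∧
        ∀ γ ∈ Z, γ ≠ α → CapAux.ff Z α t0 B γ = 0 := by
      constructor
      · exact CapAux.ff_self Z α t0 B
      · intro γ hγ hne
        have h1 := CapAux.DD_ge_one Z α t0 B hB1 hBn ht0 hanc hγ hne
        unfold CapAux.ff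
        exact max_eq_right (by linarith)
    refine le_trans (iInf_le _ ⟨CapAux.ff Z α t0 B, hf⟩) ?_
    -- energy estimate
    have hlip : ∀ β, ENNReal.ofReal
        ((CapAux.ff Z α t0 B β - CapAux.ff Z α t0 B β.dropLast) ^ 2)
        ≤ ENNReal.ofReal (CapAux.del Z α t0 B β ^ 2) := by
      intro β
      by_cases hβnil : β = []
      · subst hβnil
        rw [List.dropLast_nil, sub_self]
        simp
      · apply ENNReal.ofReal_le_ofReal
        have h := CapAux.abs_ff_sub Z α t0 B hβnil
        have h2 := abs_le.mp h
        exact sq_le_sq' h2.1 h2.2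
    have e1 : treeEnergy (CapAux.ff Z α t0 B)
        ≤ ∑' β : Vtx, ENNReal.ofReal (CapAux.del Z α t0 B β ^ 2) :=
      ENNReal.tsum_le_tsum hlip
    have e2 : ∀ β : Vtx, ENNReal.ofReal (CapAux.del Z α t0 B β ^ 2)
        = (if β ≠ [] ∧ β <+: α then ENNReal.ofReal (((B:ℝ)⁻¹) ^ 2) else 0)
          + (if ¬ (β <+: α) then ENNReal.ofReal ((CapAux.dside Z α t0 β) ^ 2) else 0) := by
      intro β
      by_cases hβnil : β = []
      · subst hβnil
        rw [if_neg (by simp), if_neg (not_not_intro List.nil_prefix)]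
        unfold CapAux.del
        rw [if_pos rfl]
        simp
      · by_cases hba : β <+: α
        · rw [if_pos ⟨hβnil, hba⟩, if_neg (not_not_intro hba), add_zero]
          unfold CapAux.del
          rw [if_neg hβnil, if_pos hba]
        · rw [if_neg (by tauto), if_pos hba, zero_add]
          unfold CapAux.del
          rw [if_neg hβnil, if_neg hba]
    have e2' : (∑' β : Vtx, ENNReal.ofReal (CapAux.del Z α t0 B β ^ 2))
        = (∑' β : Vtx, if β ≠ [] ∧ β <+: α then ENNReal.ofReal (((B:ℝ)⁻¹) ^ 2) else 0)
          + ∑' β : Vtx, (if ¬ (β <+: α) then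
              ENNReal.ofReal ((CapAux.dside Z α t0 β) ^ 2) else 0) := by
      rw [← ENNReal.tsum_add]
      exact tsum_congr e2
    have e3 : (∑' β : Vtx, if β ≠ [] ∧ β <+: α then ENNReal.ofReal (((B:ℝ)⁻¹) ^ 2) else 0)
        ≤ ENNReal.ofReal ((tdepth α : ℝ) * ((B:ℝ)⁻¹) ^ 2) := by
      have hsupp : ∀ β ∉ (Finset.range (n+1)).image (fun k => α.take k),
          (if β ≠ [] ∧ β <+: α then ENNReal.ofReal (((B:ℝ)⁻¹) ^ 2) else 0) = 0 := by
        intro β hβ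
        rw [if_neg]
        rintro ⟨h1, h2⟩
        exact hβ (Finset.mem_image.mpr ⟨β.length,
          Finset.mem_range.mpr (by have := h2.length_le; omega),
          (List.prefix_iff_eq_take.mp h2).symm⟩)
      rw [tsum_eq_sum hsupp]
      calc (∑ β ∈ (Finset.range (n+1)).image (fun k => α.take k),
            if β ≠ [] ∧ β <+: α then ENNReal.ofReal (((B:ℝ)⁻¹) ^ 2) else 0)
          ≤ ∑ _β ∈ (Finset.range (n+1)).image (fun k => α.take k),
              ENNReal.ofReal (((B:ℝ)⁻¹) ^ 2) := by
            apply Finset.sum_le_sum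
            intro β _
            split
            · exact le_rfl
            · exact zero_le
        _ = ((Finset.range (n+1)).image (fun k => α.take k)).card
              • ENNReal.ofReal (((B:ℝ)⁻¹) ^ 2) := Finset.sum_const _
        _ ≤ (n+1) • ENNReal.ofReal (((B:ℝ)⁻¹) ^ 2) := by
            rw [nsmul_eq_mul, nsmul_eq_mul]
            refine mul_le_mul_left ?_ _
            have hcard := Finset.card_image_le
              (s := Finset.range (n+1)) (f := fun k => α.take k)
            rw [Finset.card_range] at hcard
            exact_mod_cast hcard
        _ = ENNReal.ofReal ((tdepth α : ℝ) * ((B:ℝ)⁻¹) ^ 2) := by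
            rw [nsmul_eq_mul, ← ENNReal.ofReal_natCast (n+1),
              ← ENNReal.ofReal_mul (by positivity)]
            congr 1
    have e4 : (∑' β : Vtx, if ¬ (β <+: α) then
          ENNReal.ofReal ((CapAux.dside Z α t0 β) ^ 2) else 0)
        ≤ ENNReal.ofReal (4 / c')
          * ((∑' γ : (weakSet Z α), ((tdepth γ.1 : ℝ≥0∞))⁻¹)
            + ∑' γ : (weakSet Z (α.take t0)), ((tdepth γ.1 : ℝ≥0∞))⁻¹) := by
      refine le_trans (CapAux.side_energy_bound Z α t0 hQpos) ?_
      have e4d : ∀ γ : (CapAux.W2 Z α t0),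
          ENNReal.ofReal (((γ.1.length - CapAux.L α γ.1 : ℕ) : ℝ)⁻¹)
            ≤ ENNReal.ofReal (4 / c') * ((tdepth γ.1 : ℝ≥0∞))⁻¹ := by
        intro γ
        have hq := hQd γ.1 γ.2
        have hdpos : (0:ℝ) < (tdepth γ.1 : ℝ) := by
          have h : 1 ≤ tdepth γ.1 := Nat.le_add_left 1 _
          have : (1:ℝ) ≤ (tdepth γ.1 : ℝ) := by exact_mod_cast h
          linarith
        have h1 : (((γ.1.length - CapAux.L α γ.1 : ℕ)) : ℝ)⁻¹
            ≤ (4 / c') * ((tdepth γ.1 : ℝ))⁻¹ := by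
          have h2 : (0:ℝ) < c' / 4 * (tdepth γ.1 : ℝ) := by positivity
          have h3 := inv_anti₀ h2 hq
          calc (((γ.1.length - CapAux.L α γ.1 : ℕ)) : ℝ)⁻¹
              ≤ (c' / 4 * (tdepth γ.1 : ℝ))⁻¹ := h3
            _ = (4 / c') * ((tdepth γ.1 : ℝ))⁻¹ := by
                rw [mul_inv]
                congr 1
                rw [← one_div, one_div_div]
        calc ENNReal.ofReal (((γ.1.length - CapAux.L α γ.1 : ℕ) : ℝ)⁻¹)
            ≤ ENNReal.ofReal ((4 / c') * ((tdepth γ.1 : ℝ))⁻¹) :=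
              ENNReal.ofReal_le_ofReal h1
          _ = ENNReal.ofReal (4 / c') * ENNReal.ofReal (((tdepth γ.1 : ℝ))⁻¹) :=
              ENNReal.ofReal_mul (by positivity)
          _ = ENNReal.ofReal (4 / c') * ((tdepth γ.1 : ℝ≥0∞))⁻¹ := by
              rw [ENNReal.ofReal_inv_of_pos hdpos, ENNReal.ofReal_natCast]
      calc (∑' γ : (CapAux.W2 Z α t0),
            ENNReal.ofReal (((γ.1.length - CapAux.L α γ.1 : ℕ) : ℝ)⁻¹))
          ≤ ∑' γ : (CapAux.W2 Z α t0),
              ENNReal.ofReal (4 / c') * ((tdepth γ.1 : ℝ≥0∞))⁻¹ :=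
            ENNReal.tsum_le_tsum e4d
        _ = ENNReal.ofReal (4 / c')
            * ∑' γ : (CapAux.W2 Z α t0), ((tdepth γ.1 : ℝ≥0∞))⁻¹ :=
            ENNReal.tsum_mul_left
        _ ≤ _ := by
            refine mul_le_mul_right ?_ _
            have hsub := CapAux.W2_subset Z α t0 ht0n hanc
            have ht1 := tsum_subtype (CapAux.W2 Z α t0)
              (fun x : Vtx => ((tdepth x : ℝ≥0∞))⁻¹)
            have ht2 := tsum_subtype (weakSet Z α)
              (fun x : Vtx => ((tdepth x : ℝ≥0∞))⁻¹)
            have ht3 := tsum_subtype (weakSet Z (α.take t0))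
              (fun x : Vtx => ((tdepth x : ℝ≥0∞))⁻¹)
            rw [ht1, ht2, ht3, ← ENNReal.tsum_add]
            apply ENNReal.tsum_le_tsum
            intro x
            by_cases hx : x ∈ CapAux.W2 Z α t0
            · rw [Set.indicator_of_mem hx]
              rcases hsub hx with h | h
              · rw [Set.indicator_of_mem h]
                exact le_self_add
              · rw [Set.indicator_of_mem h]
                exact le_add_self
            · rw [Set.indicator_of_notMem hx]
              exact zero_le
    -- weak simple bounds
    have hws1 := hws α
    have hws2 := hws (α.take t0)
    have hd0 : (tdepth (α.take t0) : ℝ) = (t0 : ℝ) + 1 := by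
      have hlen : (α.take t0).length = t0 := by
        rw [List.length_take, min_eq_left ht0n]
      rw [show tdepth (α.take t0) = (α.take t0).length + 1 from rfl, hlen]
      push_cast
      ring
    -- real arithmetic
    have hxx : (tdepth α : ℝ) * ((B:ℝ)⁻¹) ^ 2 ≤ 4 / (c' ^ 2 * (tdepth α : ℝ)) := by
      have h1 : (B:ℝ)⁻¹ ≤ 2 / (c' * (tdepth α : ℝ)) := by
        have h2 := inv_anti₀ (by positivity : (0:ℝ) < c' * (tdepth α : ℝ) / 2) hBr1
        rwa [show (c' * (tdepth α : ℝ) / 2)⁻¹ = 2 / (c' * (tdepth α : ℝ)) from by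
          rw [← one_div, one_div_div]] at h2
      have h3 : ((B:ℝ)⁻¹) ^ 2 ≤ (2 / (c' * (tdepth α : ℝ))) ^ 2 :=
        pow_le_pow_left₀ (by positivity) h1 2
      calc (tdepth α : ℝ) * ((B:ℝ)⁻¹) ^ 2
          ≤ (tdepth α : ℝ) * (2 / (c' * (tdepth α : ℝ))) ^ 2 :=
            mul_le_mul_of_nonneg_left h3 hApos.le
        _ = 4 / (c' ^ 2 * (tdepth α : ℝ)) := by
            field_simp
            ring
    have hy2 : C / (tdepth (α.take t0) : ℝ) ≤ 2 * C / (tdepth α : ℝ) := by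
      rw [hd0]
      have hden : (tdepth α : ℝ) / 2 ≤ (t0 : ℝ) + 1 := by
        rw [ht0r, ← hAn]
        nlinarith [mul_nonneg (by linarith : (0:ℝ) ≤ 1 - c') hApos.le]
      calc C / ((t0:ℝ) + 1) ≤ C / ((tdepth α : ℝ) / 2) := by
            apply div_le_div_of_nonneg_left hC.le (by positivity) hden
        _ = 2 * C / (tdepth α : ℝ) := by
            rw [div_div_eq_mul_div]
            ring
    have hfinal : (tdepth α : ℝ) * ((B:ℝ)⁻¹) ^ 2
        + (4 / c') * (C / (tdepth α : ℝ) + C / (tdepth (α.take t0) : ℝ))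
        ≤ (20 * C + 10) / c' ^ 2 / (tdepth α : ℝ) := by
      have hstep : (4 / c') * (C / (tdepth α : ℝ) + C / (tdepth (α.take t0) : ℝ))
          ≤ (4 / c') * (C / (tdepth α : ℝ) + 2 * C / (tdepth α : ℝ)) := by
        apply mul_le_mul_of_nonneg_left _ (by positivity)
        linarith
      have hgoal : 4 / (c' ^ 2 * (tdepth α : ℝ))
          + (4 / c') * (C / (tdepth α : ℝ) + 2 * C / (tdepth α : ℝ))
          ≤ (20 * C + 10) / c' ^ 2 / (tdepth α : ℝ) := by
        have hEq : 4 / (c' ^ 2 * (tdepth α : ℝ))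
            + (4 / c') * (C / (tdepth α : ℝ) + 2 * C / (tdepth α : ℝ))
            = (4 + 12 * C * c') / (c' ^ 2 * (tdepth α : ℝ)) := by
          field_simp
          ring
        rw [hEq, div_div]
        rw [div_le_div_iff_of_pos_right (by positivity : (0:ℝ) < c' ^ 2 * (tdepth α : ℝ))]
        nlinarith [mul_nonneg hC.le (by linarith : (0:ℝ) ≤ 1 - c')]
      linarith
    -- final assembly
    calc treeEnergy (CapAux.ff Z α t0 B)
        ≤ ∑' β : Vtx, ENNReal.ofReal (CapAux.del Z α t0 B β ^ 2) := e1
      _ = _ + _ := e2'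
      _ ≤ ENNReal.ofReal ((tdepth α : ℝ) * ((B:ℝ)⁻¹) ^ 2)
          + (ENNReal.ofReal (4 / c')
            * ((∑' γ : (weakSet Z α), ((tdepth γ.1 : ℝ≥0∞))⁻¹)
              + ∑' γ : (weakSet Z (α.take t0)), ((tdepth γ.1 : ℝ≥0∞))⁻¹)) :=
          add_le_add e3 e4
      _ ≤ ENNReal.ofReal ((tdepth α : ℝ) * ((B:ℝ)⁻¹) ^ 2)
          + (ENNReal.ofReal (4 / c')
            * (ENNReal.ofReal (C / (tdepth α : ℝ))
              + ENNReal.ofReal (C / (tdepth (α.take t0) : ℝ)))) := by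
          refine add_le_add_right (mul_le_mul_right (add_le_add hws1 hws2) _) _
      _ = ENNReal.ofReal ((tdepth α : ℝ) * ((B:ℝ)⁻¹) ^ 2
          + (4 / c') * (C / (tdepth α : ℝ) + C / (tdepth (α.take t0) : ℝ))) := by
          rw [← ENNReal.ofReal_add (by positivity) (by positivity),
            ← ENNReal.ofReal_mul (by positivity),
            ← ENNReal.ofReal_add (by positivity) (by positivity)]
      _ ≤ ENNReal.ofReal ((20 * C + 10) / c' ^ 2 / (tdepth α : ℝ)) :=
          ENNReal.ofReal_le_ofReal hfinal

end
end

section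
/- Fix 0 < β < 1/36. Define φ_β(x) = 1/(1 + 1/(β + x)), γ₀ = 0, γ_{N+1} = φ_β(γ_N), and ψ_β(x) = β/2 + (1 − 3√β)x, δ₀ = 0, δ_n = ψ_β(δ_{n−1}). Then: (i) ψ_β(x) < φ_β(x) for all 0 ≤ x < √β; (ii) δ_N = (√β/6)(1 − (1 − 3√β)^N) for all N ≥ 0, and δ_N < γ_N for all N ≥ 1; (iii) there exists N₀ such that for every N ≥ N₀, taking β = 1/N, one has γ_N > δ_N > 1/(12√N). -/
/- Comparison of the continued-fraction iterates γ_N (for φ_β(x) = 1/(1+1/(β+x)))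
with the affine iterates δ_N (for ψ_β(x) = β/2 + (1-3√β)x), for 0 < β < 1/36;
and the lower bound γ_N > δ_N > 1/(12√N) for β = 1/N and N large. -/

lemma aux_key (β : ℝ) (hb : 0 < β) (hb' : β < 1/36) (x : ℝ) (hx : 0 ≤ x)
    (hxs : x < Real.sqrt β) :
    β / 2 + (1 - 3 * Real.sqrt β) * x < 1 / (1 + 1 / (β + x)) := by
  set s := Real.sqrt β with hsdef
  have hs0 : 0 < s := Real.sqrt_pos.mpr hb
  have hs2 : s ^ 2 = β := Real.sq_sqrt hb.le
  have hs6 : s < 1/6 := by nlinarith [hs0]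
  have ht : 0 < β + x := by linarith
  have h1 : 1 / (1 + 1 / (β + x)) = (β + x) / (1 + β + x) := by
    rw [div_eq_div_iff (by positivity) (by linarith)]
    field_simp; ring
  rw [h1, lt_div_iff₀ (by linarith)]
  nlinarith [mul_nonneg hx (sub_nonneg.mpr hxs.le), mul_nonneg hx hx,
    mul_nonneg (mul_nonneg hx hx) hs0.le, mul_pos hs0 hs0, sq_nonneg (s - x),
    mul_nonneg (mul_nonneg hx hs0.le) hs0.le]

lemma aux_mono (β a b : ℝ) (hb : 0 < β) (ha : 0 ≤ a) (hab : a ≤ b) :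
    1 / (1 + 1 / (β + a)) ≤ 1 / (1 + 1 / (β + b)) := by
  have ha' : 0 < β + a := by linarith
  have hb' : 0 < β + b := by linarith
  have e : ∀ t : ℝ, 0 < t → 1 / (1 + 1 / t) = t / (1 + t) := by
    intro t ht
    rw [div_eq_div_iff (by positivity) (by linarith)]
    field_simp; ring
  rw [e _ ha', e _ hb', div_le_div_iff₀ (by linarith) (by linarith)]
  nlinarith

theorem affine_minorant_of_continued_fraction
    (G D : ℝ → ℕ → ℝ)
    (hG0 : ∀ b : ℝ, G b 0 = 0)
    (hGrec : ∀ b : ℝ, ∀ N : ℕ, G b (N + 1) = 1 / (1 + 1 / (b + G b N)))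
    (hD0 : ∀ b : ℝ, D b 0 = 0)
    (hDrec : ∀ b : ℝ, ∀ N : ℕ, D b (N + 1) = b / 2 + (1 - 3 * Real.sqrt b) * D b N) :
    (∀ β : ℝ, 0 < β → β < 1 / 36 →
      (∀ x : ℝ, 0 ≤ x → x < Real.sqrt β →
        β / 2 + (1 - 3 * Real.sqrt β) * x < 1 / (1 + 1 / (β + x))) ∧
      (∀ N : ℕ, D β N = (Real.sqrt β / 6) * (1 - (1 - 3 * Real.sqrt β) ^ N)) ∧
      (∀ N : ℕ, 1 ≤ N → D β N < G β N)) ∧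
    (∃ N₀ : ℕ, ∀ N : ℕ, N₀ ≤ N →
      D (1 / (N : ℝ)) N < G (1 / (N : ℝ)) N ∧
      1 / (12 * Real.sqrt (N : ℝ)) < D (1 / (N : ℝ)) N) := by
  -- closed formula for D
  have hform : ∀ β : ℝ, 0 < β →
      ∀ N : ℕ, D β N = (Real.sqrt β / 6) * (1 - (1 - 3 * Real.sqrt β) ^ N) := by
    intro β hb N
    have hs2 : Real.sqrt β ^ 2 = β := Real.sq_sqrt hb.le
    induction N with
    | zero => simp [hD0]
    | succ n ih =>
      rw [hDrec, ih, pow_succ]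
      linear_combination (-1/2 : ℝ) * hs2
  -- bounds on D: 0 ≤ D β N < √β
  have hDbounds : ∀ β : ℝ, 0 < β → β < 1/36 → ∀ N : ℕ,
      0 ≤ D β N ∧ D β N < Real.sqrt β := by
    intro β hb hb' N
    set s := Real.sqrt β with hsdef
    have hs0 : 0 < s := Real.sqrt_pos.mpr hb
    have hs2 : s ^ 2 = β := Real.sq_sqrt hb.le
    have hs6 : s < 1/6 := by nlinarith [hs0]
    have hr0 : (0:ℝ) < 1 - 3 * s := by linarith
    have hr1 : 1 - 3 * s < 1 := by linarith
    have hpow0 : 0 < (1 - 3 * s) ^ N := pow_pos hr0 N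
    have hpow1 : (1 - 3 * s) ^ N ≤ 1 := pow_le_one₀ hr0.le hr1.le
    rw [hform β hb N]
    constructor
    · have : 0 ≤ 1 - (1 - 3 * s) ^ N := by linarith
      positivity
    · nlinarith [hpow0, hs0]
  -- nonnegativity of G
  have hGnn : ∀ β : ℝ, 0 < β → ∀ N : ℕ, 0 ≤ G β N := by
    intro β hb N
    induction N with
    | zero => simp [hG0]
    | succ n ih =>
      rw [hGrec]
      have h1 : 0 < β + G β n := by linarith
      positivity
  -- D ≤ G, strictly for N ≥ 1
  have hDG : ∀ β : ℝ, 0 < β → β < 1/36 → ∀ N : ℕ,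
      D β N ≤ G β N ∧ (1 ≤ N → D β N < G β N) := by
    intro β hb hb' N
    induction N with
    | zero => simp [hG0, hD0]
    | succ n ih =>
      have h1 : D β (n+1) < G β (n+1) := by
        rw [hDrec, hGrec]
        calc β / 2 + (1 - 3 * Real.sqrt β) * D β n
            < 1 / (1 + 1 / (β + D β n)) :=
              aux_key β hb hb' _ (hDbounds β hb hb' n).1 (hDbounds β hb hb' n).2
          _ ≤ 1 / (1 + 1 / (β + G β n)) :=
              aux_mono β _ _ hb (hDbounds β hb hb' n).1 ih.1
      exact ⟨h1.le, fun _ => h1⟩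
  constructor
  · intro β hb hb'
    exact ⟨fun x hx hxs => aux_key β hb hb' x hx hxs, hform β hb,
      fun N hN => (hDG β hb hb' N).2 hN⟩
  · refine ⟨37, fun N hN => ?_⟩
    have hN' : (37:ℝ) ≤ (N:ℝ) := by exact_mod_cast hN
    have hNpos : (0:ℝ) < N := by linarith
    have hb : 0 < 1 / (N:ℝ) := by positivity
    have hb' : 1 / (N:ℝ) < 1/36 := by
      rw [div_lt_div_iff₀ hNpos (by norm_num)]; linarith
    refine ⟨(hDG _ hb hb' N).2 (by omega), ?_⟩
    -- lower bound
    have hsqN : 0 < Real.sqrt N := Real.sqrt_pos.mpr hNpos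
    have hsqN2 : Real.sqrt N ^ 2 = N := Real.sq_sqrt hNpos.le
    have hs : Real.sqrt (1 / (N:ℝ)) = 1 / Real.sqrt N := by
      rw [one_div, one_div, Real.sqrt_inv]
    set s := 1 / Real.sqrt N with hsd
    have hs0 : 0 < s := by positivity
    have hs6 : s < 1/6 := by
      rw [hsd, div_lt_div_iff₀ hsqN (by norm_num)]
      nlinarith [hsqN2, hsqN]
    set r := 1 - 3 * s with hrd
    have hr0 : 0 < r := by rw [hrd]; linarith
    have hr1 : r < 1 := by rw [hrd]; linarith
    -- Bernoulli: (1/r)^N ≥ 1 + N*(1-r)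
    have hbern : 1 + (N:ℝ) * ((1 - r)/r) ≤ (1/r) ^ N := by
      have := one_add_mul_le_pow (a := (1-r)/r) (le_trans (by norm_num) (div_nonneg (by linarith) hr0.le) : (-2:ℝ) ≤ (1-r)/r) N
      have he : (1:ℝ) + (1-r)/r = 1/r := by field_simp; ring
      rw [he] at this
      linarith [this]
    have hkey : r ^ N ≤ 1 / (1 + (N:ℝ) * (1 - r)) := by
      have h2 : 1 + (N:ℝ) * (1 - r) ≤ (1/r)^N := by
        refine le_trans ?_ hbern
        have : (1 - r) ≤ (1 - r)/r := by
          rw [le_div_iff₀ hr0]; nlinarith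
        nlinarith [hNpos]
      rw [div_pow, one_pow] at h2
      have hrN : 0 < r ^ N := pow_pos hr0 N
      rw [le_div_iff₀ (by nlinarith : (0:ℝ) < 1 + (N:ℝ)*(1-r))]
      calc r ^ N * (1 + (N:ℝ)*(1-r)) ≤ r ^ N * (1 / r^N) := by
            apply mul_le_mul_of_nonneg_left h2 hrN.le
        _ = 1 := by field_simp
    have hNr : (N:ℝ) * (1 - r) = 3 * Real.sqrt N := by
      rw [hrd, hsd]
      field_simp
      nlinarith [hsqN2]
    have hrNhalf : r ^ N < 1/2 := by
      rw [hNr] at hkey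
      have : 1 / (1 + 3 * Real.sqrt N) < 1/2 := by
        rw [div_lt_div_iff₀ (by positivity) (by norm_num)]
        nlinarith [hsqN, hN']
      linarith
    rw [hform _ hb N, hs, ← hrd]
    have : 1/2 < 1 - r ^ N := by linarith
    calc 1 / (12 * Real.sqrt N) = (1 / Real.sqrt N) / 6 * (1/2) := by
          field_simp; ring
      _ < (1 / Real.sqrt N) / 6 * (1 - r ^ N) := by
          apply mul_lt_mul_of_pos_left this (by positivity)
end

section
/- (The weak simple condition is not necessary for the tree capacity condition.) There is an absolute constant C₀ > 0 such that for every M > 0 there exists a finite subset Z of the dyadic tree T satisfying: (i) the tree separation condition with constant 1/3; (ii) the tree capacity condition with constant C₀; and (iii) the tree weak simple condition fails with constant M, i.e., there exists α ∈ T such that ∑_β 1/d(β) > M/d(α), where the sum runs over those β ∈ Z with β ≥ α such that no γ ∈ Z satisfies α < γ < β. -/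
/- The weak simple condition is not necessary for the tree capacity condition:
there is an absolute C₀ > 0 so that for every M > 0 some finite Z ⊆ T is
1/3-separated, satisfies the tree capacity condition with constant C₀, and fails
the tree weak simple condition with constant M. -/

noncomputable section

open scoped ENNReal

lemma treeMeet_prefix_left : ∀ a b : Vtx, treeMeet a b <+: a
  | [], _ => by simp [treeMeet]
  | _ :: _, [] => by simp [treeMeet]
  | a :: as, b :: bs => by
    by_cases h : a = b
    · subst h
      have e : treeMeet (a :: as) (a :: bs) = a :: treeMeet as bs := by simp [treeMeet]
      rw [e]
      exact List.cons_prefix_cons.2 ⟨rfl, treeMeet_prefix_left as bs⟩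
    · simp [treeMeet, h]

lemma treeMeet_prefix_right : ∀ a b : Vtx, treeMeet a b <+: b
  | [], _ => by simp [treeMeet]
  | _ :: _, [] => by simp [treeMeet]
  | a :: as, b :: bs => by
    by_cases h : a = b
    · subst h
      have e : treeMeet (a :: as) (a :: bs) = a :: treeMeet as bs := by simp [treeMeet]
      rw [e]
      exact List.cons_prefix_cons.2 ⟨rfl, treeMeet_prefix_right as bs⟩
    · simp [treeMeet, h]

lemma prefix_treeMeet : ∀ a b c : Vtx, c <+: a → c <+: b → c <+: treeMeet a b
  | _, _, [] , _, _ => List.nil_prefix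
  | [], _, c :: cs, h, _ => by simp at h
  | _ :: _, [], _ :: _, _, h => by simp at h
  | a :: as, b :: bs, c :: cs, h1, h2 => by
    obtain ⟨t1, ht1⟩ := h1
    obtain ⟨t2, ht2⟩ := h2
    simp only [List.cons_append] at ht1 ht2
    obtain ⟨rfl, h1'⟩ : c = a ∧ cs ++ t1 = as := by constructor <;> injection ht1
    obtain ⟨rfl, h2'⟩ : c = b ∧ cs ++ t2 = bs := by constructor <;> injection ht2
    have e : treeMeet (c :: as) (c :: bs) = c :: treeMeet as bs := by simp [treeMeet]
    rw [e]
    exact List.cons_prefix_cons.2 ⟨rfl, prefix_treeMeet as bs cs ⟨t1, h1'⟩ ⟨t2, h2'⟩⟩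

lemma treeMeet_eq_left {a b : Vtx} (h : a <+: b) : treeMeet a b = a :=
  (treeMeet_prefix_left a b).eq_of_length <|
    le_antisymm ((treeMeet_prefix_left a b).length_le)
      ((prefix_treeMeet a b a List.prefix_rfl h).length_le)

lemma prefix_dropLast' {a b : Vtx} (h : a <+: b) (hne : a ≠ b) : a <+: b.dropLast := by
  have hlt : a.length < b.length :=
    lt_of_le_of_ne h.length_le (fun e => hne (h.eq_of_length e))
  rw [List.dropLast_eq_take]
  exact List.prefix_take_iff.2 ⟨h, by omega⟩

lemma treeMeet_dropLast {β α : Vtx} (h : ¬ β <+: α) :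
    treeMeet β.dropLast α = treeMeet β α := by
  have h1 : treeMeet β α ≠ β := fun e => h (e ▸ treeMeet_prefix_right β α)
  have h2 : treeMeet β α <+: β.dropLast :=
    prefix_dropLast' (treeMeet_prefix_left β α) h1
  have hA : treeMeet β.dropLast α <+: treeMeet β α :=
    prefix_treeMeet β α _ ((treeMeet_prefix_left _ _).trans (List.dropLast_prefix β))
      (treeMeet_prefix_right _ _)
  have hB : treeMeet β α <+: treeMeet β.dropLast α :=
    prefix_treeMeet _ _ _ h2 (treeMeet_prefix_right β α)
  exact (hB.eq_of_length (le_antisymm hB.length_le hA.length_le)).symm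

lemma prefix_take_eq {p z : Vtx} (h : p <+: z) {m : ℕ} (hm : m ≤ p.length) :
    p.take m = z.take m := by
  obtain ⟨t, rfl⟩ := h
  exact (List.take_append_of_le_length hm).symm

lemma sq_le_two_pow' {n : ℕ} (hn : 4 ≤ n) : n ^ 2 ≤ 2 ^ n := by
  induction n, hn using Nat.le_induction with
  | base => norm_num
  | succ n hn ih =>
    have h1 : 2 * n + 1 ≤ n ^ 2 := by nlinarith
    calc (n + 1) ^ 2 = n ^ 2 + (2 * n + 1) := by ring
      _ ≤ 2 ^ n + 2 ^ n := by omega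
      _ = 2 ^ (n + 1) := by ring

theorem weakSimple_not_necessary :
    ∃ C₀ : ℝ, 0 < C₀ ∧ ∀ M : ℝ, 0 < M →
      ∃ Z : Set Vtx, Z.Finite ∧ treeSep Z (1 / 3) ∧ treeCapCond Z C₀ ∧
        ∃ α : Vtx, ENNReal.ofReal (M / (tdepth α : ℝ)) <
          ∑' β : weakSet Z α, ((tdepth β.1 : ℝ≥0∞))⁻¹ := by
  refine ⟨4, by norm_num, fun M hM => ?_⟩
  -- choose the scale m
  set m : ℕ := max 4 (⌊2 * M⌋₊ + 1) with hmdef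
  have hm4 : 4 ≤ m := le_max_left _ _
  have hm0 : 0 < m := by omega
  have hmR : (0:ℝ) < m := by exact_mod_cast hm0
  have hmM : 2 * M < m := by
    have h1 : 2 * M < (⌊2 * M⌋₊ + 1 : ℝ) := Nat.lt_floor_add_one _
    have h2 : ((⌊2 * M⌋₊ + 1 : ℕ) : ℝ) ≤ (m : ℝ) := by
      exact_mod_cast Nat.cast_le.2 (le_max_right 4 (⌊2 * M⌋₊ + 1))
    push_cast at h2
    linarith
  -- the point set
  set pad : Vtx := List.replicate (m - 1) false with hpad
  set emb : (Fin m → Bool) → Vtx := fun g => List.ofFn g ++ pad with hemb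
  set Zf : Finset Vtx := Finset.univ.image emb with hZf
  have hembinj : Function.Injective emb := by
    intro g h e
    apply List.ofFn_injective
    have t1 : (emb g).take m = List.ofFn g := by
      rw [hemb]
      simpa using List.take_append_of_le_length (by simp)
    have t2 : (emb h).take m = List.ofFn h := by
      rw [hemb]
      simpa using List.take_append_of_le_length (by simp)
    rw [← t1, ← t2, e]
  have hlen : ∀ z ∈ Zf, z.length = 2 * m - 1 := by
    intro z hz
    obtain ⟨g, -, rfl⟩ := Finset.mem_image.1 hz
    simp [hemb, hpad]
    omega
  have hdepth : ∀ z ∈ Zf, tdepth z = 2 * m := by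
    intro z hz
    rw [tdepth, hlen z hz]
    omega
  -- meets of distinct points are short
  have hmeet : ∀ z ∈ Zf, ∀ w ∈ Zf, z ≠ w → (treeMeet z w).length < m := by
    intro z hz w hw hne
    by_contra hge
    push_neg at hge
    obtain ⟨g, -, rfl⟩ := Finset.mem_image.1 hz
    obtain ⟨h, -, rfl⟩ := Finset.mem_image.1 hw
    apply hne
    have t1 : (treeMeet (emb g) (emb h)).take m = (emb g).take m :=
      prefix_take_eq (treeMeet_prefix_left _ _) hge
    have t2 : (treeMeet (emb g) (emb h)).take m = (emb h).take m :=
      prefix_take_eq (treeMeet_prefix_right _ _) hge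
    have e1 : (emb g).take m = List.ofFn g := by
      rw [hemb]; simpa using List.take_append_of_le_length (by simp)
    have e2 : (emb h).take m = List.ofFn h := by
      rw [hemb]; simpa using List.take_append_of_le_length (by simp)
    have : List.ofFn g = List.ofFn h := by rw [← e1, ← e2, ← t1, ← t2]
    rw [List.ofFn_injective this]
  refine ⟨↑Zf, Zf.finite_toSet, ?_, ?_, ?_⟩
  · -- separation
    intro z hz w hw hne
    have hz' : z ∈ Zf := hz
    have hw' : w ∈ Zf := hw
    have h1 := hmeet z hz' w hw' hne
    have h2 := hlen z hz'
    have h3 := hlen w hw'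
    have h4 : 2 * m ≤ tdist z w := by
      rw [tdist, h2, h3]
      omega
    have h5 : tdepth z = 2 * m := hdepth z hz'
    rw [h5]
    have : ((2 * m : ℕ) : ℝ) ≤ (tdist z w : ℝ) := by exact_mod_cast h4
    push_cast at this ⊢
    linarith
  · -- capacity
    intro α hα
    have hα' : α ∈ Zf := hα
    have hαlen : α.length = 2 * m - 1 := hlen α hα'
    have hαd : tdepth α = 2 * m := hdepth α hα'
    set f : Vtx → ℝ := fun β => (((treeMeet β α).length + 1 - m : ℕ) : ℝ) / m with hf
    have hf1 : f α = 1 := by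
      rw [hf]
      simp only
      rw [treeMeet_eq_left List.prefix_rfl, hαlen]
      have : 2 * m - 1 + 1 - m = m := by omega
      rw [this]
      field_simp
    have hf0 : ∀ γ ∈ (↑Zf : Set Vtx), γ ≠ α → f γ = 0 := by
      intro γ hγ hne
      have : (treeMeet γ α).length < m := hmeet γ hγ α hα' hne
      rw [hf]
      simp only
      have : (treeMeet γ α).length + 1 - m = 0 := by omega
      rw [this]
      simp
    refine le_trans (iInf_le _ ⟨f, hf1, hf0⟩) ?_
    -- energy bound
    set F : Finset Vtx := (Finset.range (2 * m)).image (α.take ·) with hF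
    have hvanish : ∀ β ∉ F, ENNReal.ofReal ((f β - f β.dropLast) ^ 2) = 0 := by
      intro β hβ
      have hnp : ¬ β <+: α := by
        intro hp
        apply hβ
        rw [hF]
        refine Finset.mem_image.2 ⟨β.length, Finset.mem_range.2 ?_, ?_⟩
        · have := hp.length_le
          omega
        · exact (List.prefix_iff_eq_take.1 hp).symm
      have : f β = f β.dropLast := by
        rw [hf]
        simp only
        rw [treeMeet_dropLast hnp]
      rw [this]
      simp
    have hterm : ∀ β ∈ F, ENNReal.ofReal ((f β - f β.dropLast) ^ 2) ≤
        ENNReal.ofReal ((1 / m : ℝ) ^ 2) := by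
      intro β hβ
      obtain ⟨k, -, rfl⟩ := Finset.mem_image.1 hβ
      have hp : α.take k <+: α := List.take_prefix k α
      have hp' : (α.take k).dropLast <+: α := (List.dropLast_prefix _).trans hp
      have e1 : f (α.take k) = (((α.take k).length + 1 - m : ℕ) : ℝ) / m := by
        rw [hf]; simp only [treeMeet_eq_left hp]
      have e2 : f ((α.take k).dropLast) =
          ((((α.take k).length - 1) + 1 - m : ℕ) : ℝ) / m := by
        rw [hf]; simp only [treeMeet_eq_left hp', List.length_dropLast]
      set l := (α.take k).length
      have hnat1 : (l - 1) + 1 - m ≤ l + 1 - m := by omega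
      have hnat2 : l + 1 - m ≤ ((l - 1) + 1 - m) + 1 := by omega
      apply ENNReal.ofReal_le_ofReal
      rw [e1, e2, div_sub_div_same]
      have hb1 : (0:ℝ) ≤ ((l + 1 - m : ℕ) : ℝ) - (((l - 1) + 1 - m : ℕ) : ℝ) := by
        have : (((l - 1) + 1 - m : ℕ) : ℝ) ≤ ((l + 1 - m : ℕ) : ℝ) := by
          exact_mod_cast hnat1
        linarith
      have hb2 : ((l + 1 - m : ℕ) : ℝ) - (((l - 1) + 1 - m : ℕ) : ℝ) ≤ 1 := by
        have : ((l + 1 - m : ℕ) : ℝ) ≤ (((l - 1) + 1 - m : ℕ) : ℝ) + 1 := by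
          exact_mod_cast hnat2
        linarith
      have hd1 : (0:ℝ) ≤ (((l + 1 - m : ℕ) : ℝ) - (((l - 1) + 1 - m : ℕ) : ℝ)) / m := by
        positivity
      have hd2 : (((l + 1 - m : ℕ) : ℝ) - (((l - 1) + 1 - m : ℕ) : ℝ)) / m ≤ 1 / m :=
        (div_le_div_iff_of_pos_right hmR).2 hb2
      nlinarith [hd1, hd2]
    show treeEnergy f ≤ ENNReal.ofReal (4 / (tdepth α : ℝ))
    calc treeEnergy f = ∑ β ∈ F, ENNReal.ofReal ((f β - f β.dropLast) ^ 2) :=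
          tsum_eq_sum hvanish
      _ ≤ ∑ _β ∈ F, ENNReal.ofReal ((1 / m : ℝ) ^ 2) := Finset.sum_le_sum hterm
      _ = (F.card : ℝ≥0∞) * ENNReal.ofReal ((1 / m : ℝ) ^ 2) := by
          rw [Finset.sum_const, nsmul_eq_mul]
      _ ≤ ((2 * m : ℕ) : ℝ≥0∞) * ENNReal.ofReal ((1 / m : ℝ) ^ 2) := by
          gcongr
          exact_mod_cast (Finset.card_image_le.trans (by simp [hF]))
      _ = ENNReal.ofReal (((2 * m : ℕ) : ℝ) * (1 / m : ℝ) ^ 2) := by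
          rw [ENNReal.ofReal_mul (by positivity), ENNReal.ofReal_natCast]
      _ = ENNReal.ofReal (4 / (tdepth α : ℝ)) := by
          rw [hαd]
          congr 1
          push_cast
          field_simp
          ring
  · -- weak simple fails at the root
    refine ⟨[], ?_⟩
    have hws : weakSet (↑Zf) [] = (↑Zf : Set Vtx) := by
      ext β
      constructor
      · exact fun h => h.1
      · intro hβ
        refine ⟨hβ, List.nil_prefix, ?_⟩
        rintro ⟨γ, hγ, ⟨-, -⟩, hpre, hne⟩
        exact hne (hpre.eq_of_length (by rw [hlen γ hγ, hlen β hβ]))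
    have hsum : ∑' β : weakSet (↑Zf) [], ((tdepth β.1 : ℝ≥0∞))⁻¹ =
        ∑ β ∈ Zf, ((tdepth β : ℝ≥0∞))⁻¹ :=
      (tsum_subtype (weakSet (↑Zf) []) (fun v : Vtx => ((tdepth v : ℝ≥0∞))⁻¹)).trans
        (by rw [hws]
            exact (tsum_subtype ((↑Zf : Set Vtx))
              (fun v : Vtx => ((tdepth v : ℝ≥0∞))⁻¹)).symm.trans
              (Finset.tsum_subtype Zf (fun v : Vtx => ((tdepth v : ℝ≥0∞))⁻¹)))
    rw [hsum]
    have hconst : ∑ β ∈ Zf, ((tdepth β : ℝ≥0∞))⁻¹ =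
        (Zf.card : ℝ≥0∞) * (((2 * m : ℕ) : ℝ≥0∞))⁻¹ := by
      rw [Finset.sum_congr rfl (fun β hβ => by rw [hdepth β hβ]),
        Finset.sum_const, nsmul_eq_mul]
    rw [hconst]
    have hcard : Zf.card = 2 ^ m := by
      rw [hZf, Finset.card_image_of_injective _ hembinj, Finset.card_univ]
      simp [Fintype.card_fun]
    rw [hcard]
    have hrhs : ((2 ^ m : ℕ) : ℝ≥0∞) * (((2 * m : ℕ) : ℝ≥0∞))⁻¹ =
        ENNReal.ofReal ((2 ^ m : ℕ) / ((2 * m : ℕ) : ℝ)) := by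
      rw [ENNReal.ofReal_div_of_pos (by positivity), div_eq_mul_inv,
        ENNReal.ofReal_natCast, ENNReal.ofReal_natCast]
    rw [hrhs]
    have hreal : M / (tdepth ([] : Vtx) : ℝ) < ((2 ^ m : ℕ) : ℝ) / ((2 * m : ℕ) : ℝ) := by
      have ht : (tdepth ([] : Vtx) : ℝ) = 1 := by simp [tdepth]
      rw [ht, div_one, lt_div_iff₀ (by positivity)]
      have hsq : ((m : ℝ)) ^ 2 ≤ ((2 ^ m : ℕ) : ℝ) := by
        exact_mod_cast sq_le_two_pow' hm4
      push_cast at hsq ⊢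
      nlinarith [mul_lt_mul_of_pos_right hmM hmR, hsq]
    rw [ENNReal.ofReal_lt_ofReal_iff (by positivity)]
    exact hreal


end
end

section
/- There exists an infinite subset Z of the dyadic tree T that satisfies the tree separation condition (for some constant c > 0) and the tree weak simple condition (for some constant C > 0), is an onto interpolating sequence for B₂(T), and yet has infinite associated mass: ∑_{z∈Z} 1/d(z) = ∞. In particular, an onto interpolating sequence need not have finite associated measure. -/
/- An onto interpolating sequence for B₂(T) with infinite associated measure:
there is an infinite Z ⊆ T which is tree separated, satisfies the tree weak simple
condition, is onto interpolating for B₂(T), and has ∑_{z∈Z} 1/d(z) = ∞. -/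

noncomputable section

open scoped ENNReal

namespace IM

lemma treeMeet_nil_right : ∀ a : Vtx, treeMeet a [] = []
  | [] => rfl
  | _ :: _ => rfl

lemma treeMeet_comm : ∀ a b : Vtx, treeMeet a b = treeMeet b a
  | [], b => by cases b <;> rfl
  | a :: as, [] => rfl
  | a :: as, b :: bs => by
    by_cases h : a = b
    · subst h; simp [treeMeet, treeMeet_comm as bs]
    · simp [treeMeet, h, Ne.symm h]

lemma treeMeet_prefix_left : ∀ a b : Vtx, treeMeet a b <+: a
  | [], b => by cases b <;> exact List.nil_prefix
  | a :: as, [] => List.nil_prefix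
  | a :: as, b :: bs => by
    by_cases h : a = b
    · subst h
      have hm : treeMeet (a :: as) (a :: bs) = a :: treeMeet as bs := by simp [treeMeet]
      rw [hm]
      exact List.cons_prefix_cons.2 ⟨rfl, treeMeet_prefix_left as bs⟩
    · simp [treeMeet, h, List.nil_prefix]

lemma treeMeet_prefix_right (a b : Vtx) : treeMeet a b <+: b := by
  rw [treeMeet_comm]; exact treeMeet_prefix_left b a

lemma prefix_treeMeet : ∀ {c a b : Vtx}, c <+: a → c <+: b → c <+: treeMeet a b
  | [], _, _, _, _ => List.nil_prefix
  | c :: cs, a :: as, b :: bs, ha, hb => by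
    obtain ⟨rfl, ha'⟩ := List.cons_prefix_cons.1 ha
    obtain ⟨rfl, hb'⟩ := List.cons_prefix_cons.1 hb
    have hm : treeMeet (c :: as) (c :: bs) = c :: treeMeet as bs := by simp [treeMeet]
    rw [hm]
    exact List.cons_prefix_cons.2 ⟨rfl, prefix_treeMeet ha' hb'⟩

lemma treeMeet_eq_left {a b : Vtx} (h : a <+: b) : treeMeet a b = a :=
  (treeMeet_prefix_left a b).eq_of_length
    (le_antisymm ((treeMeet_prefix_left a b).length_le)
      (prefix_treeMeet (List.prefix_refl a) h).length_le)

lemma treeMeet_append : ∀ (c x y : Vtx), treeMeet (c ++ x) (c ++ y) = c ++ treeMeet x y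
  | [], x, y => rfl
  | c :: cs, x, y => by simp [treeMeet, treeMeet_append cs x y]

lemma treeMeet_cons_ne {b b' : Bool} (h : b ≠ b') (x y : Vtx) :
    treeMeet (b :: x) (b' :: y) = [] := by simp [treeMeet, h]

/-- meet is stable under passing to a prefix containing it. -/
lemma treeMeet_prefix_stable {β p e : Vtx} (hp : p <+: β) (h : treeMeet β e <+: p) :
    treeMeet p e = treeMeet β e := by
  refine (((prefix_treeMeet h (treeMeet_prefix_right β e))).eq_of_length
    (le_antisymm (prefix_treeMeet h (treeMeet_prefix_right β e)).length_le
      (prefix_treeMeet ((treeMeet_prefix_left p e).trans hp)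
        (treeMeet_prefix_right p e)).length_le)).symm

lemma prefix_trichotomy : ∀ a b : List Bool, a <+: b ∨ b <+: a ∨
    ∃ (c : List Bool) (d d' : Bool) (a' b' : List Bool), d ≠ d' ∧ a = c ++ d :: a' ∧ b = c ++ d' :: b'
  | [], b => Or.inl (List.nil_prefix)
  | a :: as, [] => Or.inr (Or.inl (List.nil_prefix))
  | a :: as, b :: bs => by
    by_cases h : a = b
    · subst h
      rcases prefix_trichotomy as bs with h | h | ⟨c, d, d', a', b', hd, rfl, rfl⟩
      · exact Or.inl (List.cons_prefix_cons.2 ⟨rfl, h⟩)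
      · exact Or.inr (Or.inl (List.cons_prefix_cons.2 ⟨rfl, h⟩))
      · exact Or.inr (Or.inr ⟨a :: c, d, d', a', b', hd, rfl, rfl⟩)
    · exact Or.inr (Or.inr ⟨[], a, b, as, bs, h, rfl, rfl⟩)

lemma suffix_trichotomy (r s : List Bool) : r <:+ s ∨ s <:+ r ∨
    ∃ (u : List Bool) (b b' : Bool), b ≠ b' ∧ (b :: u) <:+ r ∧ (b' :: u) <:+ s := by
  rcases prefix_trichotomy r.reverse s.reverse with h | h | ⟨c, d, d', a', b', hd, ha, hb⟩
  · exact Or.inl (List.reverse_prefix.1 (by simpa using h))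
  · exact Or.inr (Or.inl (List.reverse_prefix.1 (by simpa using h)))
  · refine Or.inr (Or.inr ⟨c.reverse, d, d', hd, ⟨a'.reverse, ?_⟩, ⟨b'.reverse, ?_⟩⟩)
    · have := congrArg List.reverse ha
      simpa [List.reverse_append] using this.symm
    · have := congrArg List.reverse hb
      simpa [List.reverse_append] using this.symm

end IM

def tau : List Bool → Vtx
  | [] => []
  | b :: t => tau t ++ b :: List.replicate ((tau t).length + 1) false

lemma tau_length : ∀ r : List Bool, (tau r).length = 2 ^ (r.length + 1) - 2
  | [] => rfl
  | b :: t => by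
    have ih := tau_length t
    have h2 : (2:ℕ) ≤ 2 ^ (t.length + 1) := by
      have := Nat.one_lt_two_pow (n := t.length + 1) (by omega)
      omega
    simp only [tau, List.length_append, List.length_cons, List.length_replicate, ih,
      List.length_cons, pow_succ]
    omega

lemma length_le_tau_length (r : List Bool) : r.length ≤ (tau r).length := by
  have h := Nat.lt_two_pow_self (n := r.length + 1)
  rw [tau_length]
  omega

lemma tau_cons (b : Bool) (t : List Bool) :
    tau (b :: t) = tau t ++ b :: List.replicate ((tau t).length + 1) false := rfl

lemma tau_prefix_of_suffix : ∀ {r : List Bool} {t : List Bool}, t <:+ r → tau t <+: tau r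
  | [], t, h => by rw [List.suffix_nil.1 h]
  | b :: r', t, h => by
    rcases List.suffix_cons_iff.1 h with rfl | h
    · exact List.prefix_refl _
    · exact (tau_prefix_of_suffix h).trans ⟨_, (tau_cons b r').symm⟩

lemma tau_meet_diverge {u r s : List Bool} {b b' : Bool} (hb : b ≠ b')
    (hr : (b :: u) <:+ r) (hs : (b' :: u) <:+ s) :
    treeMeet (tau r) (tau s) = tau u := by
  obtain ⟨x, hx⟩ := tau_prefix_of_suffix hr
  obtain ⟨y, hy⟩ := tau_prefix_of_suffix hs
  rw [← hx, ← hy, tau_cons, tau_cons, List.append_assoc, List.append_assoc,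
    List.cons_append, List.cons_append, IM.treeMeet_append,
    IM.treeMeet_cons_ne hb, List.append_nil]

lemma tau_length_lt {u r : List Bool} (h : u.length < r.length) :
    (tau u).length < (tau r).length := by
  rw [tau_length, tau_length]
  have h1 : 2 ^ (u.length + 1) < 2 ^ (r.length + 1) :=
    Nat.pow_lt_pow_right (by omega) (by omega)
  have h2 : (2:ℕ) ≤ 2 ^ (u.length + 1) := by
    have := Nat.one_lt_two_pow (n := u.length + 1) (by omega); omega
  omega

lemma tau_prefix_iff {r s : List Bool} : tau r <+: tau s ↔ r <:+ s := by
  constructor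
  · intro h
    rcases IM.suffix_trichotomy r s with h1 | h1 | ⟨u, b, b', hb, hr, hs⟩
    · exact h1
    · have hl : r.length = s.length := by
        have := h.length_le
        have := (tau_prefix_of_suffix h1).length_le
        have e1 := tau_length r; have e2 := tau_length s
        have h2r : (2:ℕ) ≤ 2 ^ (r.length + 1) := by
          have := Nat.one_lt_two_pow (n := r.length + 1) (by omega); omega
        have h2s : (2:ℕ) ≤ 2 ^ (s.length + 1) := by
          have := Nat.one_lt_two_pow (n := s.length + 1) (by omega); omega
        have : 2 ^ (r.length + 1) = 2 ^ (s.length + 1) := by omega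
        have := Nat.pow_right_injective (le_refl 2) this
        omega
      rw [List.IsSuffix.eq_of_length h1 hl.symm]
    · exfalso
      have hm : treeMeet (tau r) (tau s) = tau u := tau_meet_diverge hb hr hs
      have : tau r <+: tau u := by
        rw [← hm]; exact IM.prefix_treeMeet (List.prefix_refl _) h
      have hu : u.length < r.length := by
        have := hr.length_le; simp at this; omega
      exact absurd this.length_le (by simpa using (tau_length_lt hu).not_ge)
  · exact tau_prefix_of_suffix

lemma tau_inj : Function.Injective tau := by
  intro r s h
  have h1 : r <:+ s := tau_prefix_iff.1 (h ▸ List.prefix_refl _)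
  have h2 : s <:+ r := tau_prefix_iff.1 (h ▸ List.prefix_refl _)
  exact List.IsSuffix.eq_of_length h1 (le_antisymm h1.length_le h2.length_le)

lemma exists_addr (β : Vtx) : ∃ r, tau r <+: β ∧ ∀ s, tau s <+: β → s <:+ r := by
  classical
  set P : ℕ → Prop := fun n => ∃ r : List Bool, r.length = n ∧ tau r <+: β with hP
  have hP0 : P 0 := ⟨[], rfl, List.nil_prefix⟩
  have hbound : ∀ s : List Bool, tau s <+: β → s.length ≤ β.length := fun s hs =>
    le_trans (length_le_tau_length s) hs.length_le
  have hspec : P (Nat.findGreatest P β.length) :=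
    Nat.findGreatest_spec (Nat.zero_le _) hP0
  obtain ⟨r, hrlen, hrpre⟩ := hspec
  refine ⟨r, hrpre, fun s hs => ?_⟩
  have hsle : s.length ≤ Nat.findGreatest P β.length :=
    Nat.le_findGreatest (hbound s hs) ⟨s, rfl, hs⟩
  have : tau s <+: tau r := by
    apply List.prefix_of_prefix_length_le hs hrpre
    rcases Nat.eq_or_lt_of_le (hsle.trans_eq hrlen.symm) with h | h
    · exact le_of_eq (by rw [tau_length, tau_length, h])
    · exact (tau_length_lt h).le
  exact tau_prefix_iff.1 this

def addr (β : Vtx) : List Bool := (exists_addr β).choose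

lemma addr_prefix (β : Vtx) : tau (addr β) <+: β := (exists_addr β).choose_spec.1

lemma addr_max {β : Vtx} {s : List Bool} (h : tau s <+: β) : s <:+ addr β :=
  (exists_addr β).choose_spec.2 s h

lemma addr_tau (r : List Bool) : addr (tau r) = r := by
  have h1 : r <:+ addr (tau r) := addr_max (List.prefix_refl _)
  have h2 : addr (tau r) <:+ r := tau_prefix_iff.1 (addr_prefix (tau r))
  exact List.IsSuffix.eq_of_length h2 (le_antisymm h2.length_le h1.length_le)

lemma getD_of_prefix {p β : Vtx} (h : p <+: β) {n : ℕ} (hn : n < p.length) :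
    β.getD n false = p.getD n false := by
  rw [List.getD_eq_getElem _ _ (hn.trans_le h.length_le), List.getD_eq_getElem _ _ hn]
  exact (h.getElem hn).symm

lemma getD_append_cons (l : Vtx) (b : Bool) (t : Vtx) :
    (l ++ b :: t).getD l.length false = b := by
  rw [List.getD_eq_getElem _ _ (by simp)]
  rw [List.getElem_append_right (le_refl _)]
  simp

def interp (ξ : Vtx → ℂ) (β : Vtx) : ℂ :=
  ξ (tau (addr β)) +
    (((treeMeet β (tau (β.getD (tau (addr β)).length false :: addr β))).length
        - (tau (addr β)).length : ℕ) : ℂ) / (((tau (addr β)).length : ℂ) + 2) *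
      (ξ (tau (β.getD (tau (addr β)).length false :: addr β)) - ξ (tau (addr β)))

lemma interp_tau (ξ : Vtx → ℂ) (r : List Bool) : interp ξ (tau r) = ξ (tau r) := by
  have hm : ∀ b : Bool, treeMeet (tau r) (tau (b :: r)) = tau r := fun b =>
    IM.treeMeet_eq_left (tau_prefix_of_suffix (List.suffix_cons _ _))
  simp [interp, addr_tau, hm]

lemma addr_dropLast {β : Vtx} (h : (tau (addr β)).length < β.length) :
    addr β.dropLast = addr β := by
  have hp : β.dropLast <+: β := List.dropLast_prefix β
  have hlen : β.dropLast.length = β.length - 1 := List.length_dropLast (xs := β)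
  have h1 : tau (addr β) <+: β.dropLast :=
    List.prefix_of_prefix_length_le (addr_prefix β) hp (by omega)
  have h2 : addr β <:+ addr β.dropLast := addr_max h1
  have h3 : addr β.dropLast <:+ addr β := addr_max ((addr_prefix _).trans hp)
  exact List.IsSuffix.eq_of_length h3 (le_antisymm h3.length_le h2.length_le)

lemma natC_add_two_ne {L : ℕ} : ((L : ℂ) + 2) ≠ 0 := by
  have h : ((L : ℂ) + 2) = ((L + 2 : ℕ) : ℂ) := by push_cast; ring
  rw [h]
  exact Nat.cast_ne_zero.2 (by omega)

/-- Off the skeleton, `interp` has zero increment. -/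
lemma interp_eq_dropLast (ξ : Vtx → ℂ) {β : Vtx} (hβ : β ≠ [])
    (hsk : ¬ ∃ rr, β <+: tau rr) : interp ξ β = interp ξ β.dropLast := by
  set a := addr β with ha
  set L := (tau a).length with hL
  have hane : tau a ≠ β := fun h => hsk ⟨a, h ▸ List.prefix_refl _⟩
  have hLlt : L < β.length := by
    rcases Nat.lt_or_ge L β.length with h | h
    · exact h
    · exact absurd ((addr_prefix β).eq_of_length
        (le_antisymm (addr_prefix β).length_le h)) hane
  have hLlt' : L < β.dropLast.length := by
    rcases Nat.lt_or_ge L β.dropLast.length with h | h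
    · exact h
    · exfalso
      have hlen : β.dropLast.length = β.length - 1 := List.length_dropLast (xs := β)
      obtain ⟨x, hx⟩ := addr_prefix β
      rw [← ha] at hx
      have hxlen : x.length = 1 := by
        have h10 := congrArg List.length hx
        simp only [List.length_append] at h10
        omega
      obtain ⟨c, rfl⟩ := List.length_eq_one_iff.1 hxlen
      refine hsk ⟨c :: a, ⟨List.replicate (L + 1) false, ?_⟩⟩
      rw [← hx, tau_cons, ← hL]
      simp
  set c := β.getD L false with hc
  set e := tau (c :: a) with he
  have haddr : addr β.dropLast = a := addr_dropLast hLlt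
  have hbit : β.dropLast.getD L false = c :=
    (getD_of_prefix (List.dropLast_prefix β) hLlt').symm
  have hmeetne : treeMeet β e ≠ β := by
    intro h
    exact hsk ⟨c :: a, h ▸ IM.treeMeet_prefix_right β e⟩
  have hmle : (treeMeet β e).length ≤ β.dropLast.length := by
    have h1 : (treeMeet β e).length ≤ β.length := (IM.treeMeet_prefix_left β e).length_le
    have h2 : (treeMeet β e).length ≠ β.length := fun h =>
      hmeetne ((IM.treeMeet_prefix_left β e).eq_of_length h)
    have := List.length_dropLast (xs := β)
    omega
  have hmeet : treeMeet β.dropLast e = treeMeet β e :=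
    IM.treeMeet_prefix_stable (List.dropLast_prefix β)
      (List.prefix_of_prefix_length_le (IM.treeMeet_prefix_left β e)
        (List.dropLast_prefix β) hmle)
  simp only [interp]
  rw [haddr, ← ha, ← hL, hbit, ← hc, ← he, hmeet]

/-- On the skeleton, the increment of `interp` is the edge increment. -/
lemma interp_sub_dropLast (ξ : Vtx → ℂ) {β : Vtx} (hβ : β ≠ []) {rr : List Bool}
    (hsk : β <+: tau rr) :
    ∃ r : List Bool, r ≠ [] ∧ β <+: tau r ∧
      interp ξ β - interp ξ β.dropLast
        = (((tau r.tail).length : ℂ) + 2)⁻¹ * (ξ (tau r) - ξ (tau r.tail)) := by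
  by_cases hnode : tau (addr β) = β
  · -- node case : β = tau (b :: a)
    obtain ⟨b, a, hba⟩ : ∃ (b : Bool) (t : List Bool), addr β = b :: t := by
      cases h' : addr β with
      | nil =>
          exfalso; rw [h'] at hnode
          exact hβ hnode.symm
      | cons b t => exact ⟨b, t, rfl⟩
    have hnode' : tau (b :: a) = β := by rw [← hba]; exact hnode
    set L := (tau a).length with hL
    have hβeq : β = (tau a ++ b :: List.replicate L false) ++ [false] := by
      rw [← hnode', tau_cons, ← hL, List.replicate_succ']
      simp
    have hp : β.dropLast = tau a ++ b :: List.replicate L false := by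
      rw [hβeq, List.dropLast_concat]
    have hplen : β.dropLast.length = 2 * L + 1 := by
      rw [hp]
      simp only [List.length_append, List.length_cons, List.length_replicate, ← hL]
      omega
    have haddrp : addr β.dropLast = a := by
      have h1 : tau a <+: β.dropLast := hp ▸ List.prefix_append _ _
      have h2 : a <:+ addr β.dropLast := addr_max h1
      have h3 : addr β.dropLast <:+ b :: a := by
        rw [← hba]
        exact addr_max ((addr_prefix _).trans (List.dropLast_prefix β))
      rcases List.suffix_cons_iff.1 h3 with h4 | h4
      · exfalso
        have h5 : tau (b :: a) <+: β.dropLast := h4 ▸ addr_prefix _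
        have h6 := h5.length_le
        have h7 : (tau (b :: a)).length = 2 * L + 2 := by
          rw [tau_cons]
          simp only [List.length_append, List.length_cons, List.length_replicate, ← hL]
          omega
        omega
      · exact List.IsSuffix.eq_of_length h4
          (le_antisymm h4.length_le h2.length_le)
    have hbitp : β.dropLast.getD L false = b := by
      rw [hp, hL]; exact getD_append_cons _ _ _
    have hmeetp : treeMeet β.dropLast (tau (b :: a)) = β.dropLast :=
      IM.treeMeet_eq_left (hnode' ▸ List.dropLast_prefix β)
    have harg : ((β.dropLast.length - L : ℕ) : ℂ) = (L : ℂ) + 1 := by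
      rw [hplen]
      have h8 : 2 * L + 1 - L = L + 1 := by omega
      rw [h8]; push_cast; ring
    have hinterp_p : interp ξ β.dropLast
        = ξ (tau a) + (((L : ℂ) + 1) / ((L : ℂ) + 2)) * (ξ (tau (b :: a)) - ξ (tau a)) := by
      simp only [interp]
      rw [haddrp, ← hL, hbitp, hmeetp, harg]
    have hinterp_β : interp ξ β = ξ (tau (b :: a)) := by
      rw [← hnode']; exact interp_tau ξ (b :: a)
    refine ⟨b :: a, by simp, by rw [hnode'], ?_⟩
    rw [hinterp_β, hinterp_p]
    simp only [List.tail_cons, ← hL]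
    have hL2 : ((L : ℂ) + 2) ≠ 0 := natC_add_two_ne
    field_simp
    ring
  · -- interior case
    set a' := addr β with ha'
    set L := (tau a').length with hL
    have hLlt : L < β.length := by
      rcases Nat.lt_or_ge L β.length with h | h
      · exact h
      · exact absurd ((addr_prefix β).eq_of_length
          (le_antisymm (addr_prefix β).length_le h)) hnode
    have hsuf : a' <:+ rr := tau_prefix_iff.1 ((addr_prefix β).trans hsk)
    have hne' : a' ≠ rr := by
      rintro h
      rw [← h] at hsk
      exact hnode ((addr_prefix β).eq_of_length
        (le_antisymm (addr_prefix β).length_le hsk.length_le))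
    obtain ⟨w, hw⟩ := hsuf
    have hwne : w ≠ [] := by rintro rfl; exact hne' (by simpa using hw)
    obtain ⟨w', c, rfl⟩ := w.eq_nil_or_concat.resolve_left hwne
    have hcsuf : (c :: a') <:+ rr := ⟨w', by rw [← hw]; simp⟩
    have hctau : tau (c :: a') <+: tau rr := tau_prefix_of_suffix hcsuf
    have hβpre : β <+: tau (c :: a') := by
      apply List.prefix_of_prefix_length_le hsk hctau
      by_contra hcon
      push_neg at hcon
      have h1 : tau (c :: a') <+: β :=
        List.prefix_of_prefix_length_le hctau hsk hcon.le
      have h2 : (c :: a') <:+ a' := addr_max h1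
      have h3 := h2.length_le
      simp at h3
    have hcbit : β.getD L false = c := by
      have h1 : (tau (c :: a')).getD L false = c := by
        rw [tau_cons, ← hL]; exact getD_append_cons _ _ _
      rw [← h1]
      exact getD_of_prefix hβpre hLlt |>.symm
    have hmeetβ : treeMeet β (tau (c :: a')) = β := IM.treeMeet_eq_left hβpre
    have haddrp : addr β.dropLast = a' := addr_dropLast hLlt
    have hplen : β.dropLast.length = β.length - 1 := List.length_dropLast (xs := β)
    have hL2 : ((L : ℂ) + 2) ≠ 0 := natC_add_two_ne
    refine ⟨c :: a', by simp, hβpre, ?_⟩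
    rcases Nat.lt_or_ge L β.dropLast.length with hcase | hcase
    · -- predecessor still past the branch bit
      have hbitp : β.dropLast.getD L false = c := by
        rw [← hcbit]
        exact (getD_of_prefix (List.dropLast_prefix β) hcase).symm
      have hmeetp : treeMeet β.dropLast (tau (c :: a')) = β.dropLast :=
        IM.treeMeet_eq_left ((List.dropLast_prefix β).trans hβpre)
      simp only [interp]
      rw [haddrp, ← ha', ← hL, hbitp, hcbit, hmeetβ, hmeetp]
      simp only [List.tail_cons, ← hL]
      have e1 : ((β.length - L : ℕ) : ℂ) = (β.length : ℂ) - (L : ℂ) := by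
        rw [Nat.cast_sub hLlt.le]
      have e2 : ((β.dropLast.length - L : ℕ) : ℂ)
          = (β.length : ℂ) - 1 - (L : ℂ) := by
        have h9 : β.dropLast.length - L = β.length - 1 - L := by omega
        rw [h9, Nat.cast_sub (by omega), Nat.cast_sub (by
          have := List.length_pos_iff.2 hβ
          omega)]
        push_cast
        ring
      rw [e1, e2]
      field_simp
      ring
    · -- predecessor is exactly the branch node tau a'
      have hpeq : β.dropLast = tau a' := by
        have h1 : tau a' <+: β.dropLast :=
          List.prefix_of_prefix_length_le (addr_prefix β) (List.dropLast_prefix β)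
            (by omega)
        exact ((h1.eq_of_length (le_antisymm h1.length_le (by omega)))).symm
      have hβlen : β.length = L + 1 := by omega
      have hip : interp ξ β.dropLast = ξ (tau a') := by rw [hpeq, interp_tau]
      rw [hip]
      simp only [interp]
      rw [← ha', ← hL, hcbit, hmeetβ]
      have e1 : ((β.length - L : ℕ) : ℂ) = 1 := by
        rw [hβlen]; simp
      rw [e1]
      simp only [List.tail_cons, ← hL]
      field_simp
      ring

lemma norm_step (L : ℕ) (d : ℂ) :
    ‖(((L : ℂ) + 2))⁻¹ * d‖ ^ 2 = ‖d‖ ^ 2 / ((L : ℝ) + 2) ^ 2 := by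
  rw [norm_mul, norm_inv]
  have h : ‖((L : ℂ) + 2)‖ = (L : ℝ) + 2 := by
    have h2 : ((L : ℂ) + 2) = (((L : ℝ) + 2 : ℝ) : ℂ) := by push_cast; ring
    rw [h2, Complex.norm_real, Real.norm_eq_abs]
    exact abs_of_nonneg (by positivity)
  rw [h]
  field_simp

lemma delta_struct (ξ : Vtx → ℂ) (β : Vtx) : ∃ r : List Bool,
    interp ξ β - interp ξ β.dropLast = 0 ∨
    (r ≠ [] ∧ β ≠ [] ∧ β <+: tau r ∧
      interp ξ β - interp ξ β.dropLast
        = (((tau r.tail).length : ℂ) + 2)⁻¹ * (ξ (tau r) - ξ (tau r.tail))) := by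
  by_cases hβ : β = []
  · subst hβ; exact ⟨[], Or.inl (by simp)⟩
  by_cases hsk : ∃ rr, β <+: tau rr
  · obtain ⟨rr, hrr⟩ := hsk
    obtain ⟨r, h1, h2, h3⟩ := interp_sub_dropLast ξ hβ hrr
    exact ⟨r, Or.inr ⟨h1, hβ, h2, h3⟩⟩
  · exact ⟨[], Or.inl (sub_eq_zero.2 (interp_eq_dropLast ξ hβ hsk))⟩

lemma two_le_two_pow (n : ℕ) : (2:ℕ) ≤ 2 ^ (n + 1) := by
  have := Nat.one_lt_two_pow (n := n + 1) (by omega); omega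

lemma tdepth_tau (r : List Bool) : tdepth (tau r) = 2 ^ (r.length + 1) - 1 := by
  have h2 := two_le_two_pow r.length
  rw [tdepth, tau_length]
  omega

lemma summable_aux {ξ : Vtx → ℂ}
    (hξ : Summable (fun r : List Bool => ‖ξ (tau r)‖ ^ 2 / (tdepth (tau r) : ℝ)))
    (c : ℝ) (hc : 0 ≤ c) :
    Summable (fun r : List Bool => c * ‖ξ (tau r)‖ ^ 2 / 2 ^ r.length) := by
  apply Summable.of_nonneg_of_le (fun r => by positivity)
    (f := fun r => (4 * c) * (‖ξ (tau r)‖ ^ 2 / (tdepth (tau r) : ℝ)))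
  · intro r
    have hdep : ((tdepth (tau r) : ℕ) : ℝ) = 2 ^ (r.length + 1) - 1 := by
      rw [tdepth_tau]
      push_cast [Nat.cast_sub (by have := two_le_two_pow r.length; omega :
        1 ≤ 2 ^ (r.length + 1))]
      ring
    have h1 : (1:ℝ) ≤ 2 ^ r.length := one_le_pow₀ (by norm_num)
    have hpow : (2:ℝ) ^ (r.length + 1) = 2 ^ r.length * 2 := pow_succ 2 r.length
    have hpos : (0:ℝ) < 2 ^ (r.length + 1) - 1 := by nlinarith
    set s := ‖ξ (tau r)‖ ^ 2 with hs
    have hsnn : 0 ≤ s := sq_nonneg _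
    rw [hdep, ← mul_div_assoc, div_le_div_iff₀ (by positivity) hpos]
    nlinarith [mul_nonneg hc hsnn]
  · exact hξ.mul_left _

lemma tsum_ofReal_ne_top {f : List Bool → ℝ} (hf : ∀ r, 0 ≤ f r) (hs : Summable f) :
    (∑' r : List Bool, ENNReal.ofReal (f r)) ≠ ⊤ := by
  rw [← ENNReal.ofReal_tsum_of_nonneg hf hs]
  exact ENNReal.ofReal_ne_top

lemma memB2T_interp (ξ : Vtx → ℂ)
    (hξ : Summable (fun r : List Bool => ‖ξ (tau r)‖ ^ 2 / (tdepth (tau r) : ℝ))) :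
    Summable (fun β : Vtx => ‖interp ξ β - interp ξ β.dropLast‖ ^ 2) := by
  classical
  choose edge hedge using delta_struct ξ
  set Δ : Vtx → ℂ := fun β => interp ξ β - interp ξ β.dropLast with hΔ
  set F : Vtx → ℝ≥0∞ := fun β => ENNReal.ofReal (‖Δ β‖ ^ 2) with hF
  set g : List Bool × ℕ → ℝ≥0∞ := fun q =>
    if q.1 ≠ [] ∧ 0 < q.2 ∧ q.2 ≤ (tau q.1).length then
      ENNReal.ofReal (‖ξ (tau q.1) - ξ (tau q.1.tail)‖ ^ 2
        / (((tau q.1.tail).length : ℝ) + 2) ^ 2)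
    else 0 with hg
  set cond : Vtx → Prop := fun β => edge β ≠ [] ∧ β ≠ [] ∧ β <+: tau (edge β) with hcond
  set ψ : Vtx → List Bool × ℕ := fun β =>
    if cond β then (edge β, β.length) else (β, 0) with hψ
  have hψval : ∀ β, (cond β → ψ β = (edge β, β.length)) ∧ (¬ cond β → ψ β = (β, 0)) := by
    intro β
    constructor <;> intro hcb <;> simp only [hψ] <;>
      first | exact if_pos hcb | exact if_neg hcb
  have hψinj : Function.Injective ψ := by
    intro β₁ β₂ h
    by_cases c1 : cond β₁ <;> by_cases c2 : cond β₂
    · rw [(hψval β₁).1 c1, (hψval β₂).1 c2] at h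
      have he := congrArg Prod.fst h
      have hl := congrArg Prod.snd h
      simp only at he hl
      have h1 : β₁ <+: tau (edge β₁) := c1.2.2
      have h2 : β₂ <+: tau (edge β₁) := he ▸ c2.2.2
      exact (List.prefix_of_prefix_length_le h1 h2 hl.le).eq_of_length hl
    · rw [(hψval β₁).1 c1, (hψval β₂).2 c2] at h
      have hl := congrArg Prod.snd h
      simp only at hl
      exact absurd (List.length_eq_zero_iff.1 hl) c1.2.1
    · rw [(hψval β₁).2 c1, (hψval β₂).1 c2] at h
      have hl := congrArg Prod.snd h
      simp only at hl
      exact absurd (List.length_eq_zero_iff.1 hl.symm) c2.2.1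
    · rw [(hψval β₁).2 c1, (hψval β₂).2 c2] at h
      have he := congrArg Prod.fst h
      simpa using he
  have hFg : ∀ β, F β ≤ g (ψ β) := by
    intro β
    rcases hedge β with h0 | ⟨h1, h2, h3, h4⟩
    · have : F β = 0 := by simp only [hF, hΔ, h0]; simp
      rw [this]; exact zero_le
    · have hc : cond β := ⟨h1, h2, h3⟩
      rw [(hψval β).1 hc]
      have hgcond : (edge β ≠ [] ∧ 0 < β.length ∧ β.length ≤ (tau (edge β)).length) :=
        ⟨h1, List.length_pos_iff.2 h2, h3.length_le⟩
      have e1 : F β = ENNReal.ofReal (‖ξ (tau (edge β)) - ξ (tau (edge β).tail)‖ ^ 2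
          / (((tau (edge β).tail).length : ℝ) + 2) ^ 2) := by
        simp only [hF, hΔ]
        rw [h4, norm_step]
      have e2 : g (edge β, β.length) = ENNReal.ofReal
          (‖ξ (tau (edge β)) - ξ (tau (edge β).tail)‖ ^ 2
          / (((tau (edge β).tail).length : ℝ) + 2) ^ 2) := by
        simp only [hg]
        rw [if_pos hgcond]
      exact le_of_eq (e1.trans e2.symm)
  have hprod : (∑' q : List Bool × ℕ, g q) = ∑' r : List Bool, ∑' n : ℕ, g (r, n) := by
    rw [← ENNReal.tsum_prod (f := fun r n => g (r, n))]
  set H1 : List Bool → ℝ≥0∞ := fun r =>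
    ENNReal.ofReal (4 * ‖ξ (tau r)‖ ^ 2 / 2 ^ r.length) with hH1
  set H2 : List Bool → ℝ≥0∞ := fun r =>
    ENNReal.ofReal (4 * ‖ξ (tau r.tail)‖ ^ 2 / 2 ^ r.length) with hH2
  have inner_bound : ∀ r : List Bool, (∑' n : ℕ, g (r, n)) ≤ H1 r + H2 r := by
    intro r
    cases r with
    | nil =>
        have hz : ∀ n : ℕ, g (([] : List Bool), n) = 0 := by
          intro n; simp [hg]
        simp [hz]
    | cons b a =>
        set M := (tau (b :: a)).length with hM
        set x := ‖ξ (tau (b :: a))‖ with hx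
        set y := ‖ξ (tau a)‖ with hy
        set d := ‖ξ (tau (b :: a)) - ξ (tau a)‖ with hd
        set cR := ENNReal.ofReal (d ^ 2 / (((tau a).length : ℝ) + 2) ^ 2) with hcR
        have hval : ∀ n : ℕ, g ((b :: a), n) = if 0 < n ∧ n ≤ M then cR else 0 := by
          intro n
          by_cases hn : 0 < n ∧ n ≤ M
          · rw [if_pos hn]
            simp only [hg, hcR, hd, List.tail_cons, ← hM]
            rw [if_pos ⟨by simp, hn⟩]
          · rw [if_neg hn]
            simp only [hg, List.tail_cons, ← hM]
            rw [if_neg (by tauto)]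
        have htsum : (∑' n : ℕ, g ((b :: a), n)) = M • cR := by
          rw [tsum_congr hval, tsum_eq_sum (s := Finset.Icc 1 M) (fun n hn => by
            rw [if_neg]; simp only [Finset.mem_Icc, not_and, not_le] at hn; omega)]
          rw [Finset.sum_congr rfl (fun n hn => by
            rw [if_pos]; simp only [Finset.mem_Icc] at hn; omega)]
          rw [Finset.sum_const, Nat.card_Icc]
          norm_num
        rw [htsum]
        -- now the numeric bound
        have hE : ((tau a).length : ℝ) + 2 = 2 ^ (a.length + 1) := by
          rw [tau_length]
          push_cast [Nat.cast_sub (by have := two_le_two_pow a.length; omega :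
            2 ≤ 2 ^ (a.length + 1))]
          ring
        have hMle : (M : ℝ) ≤ 2 * 2 ^ (a.length + 1) := by
          have hMn : M = 2 ^ (a.length + 2) - 2 := by
            rw [hM, tau_length, List.length_cons]
          have h2 : (2:ℕ) ≤ 2 ^ (a.length + 2) := two_le_two_pow (a.length + 1)
          rw [hMn]
          push_cast [Nat.cast_sub (by omega : 2 ≤ 2 ^ (a.length + 2))]
          rw [show a.length + 2 = (a.length + 1) + 1 from rfl, pow_succ]
          nlinarith [pow_pos (by norm_num : (0:ℝ) < 2) (a.length + 1)]
        have hPpos : (0:ℝ) < 2 ^ (a.length + 1) := by positivity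
        have hdle : d ^ 2 ≤ 2 * x ^ 2 + 2 * y ^ 2 := by
          have h5 : d ≤ x + y := norm_sub_le _ _
          have h6 : (0:ℝ) ≤ d := norm_nonneg _
          nlinarith [sq_nonneg (x - y)]
        have hreal : (M : ℝ) * (d ^ 2 / (((tau a).length : ℝ) + 2) ^ 2)
            ≤ 4 * x ^ 2 / 2 ^ (b :: a).length + 4 * y ^ 2 / 2 ^ (b :: a).length := by
          simp only [List.length_cons]
          rw [hE, ← mul_div_assoc, ← add_div,
            div_le_div_iff₀ (by positivity) hPpos]
          have hstep : (M:ℝ) * d ^ 2 ≤ 2 * 2 ^ (a.length + 1) * (2 * x ^ 2 + 2 * y ^ 2) :=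
            mul_le_mul hMle hdle (sq_nonneg d) (by positivity)
          calc (M:ℝ) * d ^ 2 * 2 ^ (a.length + 1)
              ≤ (2 * 2 ^ (a.length + 1) * (2 * x ^ 2 + 2 * y ^ 2)) * 2 ^ (a.length + 1) :=
                mul_le_mul_of_nonneg_right hstep hPpos.le
            _ = (4 * x ^ 2 + 4 * y ^ 2) * (2 ^ (a.length + 1)) ^ 2 := by ring
        calc M • cR = ENNReal.ofReal ((M : ℝ) *
              (d ^ 2 / (((tau a).length : ℝ) + 2) ^ 2)) := by
              rw [hcR, nsmul_eq_mul, ← ENNReal.ofReal_natCast M,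
                ← ENNReal.ofReal_mul (Nat.cast_nonneg M)]
          _ ≤ ENNReal.ofReal (4 * x ^ 2 / 2 ^ (b :: a).length
                + 4 * y ^ 2 / 2 ^ (b :: a).length) := ENNReal.ofReal_le_ofReal hreal
          _ = H1 (b :: a) + H2 (b :: a) := by
              rw [ENNReal.ofReal_add (by positivity) (by positivity)]
              simp [hH1, hH2, hx, hy]
  have hH1fin : (∑' r : List Bool, H1 r) ≠ ⊤ := by
    apply tsum_ofReal_ne_top (fun r => by positivity)
    exact summable_aux hξ 4 (by norm_num)
  have hH2fin : (∑' r : List Bool, H2 r) ≠ ⊤ := by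
    have hsplit : ∀ r : List Bool, H2 r =
        (if r = [] then H2 [] else 0) + (if r = [] then 0 else H2 r) := by
      intro r; by_cases h : r = [] <;> simp [h]
    rw [tsum_congr hsplit, ENNReal.tsum_add]
    apply ENNReal.add_ne_top.2
    constructor
    · rw [tsum_eq_single ([] : List Bool) (fun b hb => if_neg hb)]
      simp only [if_pos rfl]
      exact ENNReal.ofReal_ne_top
    · have hbij : (∑' r : List Bool, if r = [] then 0 else H2 r)
          = ∑' q : Bool × List Bool, H2 (q.1 :: q.2) := by
        apply tsum_eq_tsum_of_ne_zero_bij (fun q => q.1.1 :: q.1.2)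
        · intro q₁ q₂ h
          have h1 : q₁.1.1 = q₂.1.1 ∧ q₁.1.2 = q₂.1.2 := by
            exact ⟨by injection h, by injection h⟩
          exact Subtype.ext (Prod.ext h1.1 h1.2)
        · intro r hr
          simp only [Function.mem_support] at hr
          have hrne : r ≠ [] := by
            intro h; rw [if_pos h] at hr; exact hr rfl
          obtain ⟨b, t, rfl⟩ : ∃ b t, r = b :: t := by
            cases r with
            | nil => exact absurd rfl hrne
            | cons b t => exact ⟨b, t, rfl⟩
          rw [if_neg hrne] at hr
          exact ⟨⟨(b, t), hr⟩, rfl⟩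
        · intro q
          rw [if_neg (by simp)]
      rw [hbij]
      rw [ENNReal.tsum_prod (f := fun b a => H2 (b :: a)), tsum_fintype]
      rw [Fintype.sum_bool]
      apply ENNReal.add_ne_top.2
      constructor <;>
      · apply tsum_ofReal_ne_top (fun a => by positivity)
        have hs := summable_aux hξ 2 (by norm_num)
        apply hs.congr
        intro a
        simp only [List.tail_cons, List.length_cons]
        rw [pow_succ]
        field_simp
        ring
  have key : (∑' β : Vtx, F β) ≠ ⊤ := by
    have step1 : (∑' β : Vtx, F β) ≤ ∑' q : List Bool × ℕ, g q :=
      le_trans (ENNReal.tsum_le_tsum hFg)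
        (ENNReal.tsum_comp_le_tsum_of_injective hψinj g)
    have step2 : (∑' q : List Bool × ℕ, g q) ≤ (∑' r, H1 r) + (∑' r, H2 r) := by
      rw [hprod]
      exact le_trans (ENNReal.tsum_le_tsum inner_bound) (le_of_eq ENNReal.tsum_add)
    exact ne_top_of_le_ne_top (ENNReal.add_ne_top.2 ⟨hH1fin, hH2fin⟩)
      (le_trans step1 step2)
  -- convert to real summability
  have hconv : ∀ β : Vtx, F β = ((‖Δ β‖₊ ^ 2 : NNReal) : ℝ≥0∞) := by
    intro β
    simp only [hF]
    rw [ENNReal.ofReal_pow (norm_nonneg _), ofReal_norm, enorm_eq_nnnorm, ENNReal.coe_pow]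
  rw [tsum_congr hconv] at key
  have hsumnn : Summable (fun β : Vtx => (‖Δ β‖₊ ^ 2 : NNReal)) :=
    ENNReal.tsum_coe_ne_top_iff_summable.1 key
  have hsum : Summable (fun β : Vtx => ((‖Δ β‖₊ ^ 2 : NNReal) : ℝ)) :=
    NNReal.summable_coe.2 hsumnn
  apply hsum.congr
  intro β
  push_cast
  simp [hΔ, coe_nnnorm]

lemma tdist_tau_sep {r s : List Bool} (hne : r ≠ s) :
    tdepth (tau r) ≤ 2 * tdist (tau r) (tau s) := by
  rcases IM.suffix_trichotomy r s with h | h | ⟨u, b, b', hb, hr, hs⟩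
  · have hlen : r.length < s.length := by
      rcases Nat.lt_or_ge r.length s.length with h1 | h1
      · exact h1
      · exact absurd (List.IsSuffix.eq_of_length h (le_antisymm h.length_le h1)) hne
    have hmeet : treeMeet (tau r) (tau s) = tau r :=
      IM.treeMeet_eq_left (tau_prefix_of_suffix h)
    rw [tdist, hmeet, tdepth, tau_length, tau_length]
    have hp : 2 ^ (r.length + 1 + 1) ≤ 2 ^ (s.length + 1) :=
      Nat.pow_le_pow_right (by norm_num) (by omega)
    have h2 := two_le_two_pow r.length
    have h3 := two_le_two_pow s.length
    have hpow : 2 ^ (r.length + 1 + 1) = 2 * 2 ^ (r.length + 1) := by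
      rw [pow_succ]; ring
    omega
  · have hlen : s.length < r.length := by
      rcases Nat.lt_or_ge s.length r.length with h1 | h1
      · exact h1
      · exact absurd (List.IsSuffix.eq_of_length h (le_antisymm h.length_le h1)).symm hne
    have hmeet : treeMeet (tau r) (tau s) = tau s := by
      rw [IM.treeMeet_comm]; exact IM.treeMeet_eq_left (tau_prefix_of_suffix h)
    rw [tdist, hmeet, tdepth, tau_length, tau_length]
    have hp : 2 ^ (s.length + 1 + 1) ≤ 2 ^ (r.length + 1) :=
      Nat.pow_le_pow_right (by norm_num) (by omega)
    have h2 := two_le_two_pow r.length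
    have h3 := two_le_two_pow s.length
    have hpow : 2 ^ (s.length + 1 + 1) = 2 * 2 ^ (s.length + 1) := by
      rw [pow_succ]; ring
    omega
  · have hmeet := tau_meet_diverge hb hr hs
    have hur : u.length < r.length := by
      have := hr.length_le; simp at this; omega
    have hus : u.length < s.length := by
      have := hs.length_le; simp at this; omega
    rw [tdist, hmeet, tdepth, tau_length, tau_length, tau_length]
    have hp1 : 2 ^ (u.length + 1 + 1) ≤ 2 ^ (r.length + 1) :=
      Nat.pow_le_pow_right (by norm_num) (by omega)
    have hp2 : 2 ^ (u.length + 1 + 1) ≤ 2 ^ (s.length + 1) :=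
      Nat.pow_le_pow_right (by norm_num) (by omega)
    have h2 := two_le_two_pow u.length
    have hpow : 2 ^ (u.length + 1 + 1) = 2 * 2 ^ (u.length + 1) := by
      rw [pow_succ]; ring
    omega

lemma sep_half : treeSep (Set.range tau) (1/2) := by
  rintro z ⟨r, rfl⟩ w ⟨s, rfl⟩ hne
  have hrs : r ≠ s := fun h => hne (by rw [h])
  have h := tdist_tau_sep hrs
  have h2 : ((tdepth (tau r) : ℕ) : ℝ) ≤ ((2 * tdist (tau r) (tau s) : ℕ) : ℝ) :=
    Nat.cast_le.2 h
  push_cast at h2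
  linarith

lemma exists_min_over {α : Vtx} (h : ∃ r, α <+: tau r) :
    ∃ r0, α <+: tau r0 ∧ ∀ s, α <+: tau s → r0 <:+ s := by
  classical
  obtain ⟨r, hr⟩ := h
  have hP : ∃ n, ∃ r : List Bool, r.length = n ∧ α <+: tau r := ⟨r.length, r, rfl, hr⟩
  obtain ⟨r0, hr0len, hr0⟩ := Nat.find_spec hP
  refine ⟨r0, hr0, fun s hs => ?_⟩
  rcases IM.suffix_trichotomy r0 s with h1 | h1 | ⟨u, b, b', hb, hbr, hbs⟩
  · exact h1
  · have hle : Nat.find hP ≤ s.length := Nat.find_min' hP ⟨s, rfl, hs⟩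
    have hss : s = r0 := List.IsSuffix.eq_of_length h1
      (le_antisymm h1.length_le (by omega))
    rw [hss]
  · exfalso
    have hmeet := tau_meet_diverge hb hbr hbs
    have hαu : α <+: tau u := by
      rw [← hmeet]; exact IM.prefix_treeMeet hr0 hs
    have hul : u.length < r0.length := by
      have := hbr.length_le; simp at this; omega
    exact Nat.find_min hP (by omega) ⟨u, rfl, hαu⟩

lemma weakSet_subset {α : Vtx} {r0 : List Bool} (h0 : α <+: tau r0)
    (hmin : ∀ s, α <+: tau s → r0 <:+ s) :
    weakSet (Set.range tau) α ⊆
      {tau r0, tau (false :: r0), tau (true :: r0)} := by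
  rintro β ⟨⟨s, rfl⟩, hpre, hnb⟩
  have hsuf : r0 <:+ s := hmin s hpre
  obtain ⟨w, hw⟩ := hsuf
  rcases eq_or_ne w [] with rfl | hwne
  · left; rw [← hw]; simp
  obtain ⟨w', b, rfl⟩ := w.eq_nil_or_concat.resolve_left hwne
  have hbsuf : (b :: r0) <:+ s := ⟨w', by rw [← hw]; simp⟩
  rcases eq_or_ne w' [] with rfl | hw'ne
  · have hs : s = b :: r0 := by rw [← hw]; simp
    rw [hs]
    cases b
    · right; left; rfl
    · right; right; rfl
  · exfalso
    apply hnb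
    refine ⟨tau (b :: r0), ⟨b :: r0, rfl⟩, ⟨?_, ?_⟩, ?_, ?_⟩
    · exact h0.trans (tau_prefix_of_suffix (List.suffix_cons _ _))
    · intro hαeq
      have h1 : α.length ≤ (tau r0).length := h0.length_le
      have h2 : (tau r0).length < (tau (b :: r0)).length :=
        tau_length_lt (by simp)
      rw [hαeq] at h1
      omega
    · exact tau_prefix_of_suffix hbsuf
    · intro heq
      have := tau_inj heq
      have h3 := congrArg List.length this
      have h4 := congrArg List.length hw
      have h5 : 0 < w'.length := List.length_pos_iff.2 hw'ne
      simp at h3 h4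
      omega

lemma tsum_indicator_singleton (f : Vtx → ℝ≥0∞) (t : Vtx) :
    (∑' x : Vtx, ({t} : Set Vtx).indicator f x) = f t := by
  rw [tsum_eq_single t (fun b hb => Set.indicator_of_notMem (by simp [hb]) f)]
  exact Set.indicator_of_mem rfl f

lemma inv_nat_eq_ofReal {n : ℕ} (hn : 0 < n) :
    ((n : ℝ≥0∞))⁻¹ = ENNReal.ofReal (((n : ℝ))⁻¹) := by
  rw [ENNReal.ofReal_inv_of_pos (by exact_mod_cast hn), ENNReal.ofReal_natCast]

lemma weak_simple_two : treeWeakSimple (Set.range tau) 2 := by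
  intro α
  set f : Vtx → ℝ≥0∞ := fun x => ((tdepth x : ℝ≥0∞))⁻¹ with hf
  by_cases hex : ∃ r, α <+: tau r
  · obtain ⟨r0, h0, hmin⟩ := exists_min_over hex
    have hsub := weakSet_subset h0 hmin
    have hstep1 : (∑' β : weakSet (Set.range tau) α, f β.1)
        = ∑' x : Vtx, (weakSet (Set.range tau) α).indicator f x :=
      tsum_subtype _ f
    have hpt : ∀ x : Vtx, (weakSet (Set.range tau) α).indicator f x ≤
        ({tau r0} : Set Vtx).indicator f x + ({tau (false :: r0)} : Set Vtx).indicator f x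
          + ({tau (true :: r0)} : Set Vtx).indicator f x := by
      intro x
      by_cases hx : x ∈ weakSet (Set.range tau) α
      · rw [Set.indicator_of_mem hx]
        rcases hsub hx with h | h | h
        · rw [Set.indicator_of_mem (show x ∈ ({tau r0} : Set Vtx) from h)]
          exact le_add_right (le_add_right le_rfl)
        · rw [Set.indicator_of_mem (show x ∈ ({tau (false :: r0)} : Set Vtx) from h)]
          exact le_add_right (le_add_self)
        · rw [Set.indicator_of_mem (show x ∈ ({tau (true :: r0)} : Set Vtx) from h)]
          exact le_add_self
      · rw [Set.indicator_of_notMem hx]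
        exact zero_le
    have hstep2 : (∑' β : weakSet (Set.range tau) α, f β.1)
        ≤ f (tau r0) + f (tau (false :: r0)) + f (tau (true :: r0)) := by
      rw [hstep1]
      refine le_trans (ENNReal.tsum_le_tsum hpt) ?_
      rw [ENNReal.tsum_add, ENNReal.tsum_add, tsum_indicator_singleton,
        tsum_indicator_singleton, tsum_indicator_singleton]
    refine le_trans hstep2 ?_
    -- numeric bound
    have hd0 : 0 < tdepth (tau r0) := by rw [tdepth]; omega
    have hd1 : 0 < tdepth (tau (false :: r0)) := by rw [tdepth]; omega
    have hd2 : 0 < tdepth (tau (true :: r0)) := by rw [tdepth]; omega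
    have hv : f (tau r0) + f (tau (false :: r0)) + f (tau (true :: r0))
        = ENNReal.ofReal (((tdepth (tau r0) : ℝ))⁻¹ + ((tdepth (tau (false :: r0)) : ℝ))⁻¹
            + ((tdepth (tau (true :: r0)) : ℝ))⁻¹) := by
      rw [hf]
      simp only
      rw [inv_nat_eq_ofReal hd0, inv_nat_eq_ofReal hd1, inv_nat_eq_ofReal hd2,
        ← ENNReal.ofReal_add (by positivity) (by positivity),
        ← ENNReal.ofReal_add (by positivity) (by positivity)]
    rw [hv]
    apply ENNReal.ofReal_le_ofReal
    -- real arithmetic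
    have hD0 : tdepth (tau r0) = 2 ^ (r0.length + 1) - 1 := tdepth_tau r0
    have hD1 : tdepth (tau (false :: r0)) = 2 ^ (r0.length + 2) - 1 := by
      rw [tdepth_tau, List.length_cons]
    have hD2 : tdepth (tau (true :: r0)) = 2 ^ (r0.length + 2) - 1 := by
      rw [tdepth_tau, List.length_cons]
    have h2p := two_le_two_pow r0.length
    have h2p' := two_le_two_pow (r0.length + 1)
    have hpow : (2:ℕ) ^ (r0.length + 2) = 2 * 2 ^ (r0.length + 1) := by
      rw [pow_succ]; ring
    set q : ℝ := ((tdepth (tau r0) : ℕ) : ℝ) with hq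
    set w : ℝ := ((tdepth (tau (false :: r0)) : ℕ) : ℝ) with hw
    have hq1 : (1:ℝ) ≤ q := by
      rw [hq]; exact_mod_cast hd0
    have hwq : w = 2 * q + 1 := by
      rw [hq, hw, hD0, hD1]
      have : (2:ℕ) ^ (r0.length + 2) - 1 = 2 * (2 ^ (r0.length + 1) - 1) + 1 := by omega
      rw [this]
      push_cast
      ring
    have hdα : (tdepth α : ℝ) ≤ q := by
      rw [hq]
      have : tdepth α ≤ tdepth (tau r0) := by
        rw [tdepth, tdepth]
        have := h0.length_le
        omega
      exact_mod_cast this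
    have hdαpos : (0:ℝ) < (tdepth α : ℝ) := by
      have : 0 < tdepth α := by rw [tdepth]; omega
      exact_mod_cast this
    have hwD2 : ((tdepth (tau (true :: r0)) : ℕ) : ℝ) = w := by
      rw [hw, hD1, hD2]
    rw [hwD2]
    have hwpos : (0:ℝ) < w := by rw [hwq]; linarith
    have hqpos : (0:ℝ) < q := by linarith
    have hinv : w⁻¹ ≤ (2 * q)⁻¹ := by
      apply inv_anti₀ (by linarith) (by linarith)
    have hhalf : (2 * q)⁻¹ + (2 * q)⁻¹ = q⁻¹ := by
      rw [mul_inv]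
      rw [← add_mul]
      norm_num
    have hsum : q⁻¹ + w⁻¹ + w⁻¹ ≤ 2 * q⁻¹ := by linarith
    have hfin : 2 * q⁻¹ ≤ 2 / (tdepth α : ℝ) := by
      rw [← div_eq_mul_inv]
      exact div_le_div_of_nonneg_left (by norm_num) hdαpos hdα
    linarith
  · have hempty : ∀ x : Vtx, x ∉ weakSet (Set.range tau) α := by
      rintro x ⟨⟨s, rfl⟩, hpre, -⟩
      exact hex ⟨s, hpre⟩
    have : (∑' β : weakSet (Set.range tau) α, f β.1) = 0 := by
      rw [tsum_subtype]
      rw [tsum_congr (fun x => Set.indicator_of_notMem (hempty x) f)]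
      exact tsum_zero
    rw [this]
    exact zero_le


theorem onto_interpolating_with_infinite_mass :
    ∃ Z : Set Vtx, Z.Infinite ∧
      (∃ c : ℝ, 0 < c ∧ treeSep Z c) ∧
      (∃ C : ℝ, 0 < C ∧ treeWeakSimple Z C) ∧
      ontoInterpTree Z ∧
      (∑' z : Z, ((tdepth z.1 : ℝ≥0∞))⁻¹) = ⊤ := by
  refine ⟨Set.range tau, ?_, ⟨1/2, by norm_num, sep_half⟩,
    ⟨2, by norm_num, weak_simple_two⟩, ?_, ?_⟩
  · exact Set.infinite_range_of_injective tau_inj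
  · -- onto interpolating
    intro ξ hsum
    have hsum' : Summable (fun r : List Bool => ‖ξ (tau r)‖ ^ 2 / (tdepth (tau r) : ℝ)) := by
      have he := (Equiv.ofInjective tau tau_inj).summable_iff
        (f := fun z : Set.range tau => ‖ξ z.1‖ ^ 2 / (tdepth z.1 : ℝ))
      exact he.2 hsum
    refine ⟨interp ξ, memB2T_interp ξ hsum', ?_⟩
    rintro z ⟨r, rfl⟩
    exact interp_tau ξ r
  · -- infinite mass
    have hineq : (∑' r : List Bool, ((tdepth (tau r) : ℝ≥0∞))⁻¹)
        ≤ ∑' z : Set.range tau, ((tdepth z.1 : ℝ≥0∞))⁻¹ := by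
      have hinj : Function.Injective
          (fun r : List Bool => (⟨tau r, Set.mem_range_self r⟩ : Set.range tau)) := by
        intro r s h
        exact tau_inj (congrArg Subtype.val h)
      exact ENNReal.tsum_comp_le_tsum_of_injective hinj
        (fun z => ((tdepth z.1 : ℝ≥0∞))⁻¹)
    have htop : (∑' r : List Bool, ((tdepth (tau r) : ℝ≥0∞))⁻¹) = ⊤ := by
      by_contra hne
      obtain ⟨n, hn⟩ := ENNReal.exists_nat_gt hne
      -- finite sums give at least N * 2⁻¹
      have hlb : ∀ N : ℕ, ((N : ℝ≥0∞)) * 2⁻¹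
          ≤ ∑' r : List Bool, ((tdepth (tau r) : ℝ≥0∞))⁻¹ := by
        intro N
        set Fm : ℕ → Finset (List Bool) := fun m =>
          (Finset.univ : Finset (Fin m → Bool)).image (fun v => List.ofFn v) with hFm
        have hlen : ∀ m, ∀ r ∈ Fm m, r.length = m := by
          intro m r hr
          simp only [hFm, Finset.mem_image] at hr
          obtain ⟨v, -, rfl⟩ := hr
          simp
        have hcard : ∀ m, (Fm m).card = 2 ^ m := by
          intro m
          rw [hFm]
          simp only
          rw [Finset.card_image_of_injective _ List.ofFn_injective]
          simp [Fintype.card_fun]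
        have hdisj : ∀ m1 ∈ Finset.range N, ∀ m2 ∈ Finset.range N, m1 ≠ m2 →
            Disjoint (Fm m1) (Fm m2) := by
          intro m1 _ m2 _ hne12
          refine Finset.disjoint_left.2 fun r h1 h2 => ?_
          exact hne12 ((hlen m1 r h1).symm.trans (hlen m2 r h2))
        have hsumF : ∀ m, ((2:ℝ≥0∞))⁻¹
            ≤ ∑ r ∈ Fm m, ((tdepth (tau r) : ℝ≥0∞))⁻¹ := by
          intro m
          have hterm : ∀ r ∈ Fm m,
              ((2:ℝ≥0∞))⁻¹ / (2 ^ m : ℝ≥0∞) ≤ ((tdepth (tau r) : ℝ≥0∞))⁻¹ := by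
            intro r hr
            have h1 : tdepth (tau r) = 2 ^ (m + 1) - 1 := by
              rw [tdepth_tau, hlen m r hr]
            rw [h1]
            have h2 : ((2 ^ (m + 1) - 1 : ℕ) : ℝ≥0∞) ≤ ((2 ^ (m + 1) : ℕ) : ℝ≥0∞) := by
              exact Nat.cast_le.2 (Nat.sub_le _ _)
            refine le_trans ?_ (ENNReal.inv_le_inv.2 h2)
            rw [ENNReal.div_eq_inv_mul]
            push_cast
            rw [pow_succ, ENNReal.mul_inv (by simp) (by simp)]
          calc ((2:ℝ≥0∞))⁻¹ = (Fm m).card • (((2:ℝ≥0∞))⁻¹ / (2 ^ m : ℝ≥0∞)) := by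
                rw [hcard, nsmul_eq_mul, ENNReal.div_eq_inv_mul]
                push_cast
                rw [← mul_assoc, ENNReal.mul_inv_cancel (by positivity) (by simp)]
                rw [one_mul]
            _ = ∑ _r ∈ Fm m, (((2:ℝ≥0∞))⁻¹ / (2 ^ m : ℝ≥0∞)) := by
                rw [Finset.sum_const]
            _ ≤ ∑ r ∈ Fm m, ((tdepth (tau r) : ℝ≥0∞))⁻¹ :=
                Finset.sum_le_sum hterm
        calc ((N : ℝ≥0∞)) * 2⁻¹ = ∑ _m ∈ Finset.range N, ((2:ℝ≥0∞))⁻¹ := by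
              rw [Finset.sum_const, Finset.card_range, nsmul_eq_mul]
          _ ≤ ∑ m ∈ Finset.range N, ∑ r ∈ Fm m, ((tdepth (tau r) : ℝ≥0∞))⁻¹ :=
              Finset.sum_le_sum (fun m _ => hsumF m)
          _ = ∑ r ∈ (Finset.range N).biUnion Fm, ((tdepth (tau r) : ℝ≥0∞))⁻¹ :=
              (Finset.sum_biUnion hdisj).symm
          _ ≤ ∑' r : List Bool, ((tdepth (tau r) : ℝ≥0∞))⁻¹ :=
              ENNReal.sum_le_tsum _
      have hcon := hlb (2 * n + 2)
      have hval : (((2 * n + 2 : ℕ) : ℝ≥0∞)) * 2⁻¹ = (n : ℝ≥0∞) + 1 := by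
        push_cast
        rw [show ((2:ℝ≥0∞) * n + 2) = 2 * ((n : ℝ≥0∞) + 1) by ring]
        rw [mul_comm (2:ℝ≥0∞) ((n : ℝ≥0∞) + 1), mul_assoc,
          ENNReal.mul_inv_cancel (by norm_num) (by norm_num), mul_one]
      rw [hval] at hcon
      have hlt : (∑' r : List Bool, ((tdepth (tau r) : ℝ≥0∞))⁻¹) < (n : ℝ≥0∞) + 1 :=
        lt_of_lt_of_le hn (by exact_mod_cast le_self_add)
      exact absurd hcon (not_le.2 hlt)
    rw [htop, top_le_iff] at hineq
    exact hineq


end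
end
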